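/- arXiv:2508.05533 — 4 statements merged into one kernel-verified Lean document; each statement's English description precedes it below -/
import Mathlib

section
/- Let $d\ge 1$, $\beta_1>d$, $\beta_2>d$, and $0\le\sigma<d$. Then there exists a constant $C>0$ such that for all $\tau\in\mathbb{R}^d$, $\int_{\mathbb{R}^d}\int_{\mathbb{R}^d}|x-y|^{-\sigma}\langle x-\tau\rangle^{-\beta_1}\langle y\rangle^{-\beta_2}\,dx\,dy\le C\langle\tau\rangle^{-\sigma}$. -/
open MeasureTheory Set Metric Real ENNReal

/-- `(a/b)^(-c) = b^c * a^(-c)` for positive `a, b`. -/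
lemma aux_div_rpow_neg {a b c : ℝ} (ha : 0 < a) (hb : 0 < b) :
    (a / b) ^ (-c) = b ^ c * a ^ (-c) := by
  rw [Real.div_rpow ha.le hb.le, Real.rpow_neg ha.le, Real.rpow_neg hb.le]
  field_simp

/-- `(r^2)^e = r^(2*e)` for `r ≥ 0`. -/
lemma aux_sq_rpow {r e : ℝ} (hr : 0 ≤ r) : (r ^ 2) ^ e = r ^ (2 * e) := by
  rw [Real.rpow_mul hr, Real.rpow_two]

/-- Finiteness of the integral of `‖z‖^{-σ}` over the unit ball, `0 ≤ σ < d`. -/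
lemma aux_shell (d : ℕ) (hd : 1 ≤ d) {σ : ℝ} (hσ0 : 0 ≤ σ) (hσd : σ < d) :
    ∫⁻ z in ball (0 : EuclideanSpace ℝ (Fin d)) 1, ENNReal.ofReal (‖z‖ ^ (-σ)) < ∞ := by
  haveI : Nonempty (Fin d) := ⟨⟨0, hd⟩⟩
  set E := EuclideanSpace ℝ (Fin d)
  set f : E → ℝ≥0∞ := fun z => ENNReal.ofReal (‖z‖ ^ (-σ)) with hf
  set S : ℕ → Set E := fun n => ball 0 ((2:ℝ)⁻¹ ^ n) \ ball 0 ((2:ℝ)⁻¹ ^ (n + 1)) with hS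
  have hcover : ball (0 : E) 1 ⊆ {0} ∪ ⋃ n, S n := by
    intro z hz
    rcases eq_or_ne z 0 with rfl | hz0
    · exact Or.inl rfl
    right
    have hz1 : ‖z‖ < 1 := by simpa [mem_ball, dist_eq_norm] using hz
    have hzpos : (0:ℝ) < ‖z‖ := norm_pos_iff.mpr hz0
    have hex : ∃ n : ℕ, (2:ℝ)⁻¹ ^ n ≤ ‖z‖ := by
      obtain ⟨n, hn⟩ := exists_pow_lt_of_lt_one hzpos (by norm_num : (2:ℝ)⁻¹ < 1)
      exact ⟨n, hn.le⟩
    classical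
    set n₀ := Nat.find hex with hn₀
    have hn₀0 : n₀ ≠ 0 := by
      intro h
      have := Nat.find_spec hex
      rw [← hn₀, h] at this
      simp at this
      linarith
    obtain ⟨n, hn⟩ : ∃ n, n₀ = n + 1 := ⟨n₀ - 1, (Nat.succ_pred_eq_of_pos (Nat.pos_of_ne_zero hn₀0)).symm⟩
    have h1 : (2:ℝ)⁻¹ ^ (n + 1) ≤ ‖z‖ := by rw [← hn]; exact Nat.find_spec hex
    have h2 : ‖z‖ < (2:ℝ)⁻¹ ^ n := by
      have := Nat.find_min hex (m := n) (by omega)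
      linarith [not_le.mp this]
    refine mem_iUnion.mpr ⟨n, ?_, ?_⟩
    · simpa [mem_ball, dist_eq_norm] using h2
    · simp only [mem_ball, dist_eq_norm, sub_zero, not_lt]
      simpa using h1
  calc ∫⁻ z in ball (0 : E) 1, f z ≤ ∫⁻ z in ({0} ∪ ⋃ n, S n : Set E), f z :=
        lintegral_mono_set hcover
    _ ≤ (∫⁻ z in ({0} : Set E), f z) + ∫⁻ z in (⋃ n, S n), f z := lintegral_union_le _ _ _
    _ ≤ 0 + ∑' n, ∫⁻ z in S n, f z := by
        gcongr
        · exact le_of_eq (setLIntegral_measure_zero _ _ (measure_singleton 0))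
        · exact lintegral_iUnion_le _ _
    _ = ∑' n, ∫⁻ z in S n, f z := by rw [zero_add]
    _ ≤ ∑' n : ℕ, (ENNReal.ofReal (2 ^ σ) * volume (ball (0:E) 1)) *
          (ENNReal.ofReal (2 ^ (σ - (d:ℝ)))) ^ n := by
        gcongr with n
        have hSm : MeasurableSet (S n) := measurableSet_ball.diff measurableSet_ball
        have hb : ∀ z ∈ S n, f z ≤ ENNReal.ofReal ((((2:ℝ)⁻¹) ^ (n+1)) ^ (-σ)) := by
          intro z hz
          obtain ⟨hz1, hz2⟩ := hz
          have hz2' : ((2:ℝ)⁻¹) ^ (n+1) ≤ ‖z‖ := by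
            simpa [mem_ball, dist_eq_norm, not_lt] using hz2
          exact ENNReal.ofReal_le_ofReal
            (Real.rpow_le_rpow_of_nonpos (by positivity) hz2' (by linarith))
        calc ∫⁻ z in S n, f z ≤ ∫⁻ _ in S n, ENNReal.ofReal ((((2:ℝ)⁻¹) ^ (n+1)) ^ (-σ)) :=
              setLIntegral_mono' hSm hb
          _ = ENNReal.ofReal ((((2:ℝ)⁻¹) ^ (n+1)) ^ (-σ)) * volume (S n) := by
              rw [setLIntegral_const]
          _ ≤ ENNReal.ofReal ((((2:ℝ)⁻¹) ^ (n+1)) ^ (-σ)) * volume (ball (0:E) ((2:ℝ)⁻¹ ^ n)) := by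
              exact mul_le_mul_right (measure_mono diff_subset) _
          _ = ENNReal.ofReal ((((2:ℝ)⁻¹) ^ (n+1)) ^ (-σ)) *
                (ENNReal.ofReal (((2:ℝ)⁻¹ ^ n) ^ (Module.finrank ℝ E)) * volume (ball (0:E) 1)) := by
              rw [Measure.addHaar_ball _ _ (by positivity)]
          _ = (ENNReal.ofReal (2 ^ σ) * volume (ball (0:E) 1)) *
                (ENNReal.ofReal (2 ^ (σ - (d:ℝ)))) ^ n := by
              rw [finrank_euclideanSpace_fin]
              have hkey : ((((2:ℝ)⁻¹) ^ (n+1)) ^ (-σ)) * (((2:ℝ)⁻¹ ^ n) ^ d)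
                  = 2 ^ σ * ((2:ℝ) ^ (σ - (d:ℝ))) ^ n := by
                have h2 : ((2:ℝ)⁻¹) = 2 ^ (-1 : ℝ) := by rw [Real.rpow_neg_one]
                rw [h2, ← Real.rpow_natCast ((2:ℝ) ^ (-1:ℝ)) (n+1),
                  ← Real.rpow_natCast ((2:ℝ) ^ (-1:ℝ)) n,
                  ← Real.rpow_mul (by norm_num), ← Real.rpow_mul (by norm_num),
                  ← Real.rpow_mul (by norm_num),
                  ← Real.rpow_natCast ((2:ℝ) ^ ((-1:ℝ) * (n:ℝ))) d,
                  ← Real.rpow_mul (by norm_num),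
                  ← Real.rpow_natCast ((2:ℝ) ^ (σ - (d:ℝ))) n,
                  ← Real.rpow_mul (by norm_num),
                  ← Real.rpow_add (by norm_num : (0:ℝ) < 2),
                  ← Real.rpow_add (by norm_num : (0:ℝ) < 2)]
                congr 1
                push_cast
                ring
              rw [← mul_assoc, ← ENNReal.ofReal_mul (by positivity), hkey,
                ENNReal.ofReal_mul (by positivity), ENNReal.ofReal_pow (by positivity)]
              ring
    _ < ∞ := by
        rw [ENNReal.tsum_mul_left, ENNReal.tsum_geometric]
        refine ENNReal.mul_lt_top (ENNReal.mul_lt_top ENNReal.ofReal_lt_top measure_ball_lt_top) ?_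
        have : ENNReal.ofReal (2 ^ (σ - (d:ℝ))) < 1 := by
          rw [← ENNReal.ofReal_one]
          exact ENNReal.ofReal_lt_ofReal_iff_of_nonneg (by positivity) |>.mpr
            (Real.rpow_lt_one_of_one_lt_of_neg (by norm_num) (by linarith))
        exact ENNReal.inv_lt_top.2 (tsub_pos_of_lt this)

/-- Finiteness of the integral of the Japanese bracket weight, `β > d`. -/
lemma aux_w_finite (d : ℕ) {β : ℝ} (hβ : (d:ℝ) < β) :
    ∫⁻ y : EuclideanSpace ℝ (Fin d), ENNReal.ofReal ((1 + ‖y‖ ^ 2) ^ (-β / 2)) < ∞ := by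
  have hfr : (Module.finrank ℝ (EuclideanSpace ℝ (Fin d)) : ℝ) < β := by
    rw [finrank_euclideanSpace_fin]; exact hβ
  have hint := integrable_rpow_neg_one_add_norm_sq (E := EuclideanSpace ℝ (Fin d))
    (μ := volume) hfr
  have := hint.2
  rw [HasFiniteIntegral] at this
  refine lt_of_le_of_lt (le_of_eq (lintegral_congr fun y => ?_)) this
  rw [← ofReal_norm_eq_enorm, Real.norm_of_nonneg (by positivity)]

/-- The integrable majorant kernel. -/
noncomputable def auxPhi (σ d' : ℝ) {X : Type*} [NormedAddCommGroup X] (z : X) : ℝ :=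
  if ‖z‖ < 1 then ‖z‖ ^ (-σ) + 1 else ‖z‖ ^ (-d')

lemma auxPhi_nonneg (σ d' : ℝ) {X : Type*} [NormedAddCommGroup X] (z : X) :
    0 ≤ auxPhi σ d' z := by
  unfold auxPhi; split <;> positivity

lemma auxPhi_meas (σ d' : ℝ) (d : ℕ) :
    Measurable fun z : EuclideanSpace ℝ (Fin d) => ENNReal.ofReal (auxPhi σ d' z) := by
  apply Measurable.ennreal_ofReal
  unfold auxPhi
  exact Measurable.ite (measurableSet_lt (by fun_prop) measurable_const)
    (by fun_prop) (by fun_prop)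

lemma auxPhi_finite (d : ℕ) (hd : 1 ≤ d) {σ d' : ℝ} (hσ0 : 0 ≤ σ) (hσd : σ < d)
    (hd' : (d:ℝ) < d') :
    ∫⁻ z : EuclideanSpace ℝ (Fin d), ENNReal.ofReal (auxPhi σ d' z) < ∞ := by
  set E := EuclideanSpace ℝ (Fin d)
  have hmb : MeasurableSet (ball (0:E) 1) := measurableSet_ball
  rw [← lintegral_add_compl (fun z => ENNReal.ofReal (auxPhi σ d' z)) hmb]
  have h1 : ∫⁻ z in ball (0:E) 1, ENNReal.ofReal (auxPhi σ d' z) < ∞ := by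
    have heq : ∀ z ∈ ball (0:E) 1, ENNReal.ofReal (auxPhi σ d' z)
        = ENNReal.ofReal (‖z‖ ^ (-σ)) + 1 := by
      intro z hz
      rw [auxPhi, if_pos (by simpa [mem_ball, dist_eq_norm] using hz),
        ENNReal.ofReal_add (by positivity) (by norm_num), ENNReal.ofReal_one]
    rw [setLIntegral_congr_fun hmb heq, lintegral_add_right _ measurable_const]
    refine ENNReal.add_lt_top.mpr ⟨aux_shell d hd hσ0 hσd, ?_⟩
    rw [setLIntegral_const, one_mul]
    exact measure_ball_lt_top
  have h2 : ∫⁻ z in (ball (0:E) 1)ᶜ, ENNReal.ofReal (auxPhi σ d' z) < ∞ := by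
    have hb : ∀ z ∈ (ball (0:E) 1)ᶜ, ENNReal.ofReal (auxPhi σ d' z)
        ≤ ENNReal.ofReal ((2:ℝ) ^ (d'/2) * (1 + ‖z‖ ^ 2) ^ (-d' / 2)) := by
      intro z hz
      have hz1 : (1:ℝ) ≤ ‖z‖ := by
        simpa [mem_ball, dist_eq_norm, not_lt] using hz
      rw [auxPhi, if_neg (by simpa [mem_ball, dist_eq_norm, not_lt] using not_lt.mpr hz1)]
      apply ENNReal.ofReal_le_ofReal
      have hd'0 : 0 ≤ d' := le_trans (by positivity) hd'.le
      have hle : 1 + ‖z‖ ^ 2 ≤ 2 * ‖z‖ ^ 2 := by nlinarith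
      have hnd : (-d' / 2 : ℝ) = -(d'/2) := by ring
      rw [hnd]
      calc ‖z‖ ^ (-d') = (‖z‖ ^ 2) ^ (-(d'/2)) := by
            rw [aux_sq_rpow (norm_nonneg z)]; ring_nf
        _ = (2 * ‖z‖ ^ 2 / 2) ^ (-(d'/2)) := by norm_num
        _ = 2 ^ (d'/2) * (2 * ‖z‖ ^ 2) ^ (-(d'/2)) := by
            rw [aux_div_rpow_neg (by nlinarith) (by norm_num)]
        _ ≤ 2 ^ (d'/2) * (1 + ‖z‖ ^ 2) ^ (-(d'/2)) :=
            mul_le_mul_of_nonneg_left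
              (Real.rpow_le_rpow_of_nonpos (by positivity) hle (by linarith)) (by positivity)
    calc ∫⁻ z in (ball (0:E) 1)ᶜ, ENNReal.ofReal (auxPhi σ d' z)
        ≤ ∫⁻ z in (ball (0:E) 1)ᶜ,
            ENNReal.ofReal ((2:ℝ) ^ (d'/2) * (1 + ‖z‖ ^ 2) ^ (-d' / 2)) :=
          setLIntegral_mono' hmb.compl hb
      _ ≤ ∫⁻ z : E, ENNReal.ofReal ((2:ℝ) ^ (d'/2) * (1 + ‖z‖ ^ 2) ^ (-d' / 2)) :=
          setLIntegral_le_lintegral _ _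
      _ = ∫⁻ z : E, ENNReal.ofReal ((2:ℝ) ^ (d'/2)) * ENNReal.ofReal ((1 + ‖z‖ ^ 2) ^ (-d' / 2)) := by
          congr 1; ext z; rw [ENNReal.ofReal_mul (by positivity)]
      _ = ENNReal.ofReal ((2:ℝ) ^ (d'/2)) * ∫⁻ z : E, ENNReal.ofReal ((1 + ‖z‖ ^ 2) ^ (-d' / 2)) :=
          lintegral_const_mul' _ _ ENNReal.ofReal_ne_top
      _ < ∞ := ENNReal.mul_lt_top ENNReal.ofReal_lt_top (aux_w_finite d hd')
  exact ENNReal.add_lt_top.mpr ⟨h1, h2⟩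

/-- Pointwise majorization used in the convolution estimate. -/
lemma aux_pointwise (d : ℕ) {σ β d' : ℝ} (hσ0 : 0 ≤ σ) (hσd' : σ < d') (hd'β : d' ≤ β)
    (x y : EuclideanSpace ℝ (Fin d)) :
    ‖x - y‖ ^ (-σ) * (1 + ‖y‖ ^ 2) ^ (-β / 2)
      ≤ (1 + ‖x‖ ^ 2) ^ (-σ / 2) *
        (5 ^ (β / 2) * auxPhi σ d' (x - y) + 8 ^ (σ / 2) * (1 + ‖y‖ ^ 2) ^ (-β / 2)) := by
  have hβ0 : 0 < β := lt_of_le_of_lt (by positivity : (0:ℝ) ≤ σ) (lt_of_lt_of_le hσd' hd'β)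
  set a : ℝ := 1 + ‖x‖ ^ 2 with ha
  set b : ℝ := 1 + ‖y‖ ^ 2 with hb
  set R : ℝ := max 1 (‖x‖ / 2) with hR
  have ha0 : 0 < a := by positivity
  have ha1 : 1 ≤ a := by nlinarith [sq_nonneg ‖x‖]
  have hb0 : 0 < b := by positivity
  have hR1 : 1 ≤ R := le_max_left _ _
  have hR0 : 0 < R := lt_of_lt_of_le one_pos hR1
  have hRx : ‖x‖ / 2 ≤ R := le_max_right _ _
  have hRa : R ^ 2 ≤ a := by
    rcases max_cases 1 (‖x‖ / 2) with ⟨h1, _⟩ | ⟨h1, _⟩ <;> rw [hR, h1] <;> nlinarith [sq_nonneg ‖x‖]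
  have haR : a ≤ 8 * R ^ 2 := by
    have h1 : 1 ≤ R ^ 2 := by nlinarith
    have h2 : ‖x‖ ^ 2 ≤ 4 * R ^ 2 := by nlinarith [norm_nonneg x]
    nlinarith
  have hφ : 0 ≤ auxPhi σ d' (x - y) := auxPhi_nonneg _ _ _
  have e1 : (-β / 2 : ℝ) = -(β / 2) := by ring
  have e2 : (-σ / 2 : ℝ) = -(σ / 2) := by ring
  rw [e1, e2]
  have hsqrtR : ∀ e : ℝ, 0 ≤ e → R ^ e ≤ a ^ (e / 2) := by
    intro e he
    have h1 : R ≤ a ^ ((1:ℝ)/2) := by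
      have := Real.rpow_le_rpow (by positivity) hRa (by norm_num : (0:ℝ) ≤ 1/2)
      rwa [aux_sq_rpow hR0.le, (by norm_num : (2:ℝ) * (1/2) = 1), Real.rpow_one] at this
    calc R ^ e ≤ (a ^ ((1:ℝ)/2)) ^ e := Real.rpow_le_rpow hR0.le h1 he
      _ = a ^ (e / 2) := by rw [← Real.rpow_mul ha0.le]; ring_nf
  rcases le_or_gt ‖x - y‖ R with hz | hz
  · -- near regime
    have key1 : a ≤ 5 * b := by
      rcases le_or_gt ‖x‖ 2 with h | h
      · rw [ha, hb]; nlinarith [sq_nonneg ‖y‖, norm_nonneg x]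
      · have hR' : R = ‖x‖ / 2 := max_eq_right (by linarith)
        have htri : ‖x‖ ≤ ‖y‖ + ‖x - y‖ := by
          have hxy : y + (x - y) = x := by abel
          calc ‖x‖ = ‖y + (x - y)‖ := by rw [hxy]
            _ ≤ ‖y‖ + ‖x - y‖ := norm_add_le _ _
        have hy2 : ‖x‖ / 2 ≤ ‖y‖ := by rw [hR'] at hz; linarith
        rw [ha, hb]; nlinarith [norm_nonneg x]
    have hwy : b ^ (-(β / 2)) ≤ 5 ^ (β / 2) * a ^ (-(β / 2)) := by
      have h1 : a / 5 ≤ b := by linarith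
      have h2 : b ^ (-(β / 2)) ≤ (a / 5) ^ (-(β / 2)) :=
        Real.rpow_le_rpow_of_nonpos (by linarith) h1 (by linarith)
      rwa [aux_div_rpow_neg ha0 (by norm_num)] at h2
    have hker : ‖x - y‖ ^ (-σ) ≤ R ^ (d' - σ) * auxPhi σ d' (x - y) := by
      have hRp : 1 ≤ R ^ (d' - σ) := by
        have h := Real.rpow_le_rpow_of_exponent_le hR1 (by linarith : (0:ℝ) ≤ d' - σ)
        rwa [Real.rpow_zero] at h
      by_cases h1 : ‖x - y‖ < 1
      · rw [auxPhi, if_pos h1]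
        calc ‖x - y‖ ^ (-σ) ≤ ‖x - y‖ ^ (-σ) + 1 := by linarith
          _ = 1 * (‖x - y‖ ^ (-σ) + 1) := (one_mul _).symm
          _ ≤ R ^ (d' - σ) * (‖x - y‖ ^ (-σ) + 1) :=
              mul_le_mul_of_nonneg_right hRp (by positivity)
      · rw [auxPhi, if_neg h1]
        push_neg at h1
        have hzpos : (0:ℝ) < ‖x - y‖ := lt_of_lt_of_le one_pos h1
        have hsplit : ‖x - y‖ ^ (-σ) = ‖x - y‖ ^ (d' - σ) * ‖x - y‖ ^ (-d') := by
          rw [← Real.rpow_add hzpos]; ring_nf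
        rw [hsplit]
        exact mul_le_mul_of_nonneg_right
          (Real.rpow_le_rpow (norm_nonneg _) hz (by linarith)) (by positivity)
    have hRbd : R ^ (d' - σ) * a ^ (-(β / 2)) ≤ a ^ (-(σ / 2)) := by
      calc R ^ (d' - σ) * a ^ (-(β / 2)) ≤ a ^ ((d' - σ) / 2) * a ^ (-(β / 2)) :=
            mul_le_mul_of_nonneg_right (hsqrtR _ (by linarith)) (by positivity)
        _ = a ^ ((d' - σ) / 2 + -(β / 2)) := (Real.rpow_add ha0 _ _).symm
        _ ≤ a ^ (-(σ / 2)) := Real.rpow_le_rpow_of_exponent_le ha1 (by linarith)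
    calc ‖x - y‖ ^ (-σ) * b ^ (-(β / 2))
        ≤ (R ^ (d' - σ) * auxPhi σ d' (x - y)) * (5 ^ (β / 2) * a ^ (-(β / 2))) := by
          apply mul_le_mul hker hwy (by positivity)
          exact mul_nonneg (by positivity) hφ
      _ = (5 ^ (β / 2) * auxPhi σ d' (x - y)) * (R ^ (d' - σ) * a ^ (-(β / 2))) := by ring
      _ ≤ (5 ^ (β / 2) * auxPhi σ d' (x - y)) * a ^ (-(σ / 2)) :=
          mul_le_mul_of_nonneg_left hRbd (mul_nonneg (by positivity) hφ)
      _ = a ^ (-(σ / 2)) * (5 ^ (β / 2) * auxPhi σ d' (x - y)) := by ring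
      _ ≤ a ^ (-(σ / 2)) * (5 ^ (β / 2) * auxPhi σ d' (x - y) + 8 ^ (σ / 2) * b ^ (-(β / 2))) := by
          apply mul_le_mul_of_nonneg_left _ (by positivity)
          have : 0 ≤ 8 ^ (σ / 2) * b ^ (-(β / 2)) := by positivity
          linarith
  · -- far regime
    have h1 : ‖x - y‖ ^ (-σ) ≤ R ^ (-σ) :=
      Real.rpow_le_rpow_of_nonpos hR0 hz.le (by linarith)
    have h2 : R ^ (-σ) ≤ 8 ^ (σ / 2) * a ^ (-(σ / 2)) := by
      have hle : (a / 8) ^ ((1:ℝ)/2) ≤ R := by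
        have h3 : a / 8 ≤ R ^ 2 := by linarith
        have := Real.rpow_le_rpow (by positivity) h3 (by norm_num : (0:ℝ) ≤ 1/2)
        rwa [aux_sq_rpow hR0.le, (by norm_num : (2:ℝ) * (1/2) = 1), Real.rpow_one] at this
      calc R ^ (-σ) ≤ ((a / 8) ^ ((1:ℝ)/2)) ^ (-σ) :=
            Real.rpow_le_rpow_of_nonpos (by positivity) hle (by linarith)
        _ = (a / 8) ^ (-(σ / 2)) := by rw [← Real.rpow_mul (by positivity)]; ring_nf
        _ = 8 ^ (σ / 2) * a ^ (-(σ / 2)) := aux_div_rpow_neg ha0 (by norm_num)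
    calc ‖x - y‖ ^ (-σ) * b ^ (-(β / 2))
        ≤ (8 ^ (σ / 2) * a ^ (-(σ / 2))) * b ^ (-(β / 2)) :=
          mul_le_mul_of_nonneg_right (h1.trans h2) (by positivity)
      _ = a ^ (-(σ / 2)) * (8 ^ (σ / 2) * b ^ (-(β / 2))) := by ring
      _ ≤ a ^ (-(σ / 2)) * (5 ^ (β / 2) * auxPhi σ d' (x - y) + 8 ^ (σ / 2) * b ^ (-(β / 2))) := by
          apply mul_le_mul_of_nonneg_left _ (by positivity)
          have : 0 ≤ 5 ^ (β / 2) * auxPhi σ d' (x - y) := mul_nonneg (by positivity) hφ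
          linarith

/-- Key convolution estimate: `∫ ‖x-y‖^{-σ} ⟨y⟩^{-β} dy ≲ ⟨x⟩^{-σ}`. -/
lemma aux_A (d : ℕ) (hd : 1 ≤ d) {σ β : ℝ} (hσ0 : 0 ≤ σ) (hσd : σ < d) (hβ : (d:ℝ) < β) :
    ∃ K : ℝ≥0∞, K ≠ ⊤ ∧ ∀ x : EuclideanSpace ℝ (Fin d),
      ∫⁻ y, ENNReal.ofReal (‖x - y‖ ^ (-σ) * (1 + ‖y‖ ^ 2) ^ (-β / 2))
        ≤ K * ENNReal.ofReal ((1 + ‖x‖ ^ 2) ^ (-σ / 2)) := by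
  set E := EuclideanSpace ℝ (Fin d)
  set d' : ℝ := min β ((d:ℝ) + 1) with hd'def
  have hd'1 : (d:ℝ) < d' := lt_min hβ (by linarith)
  have hd'2 : d' ≤ β := min_le_left _ _
  have hσd' : σ < d' := lt_trans hσd hd'1
  set Iφ := ∫⁻ z : E, ENNReal.ofReal (auxPhi σ d' z) with hIφ
  set Iw := ∫⁻ y : E, ENNReal.ofReal ((1 + ‖y‖ ^ 2) ^ (-β / 2)) with hIw
  have hIφfin : Iφ ≠ ⊤ := (auxPhi_finite d hd hσ0 hσd hd'1).ne
  have hIwfin : Iw ≠ ⊤ := (aux_w_finite d hβ).ne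
  refine ⟨ENNReal.ofReal (5 ^ (β/2)) * Iφ + ENNReal.ofReal (8 ^ (σ/2)) * Iw, ?_, ?_⟩
  · exact ENNReal.add_ne_top.mpr ⟨ENNReal.mul_ne_top ENNReal.ofReal_ne_top hIφfin,
      ENNReal.mul_ne_top ENNReal.ofReal_ne_top hIwfin⟩
  intro x
  have hφmeas : Measurable fun y : E => ENNReal.ofReal (auxPhi σ d' (x - y)) :=
    (auxPhi_meas σ d' d).comp (measurable_const.sub measurable_id)
  calc ∫⁻ y, ENNReal.ofReal (‖x - y‖ ^ (-σ) * (1 + ‖y‖ ^ 2) ^ (-β / 2))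
      ≤ ∫⁻ y, ENNReal.ofReal ((1 + ‖x‖ ^ 2) ^ (-σ / 2) *
          (5 ^ (β/2) * auxPhi σ d' (x - y) + 8 ^ (σ/2) * (1 + ‖y‖ ^ 2) ^ (-β / 2))) :=
        lintegral_mono fun y =>
          ENNReal.ofReal_le_ofReal (aux_pointwise d hσ0 hσd' hd'2 x y)
    _ = ∫⁻ y, ENNReal.ofReal ((1 + ‖x‖ ^ 2) ^ (-σ / 2)) *
          (ENNReal.ofReal (5 ^ (β/2)) * ENNReal.ofReal (auxPhi σ d' (x - y)) +
           ENNReal.ofReal (8 ^ (σ/2)) * ENNReal.ofReal ((1 + ‖y‖ ^ 2) ^ (-β / 2))) := by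
        congr 1; ext y
        have hφ : 0 ≤ auxPhi σ d' (x - y) := auxPhi_nonneg _ _ _
        rw [ENNReal.ofReal_mul (by positivity),
          ENNReal.ofReal_add (mul_nonneg (by positivity) hφ) (by positivity),
          ENNReal.ofReal_mul (by positivity), ENNReal.ofReal_mul (by positivity)]
    _ = ENNReal.ofReal ((1 + ‖x‖ ^ 2) ^ (-σ / 2)) *
          ∫⁻ y, (ENNReal.ofReal (5 ^ (β/2)) * ENNReal.ofReal (auxPhi σ d' (x - y)) +
           ENNReal.ofReal (8 ^ (σ/2)) * ENNReal.ofReal ((1 + ‖y‖ ^ 2) ^ (-β / 2))) :=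
        lintegral_const_mul' _ _ ENNReal.ofReal_ne_top
    _ = ENNReal.ofReal ((1 + ‖x‖ ^ 2) ^ (-σ / 2)) *
          (ENNReal.ofReal (5 ^ (β/2)) * (∫⁻ y, ENNReal.ofReal (auxPhi σ d' (x - y))) +
           ENNReal.ofReal (8 ^ (σ/2)) * Iw) := by
        rw [lintegral_add_left (hφmeas.const_mul _), lintegral_const_mul' _ _ ENNReal.ofReal_ne_top,
          lintegral_const_mul' _ _ ENNReal.ofReal_ne_top]
    _ = (ENNReal.ofReal (5 ^ (β/2)) * Iφ + ENNReal.ofReal (8 ^ (σ/2)) * Iw) *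
          ENNReal.ofReal ((1 + ‖x‖ ^ 2) ^ (-σ / 2)) := by
        have hsub : (∫⁻ y, ENNReal.ofReal (auxPhi σ d' (x - y))) = Iφ := by
          rw [hIφ]
          exact MeasurePreserving.lintegral_comp
            (Measure.measurePreserving_sub_left volume x) (auxPhi_meas σ d' d)
        rw [hsub]; ring

/-- Translated weight estimate: `∫ ⟨x-τ⟩^{-β₁} ⟨x⟩^{-σ} dx ≲ ⟨τ⟩^{-σ}`. -/
lemma aux_B (d : ℕ) (hd : 1 ≤ d) {σ β₁ : ℝ} (hσ0 : 0 ≤ σ) (hσd : σ < d) (hβ₁ : (d:ℝ) < β₁) :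
    ∃ K : ℝ≥0∞, K ≠ ⊤ ∧ ∀ τ : EuclideanSpace ℝ (Fin d),
      ∫⁻ x, ENNReal.ofReal ((1 + ‖x - τ‖ ^ 2) ^ (-β₁ / 2)) *
          ENNReal.ofReal ((1 + ‖x‖ ^ 2) ^ (-σ / 2))
        ≤ K * ENNReal.ofReal ((1 + ‖τ‖ ^ 2) ^ (-σ / 2)) := by
  haveI : Nonempty (Fin d) := ⟨⟨0, hd⟩⟩
  set E := EuclideanSpace ℝ (Fin d)
  obtain ⟨K, hKfin, hK⟩ := aux_A d hd hσ0 hσd hβ₁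
  refine ⟨K, hKfin, fun τ => ?_⟩
  have hae : ∀ᵐ x : E, x ≠ 0 := by
    refine ae_iff.mpr ?_
    simp [measure_singleton]
  have hGmeas : Measurable fun y : E =>
      ENNReal.ofReal (‖τ - y‖ ^ (-σ) * (1 + ‖y‖ ^ 2) ^ (-β₁ / 2)) := by fun_prop
  calc ∫⁻ x, ENNReal.ofReal ((1 + ‖x - τ‖ ^ 2) ^ (-β₁ / 2)) *
          ENNReal.ofReal ((1 + ‖x‖ ^ 2) ^ (-σ / 2))
      ≤ ∫⁻ x, ENNReal.ofReal (‖τ - (τ - x)‖ ^ (-σ) * (1 + ‖τ - x‖ ^ 2) ^ (-β₁ / 2)) := by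
        refine lintegral_mono_ae (hae.mono fun x hx => ?_)
        have hss : τ - (τ - x) = x := by abel
        rw [hss, norm_sub_rev τ x, ← ENNReal.ofReal_mul (by positivity)]
        apply ENNReal.ofReal_le_ofReal
        have hx0 : (0:ℝ) < ‖x‖ := norm_pos_iff.mpr hx
        have hwx : (1 + ‖x‖ ^ 2) ^ (-σ / 2) ≤ ‖x‖ ^ (-σ) := by
          have e2 : (-σ / 2 : ℝ) = -(σ / 2) := by ring
          have hsq : (‖x‖ ^ 2 : ℝ) ^ (-(σ / 2)) = ‖x‖ ^ (-σ) := by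
            rw [aux_sq_rpow (norm_nonneg x)]; ring_nf
          rw [e2, ← hsq]
          exact Real.rpow_le_rpow_of_nonpos (by positivity) (by nlinarith) (by linarith)
        calc (1 + ‖x - τ‖ ^ 2) ^ (-β₁ / 2) * (1 + ‖x‖ ^ 2) ^ (-σ / 2)
            ≤ (1 + ‖x - τ‖ ^ 2) ^ (-β₁ / 2) * ‖x‖ ^ (-σ) :=
              mul_le_mul_of_nonneg_left hwx (by positivity)
          _ = ‖x‖ ^ (-σ) * (1 + ‖x - τ‖ ^ 2) ^ (-β₁ / 2) := by ring
    _ = ∫⁻ y, ENNReal.ofReal (‖τ - y‖ ^ (-σ) * (1 + ‖y‖ ^ 2) ^ (-β₁ / 2)) :=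
        MeasurePreserving.lintegral_comp (Measure.measurePreserving_sub_left volume τ) hGmeas
    _ ≤ K * ENNReal.ofReal ((1 + ‖τ‖ ^ 2) ^ (-σ / 2)) := hK τ

/-- double weighted convolution estimate (Lemma 2.1 (ii)). -/
theorem stmt_1 (d : ℕ) (hd : 1 ≤ d) (β₁ β₂ σ : ℝ) (hβ₁ : (d : ℝ) < β₁)
    (hβ₂ : (d : ℝ) < β₂) (hσ0 : 0 ≤ σ) (hσd : σ < d) :
    ∃ C > 0, ∀ τ : EuclideanSpace ℝ (Fin d),
      (∫ x : EuclideanSpace ℝ (Fin d), ∫ y : EuclideanSpace ℝ (Fin d),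
          ‖x - y‖ ^ (-σ) * (1 + ‖x - τ‖ ^ 2) ^ (-β₁ / 2) * (1 + ‖y‖ ^ 2) ^ (-β₂ / 2))
        ≤ C * (1 + ‖τ‖ ^ 2) ^ (-σ / 2) := by
  obtain ⟨K₂, hK₂fin, hK₂⟩ := aux_A d hd hσ0 hσd hβ₂
  obtain ⟨K₁, hK₁fin, hK₁⟩ := aux_B d hd hσ0 hσd hβ₁
  set Ktot : ℝ≥0∞ := K₂ * K₁ with hKtot
  have hKtotfin : Ktot ≠ ⊤ := ENNReal.mul_ne_top hK₂fin hK₁fin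
  refine ⟨Ktot.toReal + 1, by positivity, fun τ => ?_⟩
  set F : EuclideanSpace ℝ (Fin d) → EuclideanSpace ℝ (Fin d) → ℝ := fun x y =>
    ‖x - y‖ ^ (-σ) * (1 + ‖x - τ‖ ^ 2) ^ (-β₁ / 2) * (1 + ‖y‖ ^ 2) ^ (-β₂ / 2) with hF
  have hFmeas : Measurable fun p : EuclideanSpace ℝ (Fin d) × EuclideanSpace ℝ (Fin d) => F p.1 p.2 := by
    rw [hF]; fun_prop
  have hFnn : ∀ x y, 0 ≤ F x y := fun x y => by rw [hF]; positivity
  set L : EuclideanSpace ℝ (Fin d) → ℝ≥0∞ := fun x => ∫⁻ y, ENNReal.ofReal (F x y) with hL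
  have hLmeas : Measurable L := by
    apply Measurable.lintegral_prod_right (f := fun x y => ENNReal.ofReal (F x y))
    exact hFmeas.ennreal_ofReal
  -- identify inner integrals
  have hinner : ∀ x, (∫ y, F x y) = (L x).toReal := by
    intro x
    rw [hL]
    exact integral_eq_lintegral_of_nonneg_ae (ae_of_all _ fun y => hFnn x y)
      ((hFmeas.comp measurable_prodMk_left).aestronglyMeasurable)
  -- the key lintegral bound
  have hmain : ∫⁻ x, L x ≤ Ktot * ENNReal.ofReal ((1 + ‖τ‖ ^ 2) ^ (-σ / 2)) := by
    have hstep : ∀ x, L x ≤ K₂ *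
        (ENNReal.ofReal ((1 + ‖x - τ‖ ^ 2) ^ (-β₁ / 2)) *
         ENNReal.ofReal ((1 + ‖x‖ ^ 2) ^ (-σ / 2))) := by
      intro x
      have heq : L x = ENNReal.ofReal ((1 + ‖x - τ‖ ^ 2) ^ (-β₁ / 2)) *
          ∫⁻ y, ENNReal.ofReal (‖x - y‖ ^ (-σ) * (1 + ‖y‖ ^ 2) ^ (-β₂ / 2)) := by
        rw [hL, ← lintegral_const_mul' _ _ ENNReal.ofReal_ne_top]
        apply lintegral_congr fun y => ?_
        rw [← ENNReal.ofReal_mul (by positivity)]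
        congr 1
        rw [hF]; ring
      rw [heq]
      calc ENNReal.ofReal ((1 + ‖x - τ‖ ^ 2) ^ (-β₁ / 2)) *
            ∫⁻ y, ENNReal.ofReal (‖x - y‖ ^ (-σ) * (1 + ‖y‖ ^ 2) ^ (-β₂ / 2))
          ≤ ENNReal.ofReal ((1 + ‖x - τ‖ ^ 2) ^ (-β₁ / 2)) *
            (K₂ * ENNReal.ofReal ((1 + ‖x‖ ^ 2) ^ (-σ / 2))) :=
            mul_le_mul_right (hK₂ x) _
        _ = K₂ * (ENNReal.ofReal ((1 + ‖x - τ‖ ^ 2) ^ (-β₁ / 2)) *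
            ENNReal.ofReal ((1 + ‖x‖ ^ 2) ^ (-σ / 2))) := by ring
    calc ∫⁻ x, L x ≤ ∫⁻ x, K₂ *
          (ENNReal.ofReal ((1 + ‖x - τ‖ ^ 2) ^ (-β₁ / 2)) *
           ENNReal.ofReal ((1 + ‖x‖ ^ 2) ^ (-σ / 2))) := lintegral_mono hstep
      _ = K₂ * ∫⁻ x, ENNReal.ofReal ((1 + ‖x - τ‖ ^ 2) ^ (-β₁ / 2)) *
           ENNReal.ofReal ((1 + ‖x‖ ^ 2) ^ (-σ / 2)) :=
          lintegral_const_mul' _ _ hK₂fin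
      _ ≤ K₂ * (K₁ * ENNReal.ofReal ((1 + ‖τ‖ ^ 2) ^ (-σ / 2))) :=
          mul_le_mul_right (hK₁ τ) _
      _ = Ktot * ENNReal.ofReal ((1 + ‖τ‖ ^ 2) ^ (-σ / 2)) := by rw [hKtot]; ring
  -- convert the double Bochner integral
  have houter : (∫ x, ∫ y, F x y) = (∫⁻ x, ENNReal.ofReal ((L x).toReal)).toReal := by
    have : (∫ x, ∫ y, F x y) = ∫ x, (L x).toReal := by
      congr 1; ext x; exact hinner x
    rw [this]
    exact integral_eq_lintegral_of_nonneg_ae (ae_of_all _ fun x => ENNReal.toReal_nonneg)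
      (hLmeas.ennreal_toReal.aestronglyMeasurable)
  have hle : (∫⁻ x, ENNReal.ofReal ((L x).toReal)) ≤
      Ktot * ENNReal.ofReal ((1 + ‖τ‖ ^ 2) ^ (-σ / 2)) :=
    le_trans (lintegral_mono fun x => ENNReal.ofReal_toReal_le) hmain
  rw [houter]
  have hBfin : Ktot * ENNReal.ofReal ((1 + ‖τ‖ ^ 2) ^ (-σ / 2)) ≠ ⊤ :=
    ENNReal.mul_ne_top hKtotfin ENNReal.ofReal_ne_top
  calc (∫⁻ x, ENNReal.ofReal ((L x).toReal)).toReal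
      ≤ (Ktot * ENNReal.ofReal ((1 + ‖τ‖ ^ 2) ^ (-σ / 2))).toReal :=
        ENNReal.toReal_mono hBfin hle
    _ = Ktot.toReal * (1 + ‖τ‖ ^ 2) ^ (-σ / 2) := by
        rw [ENNReal.toReal_mul, ENNReal.toReal_ofReal (by positivity)]
    _ ≤ (Ktot.toReal + 1) * (1 + ‖τ‖ ^ 2) ^ (-σ / 2) := by
        apply mul_le_mul_of_nonneg_right (by linarith) (by positivity)
end

section
/- Let $d=1$ and let $\varphi:\mathbb{R}\to\mathbb{R}$ satisfy $|\varphi(x)|\le C\langle x\rangle^{-\delta}$ for some $\delta>3$, with $\int_{\mathbb{R}}\varphi(x)\,dx\ne 0$. Define $F^\pm(\lambda^2)=\int_{\mathbb{R}}\int_{\mathbb{R}}\frac{\pm i}{2\lambda}e^{\pm i\lambda|x-y|}\varphi(y)\varphi(x)\,dy\,dx$. Then for $0<\lambda<1/2$, $F^\pm(\lambda^2)=\frac{\pm i}{2\lambda}\Big(\int_{\mathbb{R}}\varphi\Big)^2 + b_1 + r_1^\pm(\lambda)$, where $b_1=-\frac12\int\int |x-y|\varphi(y)\varphi(x)\,dy\,dx$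 and the remainder satisfies $|\frac{d^k}{d\lambda^k}r_1^\pm(\lambda)|\le C\lambda^{1-k}$ for $k=0,1,2$. -/
open MeasureTheory Set Complex intervalIntegral

lemma expI_hasDeriv (t : ℝ) : HasDerivAt (fun s : ℝ => Complex.exp (s * I)) (I * Complex.exp (t * I)) t := by
  have h : HasDerivAt (fun z : ℂ => Complex.exp (z * I)) (Complex.exp ((t:ℂ) * I) * I) (t : ℂ) := by
    simpa using ((hasDerivAt_id (t:ℂ)).mul_const I).cexp
  simpa [mul_comm] using h.comp_ofReal

lemma expI_sub_one_norm (θ : ℝ) : ‖Complex.exp (θ * I) - 1‖ ≤ |θ| := by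
  have h : Complex.exp ((θ:ℝ) * I) - 1 = ∫ s in (0:ℝ)..θ, I * Complex.exp (s * I) := by
    rw [integral_eq_sub_of_hasDerivAt (fun t _ => expI_hasDeriv t)]
    · simp
    · exact (Continuous.intervalIntegrable (by continuity) _ _)
  rw [h]
  have := intervalIntegral.norm_integral_le_of_norm_le_const
    (C := 1) (f := fun s : ℝ => I * Complex.exp (s * I)) (a := 0) (b := θ)
    (fun x _ => by simp [Complex.norm_exp_ofReal_mul_I])
  simpa using this

lemma expI_taylor2_aux (θ : ℝ) (hθ : 0 ≤ θ) :
    ‖Complex.exp (θ * I) - 1 - θ * I‖ ≤ θ ^ 2 / 2 := by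
  have hd : ∀ t : ℝ, HasDerivAt (fun s : ℝ => Complex.exp (s * I) - 1 - s * I)
      (I * (Complex.exp (t * I) - 1)) t := by
    intro t
    have h2 : HasDerivAt (fun s : ℝ => (s : ℂ) * I) I t := by
      simpa using ((hasDerivAt_id (t:ℂ)).mul_const I).comp_ofReal
    have := ((expI_hasDeriv t).sub_const 1).sub h2
    exact this.congr_deriv (by ring)
  have h : Complex.exp ((θ:ℝ) * I) - 1 - θ * I
      = ∫ s in (0:ℝ)..θ, I * (Complex.exp (s * I) - 1) := by
    rw [integral_eq_sub_of_hasDerivAt (fun t _ => hd t)]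
    · simp
    · exact (Continuous.intervalIntegrable (by continuity) _ _)
  rw [h]
  have hb : ‖∫ s in (0:ℝ)..θ, I * (Complex.exp (s * I) - 1)‖
      ≤ |(∫ s in (0:ℝ)..θ, _root_.abs s)| := by
    apply intervalIntegral.norm_integral_le_abs_of_norm_le
    · filter_upwards with t
      simpa using (expI_sub_one_norm t)
    · exact (Continuous.intervalIntegrable (by continuity) _ _)
  refine hb.trans ?_
  have : (∫ s in (0:ℝ)..θ, |s|) = θ ^ 2 / 2 := by
    rw [intervalIntegral.integral_congr (g := fun s : ℝ => s) ?_]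
    · simp [integral_id]
    · intro s hs
      rw [Set.uIcc_of_le hθ] at hs
      exact abs_of_nonneg hs.1
  rw [this]; exact le_of_eq (abs_of_nonneg (by positivity))

lemma expI_taylor2 (θ : ℝ) : ‖Complex.exp (θ * I) - 1 - θ * I‖ ≤ θ ^ 2 / 2 := by
  rcases le_or_gt 0 θ with h | h
  · exact expI_taylor2_aux θ h
  · have h1 := expI_taylor2_aux (-θ) (by linarith)
    have h2 : Complex.exp ((-θ : ℝ) * I) - 1 - (-θ : ℝ) * I
        = (starRingEnd ℂ) (Complex.exp (θ * I) - 1 - θ * I) := by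
      simp [← Complex.exp_conj, map_sub, map_mul, Complex.conj_I]

    rw [h2] at h1
    rw [RCLike.norm_conj] at h1
    simpa using h1
open MeasureTheory Set Complex

noncomputable def h0 (c : ℂ) (s t : ℝ) : ℂ :=
  c/2 * ((t:ℂ))⁻¹ * (Complex.exp (c*t*s) - 1 - c*t*s)
noncomputable def h1 (c : ℂ) (s t : ℝ) : ℂ :=
  c/2 * (((t:ℂ))^2)⁻¹ * (c*t*s*Complex.exp (c*t*s) - Complex.exp (c*t*s) + 1)
noncomputable def h2 (c : ℂ) (s t : ℝ) : ℂ :=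
  c/2 * (((t:ℂ))^3)⁻¹ * (-(2:ℂ) * (c*t*s*Complex.exp (c*t*s) - Complex.exp (c*t*s) + 1)
    + (c*t*s)^2 * Complex.exp (c*t*s))

lemma lin_hasDeriv (c S z : ℂ) : HasDerivAt (fun w : ℂ => c*w*S) (c*S) z := by
  simpa using ((hasDerivAt_id z).const_mul c).mul_const S

lemma D0c (c S z : ℂ) (hz : z ≠ 0) :
    HasDerivAt (fun w : ℂ => c/2 * w⁻¹ * (Complex.exp (c*w*S) - 1 - c*w*S))
      (c/2 * (z^2)⁻¹ * (c*z*S*Complex.exp (c*z*S) - Complex.exp (c*z*S) + 1)) z := by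
  have hA : HasDerivAt (fun w : ℂ => c/2 * w⁻¹) (c/2 * (-(z^2)⁻¹)) z :=
    (hasDerivAt_inv hz).const_mul (c/2)
  have hB : HasDerivAt (fun w : ℂ => Complex.exp (c*w*S) - 1 - c*w*S)
      (Complex.exp (c*z*S) * (c*S) - c*S) z :=
    (((lin_hasDeriv c S z).cexp).sub_const 1).sub (lin_hasDeriv c S z)
  have key := hA.mul hB
  have heq : c/2 * (z^2)⁻¹ * (c*z*S*Complex.exp (c*z*S) - Complex.exp (c*z*S) + 1)
      = c/2 * (-(z^2)⁻¹) * (Complex.exp (c*z*S) - 1 - c*z*S)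
        + c/2 * z⁻¹ * (Complex.exp (c*z*S) * (c*S) - c*S) := by
    field_simp; ring
  rw [heq]; exact key

lemma D1c (c S z : ℂ) (hz : z ≠ 0) :
    HasDerivAt (fun w : ℂ => c/2 * (w^2)⁻¹ * (c*w*S*Complex.exp (c*w*S) - Complex.exp (c*w*S) + 1))
      (c/2 * (z^3)⁻¹ * (-(2:ℂ) * (c*z*S*Complex.exp (c*z*S) - Complex.exp (c*z*S) + 1)
        + (c*z*S)^2 * Complex.exp (c*z*S))) z := by
  have hA : HasDerivAt (fun w : ℂ => c/2 * (w^2)⁻¹)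
      (c/2 * (-((2:ℕ) * z ^ 1) / (z^2)^2)) z :=
    ((hasDerivAt_pow 2 z).inv (pow_ne_zero 2 hz)).const_mul (c/2)
  have hB : HasDerivAt (fun w : ℂ => c*w*S*Complex.exp (c*w*S) - Complex.exp (c*w*S) + 1)
      (c*S*Complex.exp (c*z*S) + c*z*S*(Complex.exp (c*z*S) * (c*S))
        - Complex.exp (c*z*S) * (c*S)) z :=
    (((lin_hasDeriv c S z).mul ((lin_hasDeriv c S z).cexp)).sub
      ((lin_hasDeriv c S z).cexp)).add_const 1
  have key := hA.mul hB
  have heq : c/2 * (z^3)⁻¹ * (-(2:ℂ) * (c*z*S*Complex.exp (c*z*S) - Complex.exp (c*z*S) + 1)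
        + (c*z*S)^2 * Complex.exp (c*z*S))
      = c/2 * (-((2:ℕ) * z ^ 1) / (z^2)^2) * (c*z*S*Complex.exp (c*z*S) - Complex.exp (c*z*S) + 1)
        + c/2 * (z^2)⁻¹ * (c*S*Complex.exp (c*z*S) + c*z*S*(Complex.exp (c*z*S) * (c*S))
          - Complex.exp (c*z*S) * (c*S)) := by
    push_cast
    field_simp; ring
  rw [heq]; exact key

lemma d0 (c : ℂ) (s t : ℝ) (ht : t ≠ 0) : HasDerivAt (h0 c s) (h1 c s t) t := by
  have htc : ((t:ℝ):ℂ) ≠ 0 := by exact_mod_cast ht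
  exact (D0c c s t htc).comp_ofReal

lemma d1 (c : ℂ) (s t : ℝ) (ht : t ≠ 0) : HasDerivAt (h1 c s) (h2 c s t) t := by
  have htc : ((t:ℝ):ℂ) ≠ 0 := by exact_mod_cast ht
  exact (D1c c s t htc).comp_ofReal

section NB
variable {ε : ℝ} (hε : ε = 1 ∨ ε = -1)

lemma cts_eq (ε t s : ℝ) : (Complex.I * ε) * t * s = ((ε*t*s : ℝ):ℂ) * Complex.I := by
  push_cast; ring

include hε

lemma norm_c : ‖Complex.I * (ε:ℂ)‖ = 1 := by
  rcases hε with h | h <;> simp [h]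

lemma nbE1 (t s : ℝ) : ‖Complex.exp ((Complex.I*ε)*t*s) - 1‖ ≤ |t| * |s| := by
  rw [cts_eq]
  refine (expI_sub_one_norm _).trans ?_
  rw [abs_mul, abs_mul]
  rcases hε with h | h <;> simp [h]

lemma nbE2 (t s : ℝ) : ‖Complex.exp ((Complex.I*ε)*t*s) - 1 - (Complex.I*ε)*t*s‖
    ≤ t^2 * s^2 / 2 := by
  rw [cts_eq]
  refine (expI_taylor2 _).trans ?_
  have h2 : ε^2 = 1 := by rcases hε with h | h <;> simp [h]
  nlinarith [sq_nonneg (t*s)]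

lemma nbu (t s : ℝ) : ‖(Complex.I*ε)*t*s‖ = |t| * |s| := by
  rw [cts_eq]
  rcases hε with h | h <;> simp [h, abs_mul]

lemma nb0 (t s : ℝ) (ht : 0 < t) (hs : 0 ≤ s) : ‖h0 (Complex.I*ε) s t‖ ≤ t * s^2 / 4 := by
  unfold h0
  rw [norm_mul, norm_mul, norm_div, norm_c hε]
  have h1 : ‖((t:ℝ):ℂ)⁻¹‖ = t⁻¹ := by
    rw [norm_inv, Complex.norm_real, Real.norm_eq_abs, abs_of_pos ht]
  rw [h1]
  have h2 := nbE2 hε t s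
  have h3 : ‖(2:ℂ)‖ = 2 := by simp
  rw [h3]
  calc 1/2 * t⁻¹ * ‖Complex.exp ((Complex.I*ε)*t*s) - 1 - (Complex.I*ε)*t*s‖
      ≤ 1/2 * t⁻¹ * (t^2*s^2/2) := by gcongr
    _ = t * s^2 / 4 := by field_simp; ring

lemma nb1 (t s : ℝ) (ht : 0 < t) (hs : 0 ≤ s) : ‖h1 (Complex.I*ε) s t‖ ≤ 3/4 * s^2 := by
  unfold h1
  rw [norm_mul, norm_mul, norm_div, norm_c hε]
  have h1 : ‖(((t:ℝ):ℂ)^2)⁻¹‖ = (t^2)⁻¹ := by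
    rw [norm_inv, norm_pow, Complex.norm_real, Real.norm_eq_abs, abs_of_pos ht]
  have h3 : ‖(2:ℂ)‖ = 2 := by simp
  rw [h1, h3]
  have h6 := nbu hε t s
  have h4 := nbE1 hε t s
  have h5 := nbE2 hε t s
  have hta : |t| = t := abs_of_pos ht
  have hsa : |s| = s := abs_of_nonneg hs
  simp only [hta, hsa] at h6 h4 h5
  set c : ℂ := Complex.I*ε with hc
  set E : ℂ := Complex.exp (c*t*s) with hEdef
  have hsplit : c*t*s*E - E + 1 = c*t*s*(E-1) - (E - 1 - c*t*s) := by ring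
  have hb : ‖c*t*s*E - E + 1‖ ≤ 3/2 * (t^2 * s^2) := by
    rw [hsplit]
    refine (norm_sub_le _ _).trans ?_
    rw [norm_mul, h6]
    nlinarith [mul_le_mul_of_nonneg_left h4 (mul_nonneg ht.le hs), h5,
      norm_nonneg (E-1), mul_nonneg ht.le hs]
  calc 1/2 * (t^2)⁻¹ * ‖c*t*s*E - E + 1‖ ≤ 1/2 * (t^2)⁻¹ * (3/2 * (t^2*s^2)) := by gcongr
    _ = 3/4 * s^2 * (t^2 * (t^2)⁻¹) := by ring
    _ = 3/4 * s^2 := by rw [mul_inv_cancel₀ (by positivity)]; ring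

lemma nb2 (t s : ℝ) (ht : 0 < t) (hs : 0 ≤ s) : ‖h2 (Complex.I*ε) s t‖ ≤ 2 * s^2 / t := by
  unfold h2
  rw [norm_mul, norm_mul, norm_div, norm_c hε]
  have h1 : ‖(((t:ℝ):ℂ)^3)⁻¹‖ = (t^3)⁻¹ := by
    rw [norm_inv, norm_pow, Complex.norm_real, Real.norm_eq_abs, abs_of_pos ht]
  have h3 : ‖(2:ℂ)‖ = 2 := by simp
  rw [h1, h3]
  have h6 := nbu hε t s
  have h4 := nbE1 hε t s
  have h5 := nbE2 hε t s
  have hEn : ‖Complex.exp ((Complex.I*ε)*t*s)‖ = 1 := by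
    rw [cts_eq]; exact Complex.norm_exp_ofReal_mul_I _
  have hta : |t| = t := abs_of_pos ht
  have hsa : |s| = s := abs_of_nonneg hs
  simp only [hta, hsa] at h6 h4 h5
  set c : ℂ := Complex.I*ε with hc
  set E : ℂ := Complex.exp (c*t*s) with hEdef
  have hsplit : c*t*s*E - E + 1 = c*t*s*(E-1) - (E - 1 - c*t*s) := by ring
  have hb : ‖c*t*s*E - E + 1‖ ≤ 3/2 * (t^2 * s^2) := by
    rw [hsplit]
    refine (norm_sub_le _ _).trans ?_
    rw [norm_mul, h6]
    nlinarith [mul_le_mul_of_nonneg_left h4 (mul_nonneg ht.le hs), h5,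
      norm_nonneg (E-1), mul_nonneg ht.le hs]
  have hbig : ‖-(2:ℂ) * (c*t*s*E - E + 1) + (c*t*s)^2 * E‖ ≤ 4 * (t^2 * s^2) := by
    refine (norm_add_le _ _).trans ?_
    rw [norm_mul, norm_mul, norm_pow, h6, hEn]
    have h7 : ‖(-2 : ℂ)‖ = 2 := by simp
    rw [h7]
    nlinarith
  calc 1/2 * (t^3)⁻¹ * ‖-(2:ℂ) * (c*t*s*E - E + 1) + (c*t*s)^2 * E‖
      ≤ 1/2 * (t^3)⁻¹ * (4 * (t^2*s^2)) := by gcongr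
    _ = 2 * s^2 / t * (t^3 * (t^3)⁻¹) * (t^2 / t^2) / (1) := by field_simp; ring
    _ ≤ 2 * s^2 / t := by rw [mul_inv_cancel₀ (by positivity)]; field_simp; exact le_rfl

end NB


lemma intv (β : ℝ) (hβ : 1 < β) : Integrable (fun x : ℝ => (1+x^2) ^ (-β/2)) := by
  have h := integrable_rpow_neg_one_add_norm_sq (E := ℝ) (μ := volume) (r := β) (by simpa using hβ)
  simpa [Real.norm_eq_abs, sq_abs] using h

section
variable {φ : ℝ → ℝ} {C δ : ℝ}

lemma intD (hφmeas : Measurable φ) (hφ : ∀ x : ℝ, |φ x| ≤ C * (1 + x ^ 2) ^ (-δ / 2))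
    (j : ℕ) (hj : (j:ℝ) + 1 < δ) :
    Integrable (fun p : ℝ×ℝ => |p.1-p.2|^j * (|φ p.2| * |φ p.1|)) := by
  have hC : 0 ≤ C := by
    have := (abs_nonneg (φ 0)).trans (hφ 0)
    simpa using this
  have hβ : 1 < δ - (j:ℝ) := by linarith
  have hbase : Integrable (fun x : ℝ => (1+x^2) ^ (((j:ℝ)-δ)/2)) := by
    have := intv (δ - (j:ℝ)) hβ
    simpa [neg_sub] using this
  have hprod : Integrable (fun p : ℝ×ℝ =>
      (1+p.1^2) ^ (((j:ℝ)-δ)/2) * (1+p.2^2) ^ (((j:ℝ)-δ)/2)) := by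
    rw [show (volume : Measure (ℝ×ℝ)) = (volume : Measure ℝ).prod volume from MeasureTheory.Measure.volume_eq_prod ℝ ℝ]
    exact hbase.mul_prod hbase
  refine ((hprod.const_mul ((2:ℝ)^j * C^2)).mono' ?_ (ae_of_all _ ?_))
  · apply Measurable.aestronglyMeasurable
    exact (((measurable_fst.sub measurable_snd).abs.pow_const j).mul
      ((hφmeas.comp measurable_snd).abs.mul (hφmeas.comp measurable_fst).abs))
  · rintro ⟨x, y⟩
    simp only
    have hA : (0:ℝ) < 1 + x^2 := by positivity
    have hB : (0:ℝ) < 1 + y^2 := by positivity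
    have hxy : |x - y| ≤ 2 * ((1+x^2)*(1+y^2)) ^ ((1:ℝ)/2) := by
      have h1 : |x| ≤ (1+x^2) ^ ((1:ℝ)/2) := by
        rw [← Real.sqrt_eq_rpow]
        calc |x| = Real.sqrt (x^2) := (Real.sqrt_sq_eq_abs x).symm
          _ ≤ _ := Real.sqrt_le_sqrt (by linarith)
      have h2 : |y| ≤ (1+y^2) ^ ((1:ℝ)/2) := by
        rw [← Real.sqrt_eq_rpow]
        calc |y| = Real.sqrt (y^2) := (Real.sqrt_sq_eq_abs y).symm
          _ ≤ _ := Real.sqrt_le_sqrt (by linarith)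
      have hAB1 : (1+x^2) ^ ((1:ℝ)/2) ≤ ((1+x^2)*(1+y^2)) ^ ((1:ℝ)/2) :=
        Real.rpow_le_rpow hA.le (by nlinarith) (by norm_num)
      have hAB2 : (1+y^2) ^ ((1:ℝ)/2) ≤ ((1+x^2)*(1+y^2)) ^ ((1:ℝ)/2) :=
        Real.rpow_le_rpow hB.le (by nlinarith) (by norm_num)
      calc |x - y| ≤ |x| + |y| := abs_sub _ _
        _ ≤ _ := by linarith
    have hkey : |x-y|^j * (|φ y| * |φ x|)
        ≤ (2:ℝ)^j * C^2 * ((1+x^2) ^ (((j:ℝ)-δ)/2) * (1+y^2) ^ (((j:ℝ)-δ)/2)) := by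
      have step1 : |x-y|^j ≤ (2 * ((1+x^2)*(1+y^2)) ^ ((1:ℝ)/2))^j :=
        pow_le_pow_left₀ (abs_nonneg _) hxy j
      have step2 : (2 * ((1+x^2)*(1+y^2)) ^ ((1:ℝ)/2))^j
          = 2^j * ((1+x^2) ^ ((j:ℝ)/2) * (1+y^2) ^ ((j:ℝ)/2)) := by
        rw [mul_pow, ← Real.rpow_natCast (((1+x^2)*(1+y^2)) ^ ((1:ℝ)/2)) j,
          ← Real.rpow_mul (by positivity), Real.mul_rpow hA.le hB.le,
          ← Real.rpow_natCast _ j]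
        ring_nf
      have hφx := hφ x
      have hφy := hφ y
      calc |x-y|^j * (|φ y| * |φ x|)
          ≤ (2^j * ((1+x^2) ^ ((j:ℝ)/2) * (1+y^2) ^ ((j:ℝ)/2)))
            * ((C * (1+y^2) ^ (-δ/2)) * (C * (1+x^2) ^ (-δ/2))) := by
            apply mul_le_mul (step2 ▸ step1)
            · exact mul_le_mul hφy hφx (abs_nonneg _) (by positivity)
            · positivity
            · positivity
        _ = (2:ℝ)^j * C^2 * (((1+x^2) ^ ((j:ℝ)/2) * (1+x^2) ^ (-δ/2))
              * ((1+y^2) ^ ((j:ℝ)/2) * (1+y^2) ^ (-δ/2))) := by ring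
        _ = (2:ℝ)^j * C^2 * ((1+x^2) ^ (((j:ℝ)-δ)/2) * (1+y^2) ^ (((j:ℝ)-δ)/2)) := by
            rw [← Real.rpow_add hA, ← Real.rpow_add hB]
            ring_nf
    calc ‖|x-y|^j * (|φ y| * |φ x|)‖ = |x-y|^j * (|φ y| * |φ x|) := by
          rw [Real.norm_eq_abs, _root_.abs_of_nonneg (by positivity)]
      _ ≤ _ := hkey

end


noncomputable def KK (c : ℂ) (φ : ℝ → ℝ) (hh : ℂ → ℝ → ℝ → ℂ) (t : ℝ) (p : ℝ × ℝ) : ℂ :=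
  hh c |p.1 - p.2| t * ((φ p.2 : ℂ) * (φ p.1 : ℂ))

lemma cont_h0 (c : ℂ) (t : ℝ) : Continuous fun s : ℝ => h0 c s t := by unfold h0; fun_prop
lemma cont_h1 (c : ℂ) (t : ℝ) : Continuous fun s : ℝ => h1 c s t := by unfold h1; fun_prop
lemma cont_h2 (c : ℂ) (t : ℝ) : Continuous fun s : ℝ => h2 c s t := by unfold h2; fun_prop

section Main
variable {φ : ℝ → ℝ} {C δ : ℝ} (hδ : 3 < δ) (hφmeas : Measurable φ)
  (hφ : ∀ x : ℝ, |φ x| ≤ C * (1 + x ^ 2) ^ (-δ / 2))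

include hφmeas in
lemma aesm_mul {g : ℝ → ℂ} (hg : Continuous g) :
    AEStronglyMeasurable
      (fun p : ℝ × ℝ => g |p.1 - p.2| * ((φ p.2 : ℂ) * (φ p.1 : ℂ))) volume := by
  apply Measurable.aestronglyMeasurable
  exact ((hg.measurable).comp ((measurable_fst.sub measurable_snd).abs)).mul
    ((Complex.measurable_ofReal.comp (hφmeas.comp measurable_snd)).mul
     (Complex.measurable_ofReal.comp (hφmeas.comp measurable_fst)))

include hφmeas hφ in
lemma intK_gen (j : ℕ) (hj : (j:ℝ) + 1 < δ) {g : ℝ → ℂ} (hg : Continuous g) (a : ℝ)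
    (hb : ∀ s : ℝ, 0 ≤ s → ‖g s‖ ≤ a * s ^ j) :
    Integrable (fun p : ℝ × ℝ => g |p.1 - p.2| * ((φ p.2 : ℂ) * (φ p.1 : ℂ))) := by
  refine ((intD hφmeas hφ j hj).const_mul a).mono' (aesm_mul hφmeas hg) (ae_of_all _ ?_)
  rintro ⟨x, y⟩
  simp only
  rw [norm_mul, norm_mul, Complex.norm_real, Complex.norm_real,
    Real.norm_eq_abs, Real.norm_eq_abs]
  calc ‖g |x - y|‖ * (|φ y| * |φ x|) ≤ (a * |x - y| ^ j) * (|φ y| * |φ x|) := by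
        have := hb _ (abs_nonneg (x - y))
        gcongr
    _ = a * (|x - y| ^ j * (|φ y| * |φ x|)) := by ring

include hφmeas hφ hδ in
lemma nbInt {g : ℝ → ℂ} (a : ℝ)
    (hb : ∀ s : ℝ, 0 ≤ s → ‖g s‖ ≤ a * s ^ 2) :
    ‖∫ p : ℝ × ℝ, g |p.1 - p.2| * ((φ p.2 : ℂ) * (φ p.1 : ℂ))‖
      ≤ a * ∫ p : ℝ × ℝ, |p.1 - p.2| ^ 2 * (|φ p.2| * |φ p.1|) := by
  have hd2 : ((2:ℕ):ℝ) + 1 < δ := by push_cast; linarith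
  refine (MeasureTheory.norm_integral_le_of_norm_le ((intD hφmeas hφ 2 hd2).const_mul a)
    (ae_of_all _ ?_)).trans ?_
  · rintro ⟨x, y⟩
    simp only
    rw [norm_mul, norm_mul, Complex.norm_real, Complex.norm_real,
      Real.norm_eq_abs, Real.norm_eq_abs]
    calc ‖g |x - y|‖ * (|φ y| * |φ x|) ≤ (a * |x - y| ^ 2) * (|φ y| * |φ x|) := by
          have := hb _ (abs_nonneg (x - y))
          gcongr
      _ = a * (|x - y| ^ 2 * (|φ y| * |φ x|)) := by ring
  · rw [MeasureTheory.integral_const_mul]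

variable {ε : ℝ} (hε : ε = 1 ∨ ε = -1)

include hδ hφmeas hφ hε in
lemma intKK0 (t : ℝ) (ht : 0 < t) : Integrable (KK (Complex.I * ε) φ h0 t) := by
  have hd2 : ((2:ℕ):ℝ) + 1 < δ := by push_cast; linarith
  exact intK_gen hφmeas hφ 2 hd2 (cont_h0 _ t) (t/4)
    (fun s hs => (nb0 hε t s ht hs).trans (le_of_eq (by ring)))

include hδ hφmeas hφ hε in
lemma derivKK0 (t₀ : ℝ) (ht₀ : 0 < t₀) :
    Integrable (KK (Complex.I * ε) φ h1 t₀) ∧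
    HasDerivAt (fun t => ∫ p : ℝ × ℝ, KK (Complex.I * ε) φ h0 t p)
      (∫ p : ℝ × ℝ, KK (Complex.I * ε) φ h1 t₀ p) t₀ := by
  have hd2 : ((2:ℕ):ℝ) + 1 < δ := by push_cast; linarith
  refine hasDerivAt_integral_of_dominated_loc_of_deriv_le (s := Metric.ball t₀ (t₀/2)) (Metric.ball_mem_nhds _ (by positivity))
    (Filter.Eventually.of_forall fun t => aesm_mul hφmeas (cont_h0 _ t))
    (intKK0 hδ hφmeas hφ hε t₀ ht₀)
    (aesm_mul hφmeas (cont_h1 _ t₀))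
    (bound := fun p => 3/4 * (|p.1 - p.2| ^ 2 * (|φ p.2| * |φ p.1|)))
    (ae_of_all _ ?_) ((intD hφmeas hφ 2 hd2).const_mul (3/4)) (ae_of_all _ ?_)
  · rintro ⟨x, y⟩ t htb
    have ht : 0 < t := by
      rw [Metric.mem_ball, Real.dist_eq, abs_lt] at htb
      linarith [htb.1]
    unfold KK
    rw [norm_mul, norm_mul, Complex.norm_real, Complex.norm_real,
      Real.norm_eq_abs, Real.norm_eq_abs]
    calc ‖h1 (Complex.I * ε) |x - y| t‖ * (|φ y| * |φ x|)
        ≤ (3/4 * |x - y| ^ 2) * (|φ y| * |φ x|) := by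
          have := nb1 hε t |x - y| ht (abs_nonneg _)
          gcongr
      _ = 3/4 * (|x - y| ^ 2 * (|φ y| * |φ x|)) := by ring
  · rintro ⟨x, y⟩ t htb
    have ht : 0 < t := by
      rw [Metric.mem_ball, Real.dist_eq, abs_lt] at htb
      linarith [htb.1]
    exact (d0 (Complex.I * ε) |x - y| t ht.ne').mul_const _

include hδ hφmeas hφ hε in
lemma derivKK1 (t₀ : ℝ) (ht₀ : 0 < t₀) :
    HasDerivAt (fun t => ∫ p : ℝ × ℝ, KK (Complex.I * ε) φ h1 t p)
      (∫ p : ℝ × ℝ, KK (Complex.I * ε) φ h2 t₀ p) t₀ := by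
  have hd2 : ((2:ℕ):ℝ) + 1 < δ := by push_cast; linarith
  refine (hasDerivAt_integral_of_dominated_loc_of_deriv_le (s := Metric.ball t₀ (t₀/2)) (Metric.ball_mem_nhds _ (by positivity))
    (Filter.Eventually.of_forall fun t => aesm_mul hφmeas (cont_h1 _ t))
    ((derivKK0 hδ hφmeas hφ hε t₀ ht₀).1)
    (aesm_mul hφmeas (cont_h2 _ t₀))
    (bound := fun p => 4/t₀ * (|p.1 - p.2| ^ 2 * (|φ p.2| * |φ p.1|)))
    (ae_of_all _ ?_) ((intD hφmeas hφ 2 hd2).const_mul (4/t₀)) (ae_of_all _ ?_)).2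
  · rintro ⟨x, y⟩ t htb
    have ht : t₀/2 < t := by
      rw [Metric.mem_ball, Real.dist_eq, abs_lt] at htb
      linarith [htb.1]
    have ht' : 0 < t := by linarith
    unfold KK
    rw [norm_mul, norm_mul, Complex.norm_real, Complex.norm_real,
      Real.norm_eq_abs, Real.norm_eq_abs]
    calc ‖h2 (Complex.I * ε) |x - y| t‖ * (|φ y| * |φ x|)
        ≤ (2 * |x - y| ^ 2 / t) * (|φ y| * |φ x|) := by
          have := nb2 hε t |x - y| ht' (abs_nonneg _)
          gcongr
      _ ≤ (4/t₀ * |x - y| ^ 2) * (|φ y| * |φ x|) := by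
          have hle : 2 * |x - y| ^ 2 / t ≤ 4/t₀ * |x - y| ^ 2 := by
            rw [div_le_iff₀ ht']
            have h4 : 4/t₀ * (t₀/2) = 2 := by field_simp; norm_num
            calc 2 * |x - y| ^ 2 = (4/t₀ * (t₀/2)) * |x - y| ^ 2 := by rw [h4]
              _ ≤ (4/t₀ * t) * |x - y| ^ 2 := by
                  have h5 : (0:ℝ) ≤ |x - y| ^ 2 := by positivity
                  have h6 : 4/t₀ * (t₀/2) ≤ 4/t₀ * t := by
                    have : (0:ℝ) < 4/t₀ := by positivity
                    nlinarith
                  nlinarith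
              _ = 4/t₀ * |x - y| ^ 2 * t := by ring
          gcongr
      _ = 4/t₀ * (|x - y| ^ 2 * (|φ y| * |φ x|)) := by ring
  · rintro ⟨x, y⟩ t htb
    have ht : 0 < t := by
      rw [Metric.mem_ball, Real.dist_eq, abs_lt] at htb
      linarith [htb.1]
    exact (d1 (Complex.I * ε) |x - y| t ht.ne').mul_const _

include hδ hφmeas hφ hε in
lemma feq (t : ℝ) (ht : 0 < t) :
    ((∫ x : ℝ, ∫ y : ℝ,
        Complex.I * ε / (2 * t) * Complex.exp (Complex.I * ε * t * |x - y|) * φ y * φ x)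
      - Complex.I * ε / (2 * t) * ((∫ x, φ x : ℝ) : ℂ) ^ 2
      - (-(1 : ℂ) / 2 * ∫ x : ℝ, ∫ y : ℝ, ((|x - y| : ℝ) : ℂ) * φ y * φ x))
    = ∫ p : ℝ × ℝ, KK (Complex.I * ε) φ h0 t p := by
  have hd0 : ((0:ℕ):ℝ) + 1 < δ := by push_cast; linarith
  have hd1 : ((1:ℕ):ℝ) + 1 < δ := by push_cast; linarith
  have htc : ((t:ℝ):ℂ) ≠ 0 := by exact_mod_cast ht.ne'
  have hc2 : (Complex.I * (ε:ℝ) : ℂ)^2 = -1 := by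
    rcases hε with h | h <;> subst h <;> push_cast <;> ring_nf <;> simp [Complex.I_sq]
  set c : ℂ := Complex.I * (ε:ℝ) with hc
  have hE1 : ∀ s : ℝ, ‖Complex.exp (c * t * s)‖ = 1 := by
    intro s; rw [hc, cts_eq]; exact Complex.norm_exp_ofReal_mul_I _
  have Iq1 : Integrable (fun p : ℝ × ℝ =>
      c / (2 * t) * Complex.exp (c * t * |p.1 - p.2|) * φ p.2 * φ p.1) := by
    have := intK_gen hφmeas hφ 0 hd0
      (g := fun s : ℝ => c / (2 * t) * Complex.exp (c * t * s)) (by fun_prop)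
      (1/(2*t)) (fun s hs => ?_)
    · exact this.congr (ae_of_all _ fun p => by simp only; ring)
    · rw [norm_mul, norm_div, hE1, hc, norm_c hε]
      simp only [pow_zero, mul_one, one_mul]
      rw [norm_mul]
      simp [abs_of_pos ht]
  have Iq3 : Integrable (fun p : ℝ × ℝ =>
      ((|p.1 - p.2| : ℝ) : ℂ) * φ p.2 * φ p.1) := by
    have := intK_gen hφmeas hφ 1 hd1 (g := fun s : ℝ => ((s:ℝ):ℂ)) (by fun_prop) 1
      (fun s hs => by simp [Complex.norm_real, Real.norm_eq_abs, _root_.abs_of_nonneg hs])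
    exact this.congr (ae_of_all _ fun p => by simp only; ring)
  have Iw : Integrable (fun p : ℝ × ℝ => (φ p.2 : ℂ) * (φ p.1 : ℂ)) := by
    have := intK_gen hφmeas hφ 0 hd0 (g := fun _ : ℝ => (1:ℂ)) continuous_const 1
      (fun s hs => by simp)
    exact this.congr (ae_of_all _ fun p => by simp)
  have hT1 : (∫ x : ℝ, ∫ y : ℝ,
      c / (2 * t) * Complex.exp (c * t * |x - y|) * φ y * φ x)
      = ∫ p : ℝ × ℝ, c / (2 * t) * Complex.exp (c * t * |p.1 - p.2|) * φ p.2 * φ p.1 :=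
    MeasureTheory.integral_integral Iq1
  have hT3 : (∫ x : ℝ, ∫ y : ℝ, ((|x - y| : ℝ) : ℂ) * φ y * φ x)
      = ∫ p : ℝ × ℝ, ((|p.1 - p.2| : ℝ) : ℂ) * φ p.2 * φ p.1 :=
    MeasureTheory.integral_integral Iq3
  have hco : ∀ s : ℝ, c / (2 * (t:ℂ)) * Complex.exp (c * t * s)
      = h0 c s t + c / (2 * (t:ℂ)) + c^2 * (s:ℂ) / 2 := by
    intro s; unfold h0; field_simp; ring
  have hsplit : (fun p : ℝ × ℝ =>
        c / (2 * (t:ℂ)) * Complex.exp (c * t * |p.1 - p.2|) * φ p.2 * φ p.1)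
      = fun p : ℝ × ℝ => KK c φ h0 t p +
          (c / (2 * (t:ℂ)) * ((φ p.2 : ℂ) * (φ p.1 : ℂ))
            - (2:ℂ)⁻¹ * (((|p.1 - p.2| : ℝ) : ℂ) * φ p.2 * φ p.1)) := by
    funext p
    have h := hco |p.1 - p.2|
    unfold KK
    calc c / (2 * (t:ℂ)) * Complex.exp (c * t * |p.1 - p.2|) * φ p.2 * φ p.1
        = (c / (2 * (t:ℂ)) * Complex.exp (c * t * |p.1 - p.2|)) * ((φ p.2:ℂ) * φ p.1) := by
          ring
      _ = (h0 c |p.1 - p.2| t + c / (2 * (t:ℂ))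
            + c^2 * ((|p.1 - p.2|:ℝ):ℂ) / 2) * ((φ p.2:ℂ) * φ p.1) := by rw [h]
      _ = _ := by rw [hc2]; ring
  have hW : (∫ p : ℝ × ℝ, (φ p.2 : ℂ) * (φ p.1 : ℂ)) = ((∫ x, φ x : ℝ) : ℂ)^2 := by
    have h1 : (∫ p : ℝ × ℝ, (φ p.2 : ℂ) * (φ p.1 : ℂ))
        = ∫ p : ℝ × ℝ, (fun x : ℝ => ((φ x : ℝ):ℂ)) p.1 * (fun y : ℝ => ((φ y : ℝ):ℂ)) p.2 :=
      integral_congr_ae (ae_of_all _ fun p => mul_comm _ _)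
    have h2 := MeasureTheory.integral_prod_mul (μ := (volume : Measure ℝ))
      (ν := (volume : Measure ℝ)) (f := fun x : ℝ => ((φ x : ℝ):ℂ))
      (g := fun y : ℝ => ((φ y : ℝ):ℂ))
    have h3 : (∫ x : ℝ, ((φ x : ℝ) : ℂ)) = ((∫ x, φ x : ℝ) : ℂ) := integral_ofReal
    rw [h1, MeasureTheory.Measure.volume_eq_prod ℝ ℝ, h2, h3, sq]
  have I2 : Integrable (fun p : ℝ × ℝ =>
      c / (2 * (t:ℂ)) * ((φ p.2 : ℂ) * (φ p.1 : ℂ))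
        - (2:ℂ)⁻¹ * (((|p.1 - p.2| : ℝ) : ℂ) * φ p.2 * φ p.1)) :=
    (Iw.const_mul _).sub (Iq3.const_mul _)
  rw [hT1, hT3, hsplit]
  rw [integral_add (intKK0 hδ hφmeas hφ hε t ht) I2,
    integral_sub (Iw.const_mul _) (Iq3.const_mul _), MeasureTheory.integral_const_mul, MeasureTheory.integral_const_mul,
    hW]
  ring

end Main


/-- low-energy expansion of `F^±(λ²) = ⟨R₀^±(λ²)φ, φ⟩` in dimension 1:
`F^±(λ²) = (±i/(2λ)) (∫φ)² + b₁ + r₁^±(λ)` with `b₁ = -½∫∫|x-y|φ(y)φ(x)` and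
`|d^k/dλ^k r₁^±(λ)| ≤ C' λ^{1-k}` for `k = 0,1,2` and `0 < λ < 1/2`. -/
theorem stmt_10 (φ : ℝ → ℝ) (C δ : ℝ) (hδ : 3 < δ)
    (hφmeas : Measurable φ)
    (hφ : ∀ x : ℝ, |φ x| ≤ C * (1 + x ^ 2) ^ (-δ / 2))
    (hint : (∫ x, φ x) ≠ 0) (ε : ℝ) (hε : ε = 1 ∨ ε = -1) :
    ∃ C' > 0, ∀ k ≤ 2, ∀ lam ∈ Set.Ioo (0 : ℝ) (1 / 2),
      ‖iteratedDeriv k (fun t : ℝ =>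
          (∫ x : ℝ, ∫ y : ℝ,
              Complex.I * ε / (2 * t) * Complex.exp (Complex.I * ε * t * |x - y|)
                * φ y * φ x)
            - Complex.I * ε / (2 * t) * ((∫ x, φ x : ℝ) : ℂ) ^ 2
            - (-(1 : ℂ) / 2 * ∫ x : ℝ, ∫ y : ℝ, ((|x - y| : ℝ) : ℂ) * φ y * φ x)) lam‖
        ≤ C' * lam ^ ((1 : ℝ) - k) := by
  have hM0 : 0 ≤ ∫ p : ℝ × ℝ, |p.1 - p.2| ^ 2 * (|φ p.2| * |φ p.1|) :=
    integral_nonneg fun p => by positivity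
  set M : ℝ := ∫ p : ℝ × ℝ, |p.1 - p.2| ^ 2 * (|φ p.2| * |φ p.1|) with hM
  refine ⟨2*M + 1, by linarith, ?_⟩
  intro k hk lam hlam
  obtain ⟨hl0, hl2⟩ := hlam
  set F := (fun t : ℝ =>
          (∫ x : ℝ, ∫ y : ℝ,
              Complex.I * ε / (2 * t) * Complex.exp (Complex.I * ε * t * |x - y|)
                * φ y * φ x)
            - Complex.I * ε / (2 * t) * ((∫ x, φ x : ℝ) : ℂ) ^ 2
            - (-(1 : ℂ) / 2 * ∫ x : ℝ, ∫ y : ℝ, ((|x - y| : ℝ) : ℂ) * φ y * φ x)) with hF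
  have hfg : ∀ t : ℝ, 0 < t → F t = ∫ p : ℝ × ℝ, KK (Complex.I * ε) φ h0 t p := by
    intro t ht
    rw [hF]
    exact feq hδ hφmeas hφ hε t ht
  have hFG : ∀ t : ℝ, 0 < t →
      F =ᶠ[nhds t] (fun u => ∫ p : ℝ × ℝ, KK (Complex.I * ε) φ h0 u p) :=
    fun t ht => Filter.eventually_of_mem (isOpen_Ioi.mem_nhds ht) (fun u hu => hfg u hu)
  have hD0 : ∀ t : ℝ, 0 < t →
      HasDerivAt (fun u => ∫ p : ℝ × ℝ, KK (Complex.I * ε) φ h0 u p)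
        (∫ p : ℝ × ℝ, KK (Complex.I * ε) φ h1 t p) t :=
    fun t ht => (derivKK0 hδ hφmeas hφ hε t ht).2
  have hD1 : ∀ t : ℝ, 0 < t →
      HasDerivAt (fun u => ∫ p : ℝ × ℝ, KK (Complex.I * ε) φ h1 u p)
        (∫ p : ℝ × ℝ, KK (Complex.I * ε) φ h2 t p) t :=
    fun t ht => derivKK1 hδ hφmeas hφ hε t ht
  have hdF : ∀ t : ℝ, 0 < t → deriv F t = ∫ p : ℝ × ℝ, KK (Complex.I * ε) φ h1 t p :=
    fun t ht => by rw [Filter.EventuallyEq.deriv_eq (hFG t ht), (hD0 t ht).deriv]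
  have hB0 : ‖∫ p : ℝ × ℝ, KK (Complex.I * ε) φ h0 lam p‖ ≤ lam/4 * M := by
    rw [hM]
    exact nbInt hδ hφmeas hφ (g := fun s => h0 (Complex.I * ε) s lam) (lam/4)
      (fun s hs => (nb0 hε lam s hl0 hs).trans (le_of_eq (by ring)))
  have hB1 : ‖∫ p : ℝ × ℝ, KK (Complex.I * ε) φ h1 lam p‖ ≤ 3/4 * M := by
    rw [hM]
    exact nbInt hδ hφmeas hφ (g := fun s => h1 (Complex.I * ε) s lam) (3/4)
      (fun s hs => nb1 hε lam s hl0 hs)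
  have hB2 : ‖∫ p : ℝ × ℝ, KK (Complex.I * ε) φ h2 lam p‖ ≤ 2/lam * M := by
    rw [hM]
    exact nbInt hδ hφmeas hφ (g := fun s => h2 (Complex.I * ε) s lam) (2/lam)
      (fun s hs => (nb2 hε lam s hl0 hs).trans (le_of_eq (by ring)))
  interval_cases k
  · rw [show ((1:ℝ) - ((0:ℕ):ℝ)) = 1 by norm_num, Real.rpow_one]
    have e0 : iteratedDeriv 0 F lam = ∫ p : ℝ × ℝ, KK (Complex.I * ε) φ h0 lam p := by
      rw [iteratedDeriv_zero]; exact hfg lam hl0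
    rw [e0]
    refine hB0.trans ?_
    nlinarith
  · rw [show ((1:ℝ) - ((1:ℕ):ℝ)) = 0 by norm_num, Real.rpow_zero, mul_one]
    have e1 : iteratedDeriv 1 F lam = ∫ p : ℝ × ℝ, KK (Complex.I * ε) φ h1 lam p := by
      rw [iteratedDeriv_one]; exact hdF lam hl0
    rw [e1]
    refine hB1.trans ?_
    nlinarith
  · rw [show ((1:ℝ) - ((2:ℕ):ℝ)) = -1 by norm_num, Real.rpow_neg_one]
    have e2 : iteratedDeriv 2 F lam = ∫ p : ℝ × ℝ, KK (Complex.I * ε) φ h2 lam p := by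
      rw [iteratedDeriv_succ, iteratedDeriv_one]
      have hev : deriv F =ᶠ[nhds lam]
          (fun u => ∫ p : ℝ × ℝ, KK (Complex.I * ε) φ h1 u p) :=
        Filter.eventually_of_mem (isOpen_Ioi.mem_nhds hl0) (fun u hu => hdF u hu)
      rw [Filter.EventuallyEq.deriv_eq hev, (hD1 lam hl0).deriv]
    rw [e2]
    refine hB2.trans ?_
    have h1 : 2/lam * M = (2*M) * lam⁻¹ := by field_simp
    rw [h1]
    gcongr
    linarith
end

section
/- Let $d=3$ and let $\varphi:\mathbb{R}^3\to\mathbb{R}$ satisfy $|\varphi(x)|\le C\langle x\rangle^{-\delta}$ with $\delta>5$. Then the kernel $K(x,y)=\sum_{\pm}\int_{\mathbb{R}^3}\int_{\mathbb{R}^3}\frac{|\varphi(x_1)||\varphi(x_2)|}{|x-x_1|\,|x_2-y|\,\langle|x-x_1|\pm|x_2-y|\rangle^3}\,dx_1\,dx_2$ is admissible: $\sup_{y}\int_{\mathbb{R}^3}K(x,y)\,dx<\infty$ and $\sup_{x}\int_{\mathbb{R}^3}K(x,y)\,dy<\infty$. -/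
open MeasureTheory Set

section Aux

open Metric Real
open scoped ENNReal
set_option maxHeartbeats 2000000

noncomputable abbrev E3 := EuclideanSpace ℝ (Fin 3)

lemma ofReal_integral_le {α : Type*} [MeasurableSpace α] {μ : Measure α} {g : α → ℝ}
    (h0 : ∀ a, 0 ≤ g a) :
    ENNReal.ofReal (∫ a, g a ∂μ) ≤ ∫⁻ a, ENNReal.ofReal (g a) ∂μ := by
  by_cases hg : Integrable g μ
  · rw [ofReal_integral_eq_lintegral_ofReal hg (ae_of_all _ h0)]
  · rw [integral_undef hg]; simp

lemma lintegral_norm_E3 (f : ℝ → ℝ≥0∞) (hf : Measurable f) :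
    ∫⁻ x : E3, f ‖x‖ = (3 : ℝ≥0∞) * volume (ball (0:E3) 1) *
      ∫⁻ r in Ioi (0:ℝ), ENNReal.ofReal (r^2) * f r := by
  have h1 : ∫⁻ x : E3, f ‖x‖ = ∫⁻ x in ({(0:E3)}ᶜ), f ‖x‖ := by
    rw [restrict_compl_singleton]
  rw [h1, ← lintegral_subtype_comap (measurableSet_singleton (0:E3)).compl (fun x => f ‖x‖)]
  have h2 := (volume.measurePreserving_homeomorphUnitSphereProd (E := E3)).lintegral_comp
    (f := fun p : (sphere (0:E3) 1) × (Ioi (0:ℝ)) => f p.2)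
    (hf.comp (measurable_subtype_coe.comp measurable_snd))
  rw [show (fun x : ({(0:E3)}ᶜ : Set E3) => f ‖x.1‖) =
      (fun x => f ((homeomorphUnitSphereProd E3 x).2 : ℝ)) from by
        funext x; simp [homeomorphUnitSphereProd, homeomorphSphereProd_apply_snd_coe], h2]
  rw [MeasureTheory.lintegral_prod (fun p : (sphere (0:E3) 1) × (Ioi (0:ℝ)) => f ↑p.2)
    ((hf.comp (measurable_subtype_coe.comp measurable_snd)).aemeasurable)]
  simp only [lintegral_const]
  have hdim : Module.finrank ℝ E3 = 3 := finrank_euclideanSpace_fin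
  rw [Measure.toSphere_apply_univ, hdim]
  have h3 : ∫⁻ y : (Ioi (0:ℝ)), f y.1 ∂(Measure.volumeIoiPow (3 - 1)) =
      ∫⁻ r in Ioi (0:ℝ), ENNReal.ofReal (r^2) * f r := by
    rw [Measure.volumeIoiPow,
      lintegral_withDensity_eq_lintegral_mul _
        (f := fun r : (Ioi (0:ℝ)) => ENNReal.ofReal (r.1 ^ (3-1)))
        (by fun_prop) (g := fun y : (Ioi (0:ℝ)) => f y.1) (hf.comp measurable_subtype_coe)]
    simp only [Pi.mul_apply]
    rw [lintegral_subtype_comap measurableSet_Ioi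
        (fun r : ℝ => ENNReal.ofReal (r ^ (3-1)) * f r)]
  rw [h3]
  ring

lemma key_pointwise {r u s : ℝ} (hs : 0 ≤ s) (hr : r ≤ |u| + s) :
    r / (1 + u^2) ^ ((3:ℝ)/2) ≤ (1+s) * (1 + u^2)⁻¹ := by
  have hq : (0:ℝ) < 1 + u^2 := by positivity
  have h1 : |u| ≤ (1 + u^2) ^ ((1:ℝ)/2) := by
    rw [show |u| = (u^2) ^ ((1:ℝ)/2) by
      rw [← Real.sqrt_eq_rpow, Real.sqrt_sq_eq_abs]]
    exact Real.rpow_le_rpow (sq_nonneg u) (by linarith) (by norm_num)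
  have h2 : (1:ℝ) ≤ (1 + u^2) ^ ((1:ℝ)/2) := by
    exact Real.one_le_rpow (by nlinarith) (by norm_num)
  have h3 : r ≤ (1+s) * (1 + u^2) ^ ((1:ℝ)/2) := by nlinarith
  have h4 : (0:ℝ) < (1 + u^2) ^ ((3:ℝ)/2) := Real.rpow_pos_of_pos hq _
  calc r / (1 + u^2) ^ ((3:ℝ)/2) ≤ ((1+s) * (1 + u^2) ^ ((1:ℝ)/2)) / (1 + u^2) ^ ((3:ℝ)/2) := by
        gcongr
    _ = (1+s) * ((1 + u^2) ^ ((1:ℝ)/2 - (3:ℝ)/2)) := by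
        rw [Real.rpow_sub hq]; ring
    _ = (1+s) * (1 + u^2)⁻¹ := by norm_num [Real.rpow_neg_one]

lemma one_dim_bound {s ε : ℝ} (hs : 0 ≤ s) (hε : ε = 1 ∨ ε = -1) :
    ∫⁻ r in Ioi (0:ℝ), ENNReal.ofReal (r / (1 + (r + ε*s)^2) ^ ((3:ℝ)/2)) ≤
      ENNReal.ofReal ((1+s) * π) := by
  have habs : ∀ r : ℝ, 0 < r → r ≤ |r + ε*s| + s := by
    intro r hr
    rcases hε with h | h <;> subst h
    · have := le_abs_self (r + 1*s); linarith
    · have := neg_abs_le (r + (-1)*s); have := le_abs_self (r + (-1)*s); linarith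
  calc ∫⁻ r in Ioi (0:ℝ), ENNReal.ofReal (r / (1 + (r + ε*s)^2) ^ ((3:ℝ)/2))
      ≤ ∫⁻ r in Ioi (0:ℝ), ENNReal.ofReal ((1+s) * (1 + (r + ε*s)^2)⁻¹) := by
        refine setLIntegral_mono (by fun_prop) (fun r hr => ?_)
        exact ENNReal.ofReal_le_ofReal (key_pointwise hs (habs r hr))
    _ ≤ ∫⁻ r : ℝ, ENNReal.ofReal ((1+s) * (1 + (r + ε*s)^2)⁻¹) :=
        setLIntegral_le_lintegral _ _
    _ = ∫⁻ r : ℝ, ENNReal.ofReal ((1+s) * (1 + r^2)⁻¹) :=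
        lintegral_add_right_eq_self (fun r => ENNReal.ofReal ((1+s) * (1 + r^2)⁻¹)) (ε*s)
    _ = ENNReal.ofReal (1+s) * ∫⁻ r : ℝ, ENNReal.ofReal ((1 + r^2)⁻¹) := by
        simp_rw [ENNReal.ofReal_mul (by linarith : (0:ℝ) ≤ 1+s)]
        rw [lintegral_const_mul' _ _ ENNReal.ofReal_ne_top]
    _ = ENNReal.ofReal (1+s) * ENNReal.ofReal π := by
        rw [← ofReal_integral_eq_lintegral_ofReal integrable_inv_one_add_sq
          (ae_of_all _ (fun x => by positivity)), integral_univ_inv_one_add_sq]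
    _ = ENNReal.ofReal ((1+s) * π) := by
        rw [← ENNReal.ofReal_mul (by linarith)]

lemma lemK {a s ε : ℝ} (ha : 0 ≤ a) (hs : 0 ≤ s) (hε : ε = 1 ∨ ε = -1) (w : E3) :
    ∫⁻ x : E3, ENNReal.ofReal (a / (‖x - w‖ * s * (1 + (‖x - w‖ + ε*s)^2) ^ ((3:ℝ)/2))) ≤
      (3 * volume (ball (0:E3) 1)) * ENNReal.ofReal (a / s * ((1+s) * π)) := by
  have htrans : ∫⁻ x : E3, ENNReal.ofReal (a / (‖x - w‖ * s * (1 + (‖x - w‖ + ε*s)^2) ^ ((3:ℝ)/2)))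
      = ∫⁻ x : E3, ENNReal.ofReal (a / (‖x‖ * s * (1 + (‖x‖ + ε*s)^2) ^ ((3:ℝ)/2))) :=
    lintegral_sub_right_eq_self
      (fun x => ENNReal.ofReal (a / (‖x‖ * s * (1 + (‖x‖ + ε*s)^2) ^ ((3:ℝ)/2)))) w
  rw [htrans, lintegral_norm_E3
    (f := fun r => ENNReal.ofReal (a / (r * s * (1 + (r + ε*s)^2) ^ ((3:ℝ)/2)))) (by fun_prop)]
  refine mul_le_mul_right ?_ _
  have hcong : ∫⁻ r in Ioi (0:ℝ),
        ENNReal.ofReal (r^2) * ENNReal.ofReal (a / (r * s * (1 + (r + ε*s)^2) ^ ((3:ℝ)/2)))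
      = ∫⁻ r in Ioi (0:ℝ),
        ENNReal.ofReal (a / s) * ENNReal.ofReal (r / (1 + (r + ε*s)^2) ^ ((3:ℝ)/2)) := by
    refine setLIntegral_congr_fun measurableSet_Ioi (fun r hr => ?_)
    have hr0 : (0:ℝ) < r := hr
    have hq : (0:ℝ) < (1 + (r + ε*s)^2) ^ ((3:ℝ)/2) := Real.rpow_pos_of_pos (by positivity) _
    rw [← ENNReal.ofReal_mul (by positivity), ← ENNReal.ofReal_mul (by positivity)]
    congr 1
    rcases eq_or_lt_of_le hs with h0 | hspos
    · rw [← h0]; simp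
    · field_simp
  rw [hcong, lintegral_const_mul' _ _ ENNReal.ofReal_ne_top,
    ENNReal.ofReal_mul (by positivity)]
  exact mul_le_mul_right (one_dim_bound hs hε) _

section Phi
variable {φ : E3 → ℝ} {C δ : ℝ}

lemma C1_lt_top (hδ : 5 < δ) (hφmeas : Measurable φ)
    (hφ : ∀ x : E3, |φ x| ≤ C * (1 + ‖x‖ ^ 2) ^ (-δ / 2)) :
    ∫⁻ x : E3, ENNReal.ofReal |φ x| < ⊤ := by
  have hfr : (Module.finrank ℝ E3 : ℝ) < δ := by
    rw [finrank_euclideanSpace_fin]; norm_num; linarith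
  have hint : Integrable (fun x : E3 => C * (1 + ‖x‖ ^ 2) ^ (-δ / 2)) :=
    (integrable_rpow_neg_one_add_norm_sq hfr).const_mul C
  calc ∫⁻ x : E3, ENNReal.ofReal |φ x|
      ≤ ∫⁻ x : E3, ENNReal.ofReal (C * (1 + ‖x‖ ^ 2) ^ (-δ / 2)) :=
        lintegral_mono (fun x => ENNReal.ofReal_le_ofReal (hφ x))
    _ = ENNReal.ofReal (∫ x : E3, C * (1 + ‖x‖ ^ 2) ^ (-δ / 2)) :=
        (ofReal_integral_eq_lintegral_ofReal hint (ae_of_all _ (fun x => by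
          have := (abs_nonneg (φ x)).trans (hφ x); exact this))).symm
    _ < ⊤ := ENNReal.ofReal_lt_top

lemma hC0 (hδ : 5 < δ) (hφ : ∀ x : E3, |φ x| ≤ C * (1 + ‖x‖ ^ 2) ^ (-δ / 2)) : 0 ≤ C := by
  have := (abs_nonneg (φ 0)).trans (hφ 0)
  simpa using this

lemma phi_le_C (hδ : 5 < δ) (hφ : ∀ x : E3, |φ x| ≤ C * (1 + ‖x‖ ^ 2) ^ (-δ / 2)) (z : E3) :
    |φ z| ≤ C := by
  refine (hφ z).trans ?_
  have h1 : (1 + ‖z‖ ^ 2) ^ (-δ / 2) ≤ 1 :=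
    Real.rpow_le_one_of_one_le_of_nonpos (by nlinarith [sq_nonneg ‖z‖]) (by linarith)
  calc C * (1 + ‖z‖ ^ 2) ^ (-δ / 2) ≤ C * 1 :=
        mul_le_mul_of_nonneg_left h1 (hC0 hδ hφ)
    _ = C := mul_one C

lemma ball_lintegral (hC : 0 ≤ C) (y : E3) :
    ∫⁻ z in ball y 1, ENNReal.ofReal (C / ‖z - y‖) ≤
      ENNReal.ofReal C * (3 * volume (ball (0:E3) 1)) := by
  set h : ℝ → ℝ≥0∞ := fun r => if r < 1 then ENNReal.ofReal (C / r) else 0 with hh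
  have hmeas : Measurable h := Measurable.ite measurableSet_Iio (by fun_prop) measurable_const
  have h1 : ∫⁻ z in ball y 1, ENNReal.ofReal (C / ‖z - y‖) = ∫⁻ z : E3, h ‖z - y‖ := by
    rw [← lintegral_indicator measurableSet_ball]
    refine lintegral_congr (fun z => ?_)
    by_cases hz : z ∈ ball y 1
    · have hn : ‖z - y‖ < 1 := by simpa [mem_ball, dist_eq_norm] using hz
      simp [indicator_of_mem hz, hh, hn]
    · have hn : ¬ ‖z - y‖ < 1 := by simpa [mem_ball, dist_eq_norm] using hz
      simp [indicator_of_notMem hz, hh, hn]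
  rw [h1, lintegral_sub_right_eq_self (fun z : E3 => h ‖z‖) y, lintegral_norm_E3 h hmeas]
  rw [mul_comm (ENNReal.ofReal C)]
  refine mul_le_mul' le_rfl ?_
  calc ∫⁻ r in Ioi (0:ℝ), ENNReal.ofReal (r^2) * h r
      ≤ ∫⁻ r in Ioi (0:ℝ), (Iio (1:ℝ)).indicator (fun _ => ENNReal.ofReal C) r := by
        refine setLIntegral_mono ((measurable_const (a := ENNReal.ofReal C)).indicator
          measurableSet_Iio) (fun r hr => ?_)
        have hr0 : (0:ℝ) < r := hr
        by_cases hlt : r < 1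
        · rw [hh]
          simp only [hlt, if_pos, indicator_of_mem (mem_Iio.2 hlt)]
          rw [← ENNReal.ofReal_mul (by positivity)]
          refine ENNReal.ofReal_le_ofReal ?_
          rw [show r^2 * (C/r) = r * C by field_simp]
          nlinarith
        · rw [hh]
          simp [hlt, indicator_of_notMem (fun h => hlt (mem_Iio.1 h))]
      _ = ENNReal.ofReal C * volume (Iio (1:ℝ) ∩ Ioi (0:ℝ)) := by
          rw [lintegral_indicator measurableSet_Iio, setLIntegral_const,
            Measure.restrict_apply measurableSet_Iio]
      _ ≤ ENNReal.ofReal C := by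
          rw [Iio_inter_Ioi, Real.volume_Ioo]
          norm_num

lemma lemN (hδ : 5 < δ) (hφmeas : Measurable φ)
    (hφ : ∀ x : E3, |φ x| ≤ C * (1 + ‖x‖ ^ 2) ^ (-δ / 2)) (y : E3) :
    ∫⁻ z : E3, ENNReal.ofReal (|φ z| * ((1 + ‖z - y‖) / ‖z - y‖)) ≤
      (∫⁻ x : E3, ENNReal.ofReal |φ x|) +
        (ENNReal.ofReal C * (3 * volume (ball (0:E3) 1)) +
          ∫⁻ x : E3, ENNReal.ofReal |φ x|) := by
  have hC := hC0 hδ hφ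
  have step1 : ∀ z : E3, ENNReal.ofReal (|φ z| * ((1 + ‖z - y‖) / ‖z - y‖)) ≤
      ENNReal.ofReal |φ z| + ENNReal.ofReal (|φ z| / ‖z - y‖) := by
    intro z
    set s := ‖z - y‖ with hsdef
    have hs : 0 ≤ s := norm_nonneg _
    have hle : |φ z| * ((1 + s) / s) ≤ |φ z| + |φ z| / s := by
      rcases eq_or_lt_of_le hs with h0 | hpos
      · rw [← h0]; simp
      · rw [le_iff_lt_or_eq]; right; field_simp; ring
    exact (ENNReal.ofReal_le_ofReal hle).trans ENNReal.ofReal_add_le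
  calc ∫⁻ z : E3, ENNReal.ofReal (|φ z| * ((1 + ‖z - y‖) / ‖z - y‖))
      ≤ ∫⁻ z : E3, (ENNReal.ofReal |φ z| + ENNReal.ofReal (|φ z| / ‖z - y‖)) :=
        lintegral_mono step1
    _ = (∫⁻ x : E3, ENNReal.ofReal |φ x|) + ∫⁻ z : E3, ENNReal.ofReal (|φ z| / ‖z - y‖) :=
        lintegral_add_left (by fun_prop) _
    _ ≤ (∫⁻ x : E3, ENNReal.ofReal |φ x|) +
        (ENNReal.ofReal C * (3 * volume (ball (0:E3) 1)) +
          ∫⁻ x : E3, ENNReal.ofReal |φ x|) := by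
        refine add_le_add_right ?_ _
        rw [← lintegral_add_compl (fun z : E3 => ENNReal.ofReal (|φ z| / ‖z - y‖))
          (measurableSet_ball (x := y) (ε := 1))]
        refine add_le_add ?_ ?_
        · calc ∫⁻ z in ball y 1, ENNReal.ofReal (|φ z| / ‖z - y‖)
              ≤ ∫⁻ z in ball y 1, ENNReal.ofReal (C / ‖z - y‖) := by
                refine setLIntegral_mono (by fun_prop) (fun z _ => ?_)
                have hzc := phi_le_C hδ hφ z
                exact ENNReal.ofReal_le_ofReal (by gcongr)
            _ ≤ ENNReal.ofReal C * (3 * volume (ball (0:E3) 1)) :=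
                ball_lintegral hC y
        · calc ∫⁻ z in (ball y 1)ᶜ, ENNReal.ofReal (|φ z| / ‖z - y‖)
              ≤ ∫⁻ z in (ball y 1)ᶜ, ENNReal.ofReal |φ z| := by
                refine setLIntegral_mono (by fun_prop) (fun z hz => ?_)
                refine ENNReal.ofReal_le_ofReal (div_le_self (abs_nonneg _) ?_)
                simpa [mem_ball, dist_eq_norm] using hz
            _ ≤ ∫⁻ x : E3, ENNReal.ofReal |φ x| := setLIntegral_le_lintegral _ _

end Phi

lemma triple_swap {F : E3 → E3 → E3 → ℝ≥0∞}
    (hF : Measurable (fun q : E3 × E3 × E3 => F q.1 q.2.1 q.2.2)) :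
    ∫⁻ x : E3, ∫⁻ x₁ : E3, ∫⁻ x₂ : E3, F x x₁ x₂ =
      ∫⁻ x₁ : E3, ∫⁻ x₂ : E3, ∫⁻ x : E3, F x x₁ x₂ := by
  have h1 : Measurable (fun p : E3 × E3 => ∫⁻ x₂ : E3, F p.1 p.2 x₂) := by
    have : Measurable (fun q : (E3 × E3) × E3 => F q.1.1 q.1.2 q.2) :=
      hF.comp (by fun_prop : Measurable (fun q : (E3 × E3) × E3 => (q.1.1, q.1.2, q.2)))
    exact this.lintegral_prod_right'
  rw [lintegral_lintegral_swap h1.aemeasurable]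
  refine lintegral_congr (fun x₁ => ?_)
  have h2 : Measurable (fun p : E3 × E3 => F p.1 x₁ p.2) :=
    hF.comp (by fun_prop : Measurable (fun p : E3 × E3 => (p.1, x₁, p.2)))
  exact lintegral_lintegral_swap h2.aemeasurable


section Core
open Metric Real
open scoped ENNReal
set_option maxHeartbeats 2000000
variable {φ : E3 → ℝ} {C δ : ℝ}

lemma core_sign (hδ : 5 < δ) (hφmeas : Measurable φ)
    (hφ : ∀ x : E3, |φ x| ≤ C * (1 + ‖x‖ ^ 2) ^ (-δ / 2))
    {ε : ℝ} (hε : ε = 1 ∨ ε = -1) (y : E3) :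
    ∫⁻ x₁ : E3, ∫⁻ x₂ : E3, ∫⁻ x : E3, ENNReal.ofReal
      (|φ x₁| * |φ x₂| / (‖x - x₁‖ * ‖x₂ - y‖ *
        (1 + (‖x - x₁‖ + ε * ‖x₂ - y‖) ^ 2) ^ ((3:ℝ)/2))) ≤
      ((3 * volume (ball (0:E3) 1)) * ENNReal.ofReal π *
        ((∫⁻ x : E3, ENNReal.ofReal |φ x|) +
          (ENNReal.ofReal C * (3 * volume (ball (0:E3) 1)) +
            ∫⁻ x : E3, ENNReal.ofReal |φ x|))) * (∫⁻ x : E3, ENNReal.ofReal |φ x|) := by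
  have hvbne : (3 : ℝ≥0∞) * volume (ball (0:E3) 1) ≠ ⊤ :=
    ENNReal.mul_ne_top (by simp) measure_ball_lt_top.ne
  have hC1ne : (∫⁻ x : E3, ENNReal.ofReal |φ x|) ≠ ⊤ := (C1_lt_top hδ hφmeas hφ).ne
  have hC2ne : ((∫⁻ x : E3, ENNReal.ofReal |φ x|) +
      (ENNReal.ofReal C * (3 * volume (ball (0:E3) 1)) +
        ∫⁻ x : E3, ENNReal.ofReal |φ x|)) ≠ ⊤ :=
    ENNReal.add_ne_top.mpr ⟨hC1ne, ENNReal.add_ne_top.mpr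
      ⟨ENNReal.mul_ne_top ENNReal.ofReal_ne_top hvbne, hC1ne⟩⟩
  calc ∫⁻ x₁ : E3, ∫⁻ x₂ : E3, ∫⁻ x : E3, ENNReal.ofReal
        (|φ x₁| * |φ x₂| / (‖x - x₁‖ * ‖x₂ - y‖ *
          (1 + (‖x - x₁‖ + ε * ‖x₂ - y‖) ^ 2) ^ ((3:ℝ)/2)))
      ≤ ∫⁻ x₁ : E3, ∫⁻ x₂ : E3, (3 * volume (ball (0:E3) 1)) *
          ENNReal.ofReal ((|φ x₁| * π) * (|φ x₂| * ((1 + ‖x₂ - y‖) / ‖x₂ - y‖))) := by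
        refine lintegral_mono fun x₁ => lintegral_mono fun x₂ => ?_
        refine (lemK (a := |φ x₁| * |φ x₂|) (s := ‖x₂ - y‖)
          (by positivity) (norm_nonneg _) hε x₁).trans (le_of_eq ?_)
        congr 1
        ring
    _ ≤ ∫⁻ x₁ : E3, ((3 * volume (ball (0:E3) 1)) * ENNReal.ofReal (|φ x₁| * π)) *
          ((∫⁻ x : E3, ENNReal.ofReal |φ x|) +
            (ENNReal.ofReal C * (3 * volume (ball (0:E3) 1)) +
              ∫⁻ x : E3, ENNReal.ofReal |φ x|)) := by
        refine lintegral_mono fun x₁ => ?_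
        have hsplit : ∀ x₂ : E3, (3 * volume (ball (0:E3) 1)) *
            ENNReal.ofReal ((|φ x₁| * π) * (|φ x₂| * ((1 + ‖x₂ - y‖) / ‖x₂ - y‖)))
            = ((3 * volume (ball (0:E3) 1)) * ENNReal.ofReal (|φ x₁| * π)) *
              ENNReal.ofReal (|φ x₂| * ((1 + ‖x₂ - y‖) / ‖x₂ - y‖)) := fun x₂ => by
          rw [ENNReal.ofReal_mul (by positivity)]; ring
        simp_rw [hsplit]
        rw [lintegral_const_mul' _ _ (ENNReal.mul_ne_top hvbne ENNReal.ofReal_ne_top)]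
        exact mul_le_mul_right (lemN hδ hφmeas hφ y) _
    _ = ((3 * volume (ball (0:E3) 1)) * ENNReal.ofReal π *
          ((∫⁻ x : E3, ENNReal.ofReal |φ x|) +
            (ENNReal.ofReal C * (3 * volume (ball (0:E3) 1)) +
              ∫⁻ x : E3, ENNReal.ofReal |φ x|))) * (∫⁻ x : E3, ENNReal.ofReal |φ x|) := by
        have hre : ∀ x₁ : E3, ((3 * volume (ball (0:E3) 1)) * ENNReal.ofReal (|φ x₁| * π)) *
            ((∫⁻ x : E3, ENNReal.ofReal |φ x|) +
              (ENNReal.ofReal C * (3 * volume (ball (0:E3) 1)) +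
                ∫⁻ x : E3, ENNReal.ofReal |φ x|))
            = ((3 * volume (ball (0:E3) 1)) * ENNReal.ofReal π *
                ((∫⁻ x : E3, ENNReal.ofReal |φ x|) +
                  (ENNReal.ofReal C * (3 * volume (ball (0:E3) 1)) +
                    ∫⁻ x : E3, ENNReal.ofReal |φ x|))) * ENNReal.ofReal |φ x₁| := fun x₁ => by
          rw [ENNReal.ofReal_mul (abs_nonneg _)]; ring
        simp_rw [hre]
        rw [lintegral_const_mul' _ _
          (ENNReal.mul_ne_top (ENNReal.mul_ne_top hvbne ENNReal.ofReal_ne_top) hC2ne)]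

lemma core_sign2 (hδ : 5 < δ) (hφmeas : Measurable φ)
    (hφ : ∀ x : E3, |φ x| ≤ C * (1 + ‖x‖ ^ 2) ^ (-δ / 2))
    {ε : ℝ} (hε : ε = 1 ∨ ε = -1) (x : E3) :
    ∫⁻ x₁ : E3, ∫⁻ x₂ : E3, ∫⁻ y : E3, ENNReal.ofReal
      (|φ x₁| * |φ x₂| / (‖x - x₁‖ * ‖x₂ - y‖ *
        (1 + (‖x - x₁‖ + ε * ‖x₂ - y‖) ^ 2) ^ ((3:ℝ)/2))) ≤
      ((3 * volume (ball (0:E3) 1)) * ENNReal.ofReal π *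
        ((∫⁻ x : E3, ENNReal.ofReal |φ x|) +
          (ENNReal.ofReal C * (3 * volume (ball (0:E3) 1)) +
            ∫⁻ x : E3, ENNReal.ofReal |φ x|))) * (∫⁻ x : E3, ENNReal.ofReal |φ x|) := by
  have hvbne : (3 : ℝ≥0∞) * volume (ball (0:E3) 1) ≠ ⊤ :=
    ENNReal.mul_ne_top (by simp) measure_ball_lt_top.ne
  have hC1ne : (∫⁻ x : E3, ENNReal.ofReal |φ x|) ≠ ⊤ := (C1_lt_top hδ hφmeas hφ).ne
  calc ∫⁻ x₁ : E3, ∫⁻ x₂ : E3, ∫⁻ y : E3, ENNReal.ofReal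
        (|φ x₁| * |φ x₂| / (‖x - x₁‖ * ‖x₂ - y‖ *
          (1 + (‖x - x₁‖ + ε * ‖x₂ - y‖) ^ 2) ^ ((3:ℝ)/2)))
      ≤ ∫⁻ x₁ : E3, ∫⁻ x₂ : E3, (3 * volume (ball (0:E3) 1)) *
          (ENNReal.ofReal (π * (|φ x₁| * ((1 + ‖x - x₁‖) / ‖x - x₁‖))) *
            ENNReal.ofReal |φ x₂|) := by
        refine lintegral_mono fun x₁ => lintegral_mono fun x₂ => ?_
        have hcong : ∫⁻ y : E3, ENNReal.ofReal
            (|φ x₁| * |φ x₂| / (‖x - x₁‖ * ‖x₂ - y‖ *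
              (1 + (‖x - x₁‖ + ε * ‖x₂ - y‖) ^ 2) ^ ((3:ℝ)/2)))
            = ∫⁻ y : E3, ENNReal.ofReal
            (|φ x₁| * |φ x₂| / (‖y - x₂‖ * ‖x - x₁‖ *
              (1 + (‖y - x₂‖ + ε * ‖x - x₁‖) ^ 2) ^ ((3:ℝ)/2))) := by
          refine lintegral_congr (fun y => ?_)
          congr 2
          rw [norm_sub_rev x₂ y,
            show (‖x - x₁‖ + ε * ‖y - x₂‖) ^ 2 = (‖y - x₂‖ + ε * ‖x - x₁‖) ^ 2 from by
              rcases hε with h | h <;> subst h <;> ring,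
            mul_comm ‖x - x₁‖ ‖y - x₂‖]
        rw [hcong]
        refine (lemK (a := |φ x₁| * |φ x₂|) (s := ‖x - x₁‖)
          (by positivity) (norm_nonneg _) hε x₂).trans (le_of_eq ?_)
        rw [show |φ x₁| * |φ x₂| / ‖x - x₁‖ * ((1 + ‖x - x₁‖) * π)
            = (π * (|φ x₁| * ((1 + ‖x - x₁‖) / ‖x - x₁‖))) * |φ x₂| from by ring,
          ENNReal.ofReal_mul (by positivity)]
    _ = ∫⁻ x₁ : E3, ((3 * volume (ball (0:E3) 1)) *
          ENNReal.ofReal (π * (|φ x₁| * ((1 + ‖x - x₁‖) / ‖x - x₁‖)))) *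
          (∫⁻ z : E3, ENNReal.ofReal |φ z|) := by
        refine lintegral_congr fun x₁ => ?_
        simp_rw [← mul_assoc]
        rw [lintegral_const_mul' _ _ (ENNReal.mul_ne_top hvbne ENNReal.ofReal_ne_top)]
    _ ≤ ((3 * volume (ball (0:E3) 1)) * ENNReal.ofReal π *
          (∫⁻ x : E3, ENNReal.ofReal |φ x|)) *
          (∫⁻ x₁ : E3, ENNReal.ofReal (|φ x₁| * ((1 + ‖x₁ - x‖) / ‖x₁ - x‖))) := by
        have hre : ∀ x₁ : E3, ((3 * volume (ball (0:E3) 1)) *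
            ENNReal.ofReal (π * (|φ x₁| * ((1 + ‖x - x₁‖) / ‖x - x₁‖)))) *
            (∫⁻ z : E3, ENNReal.ofReal |φ z|)
            = ((3 * volume (ball (0:E3) 1)) * ENNReal.ofReal π *
                (∫⁻ z : E3, ENNReal.ofReal |φ z|)) *
              ENNReal.ofReal (|φ x₁| * ((1 + ‖x₁ - x‖) / ‖x₁ - x‖)) := fun x₁ => by
          rw [ENNReal.ofReal_mul Real.pi_pos.le, norm_sub_rev x x₁]; ring
        simp_rw [hre]
        rw [lintegral_const_mul' _ _
          (ENNReal.mul_ne_top (ENNReal.mul_ne_top hvbne ENNReal.ofReal_ne_top) hC1ne)]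
    _ ≤ ((3 * volume (ball (0:E3) 1)) * ENNReal.ofReal π *
          (∫⁻ x : E3, ENNReal.ofReal |φ x|)) *
          ((∫⁻ x : E3, ENNReal.ofReal |φ x|) +
            (ENNReal.ofReal C * (3 * volume (ball (0:E3) 1)) +
              ∫⁻ x : E3, ENNReal.ofReal |φ x|)) :=
        mul_le_mul_right (lemN hδ hφmeas hφ x) _
    _ = ((3 * volume (ball (0:E3) 1)) * ENNReal.ofReal π *
        ((∫⁻ x : E3, ENNReal.ofReal |φ x|) +
          (ENNReal.ofReal C * (3 * volume (ball (0:E3) 1)) +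
            ∫⁻ x : E3, ENNReal.ofReal |φ x|))) * (∫⁻ x : E3, ENNReal.ofReal |φ x|) := by
        ring

end Core

end Aux

open Metric Real
open scoped ENNReal
set_option maxHeartbeats 2000000

/-- admissibility of the 3d low-energy kernel
`K(x,y) = ∑_± ∫∫ |φ(x₁)||φ(x₂)| / (|x-x₁||x₂-y|⟨|x-x₁|±|x₂-y|⟩³) dx₁ dx₂`. -/
theorem stmt_12 (φ : EuclideanSpace ℝ (Fin 3) → ℝ) (C δ : ℝ) (hδ : 5 < δ)
    (hφmeas : Measurable φ)
    (hφ : ∀ x : EuclideanSpace ℝ (Fin 3), |φ x| ≤ C * (1 + ‖x‖ ^ 2) ^ (-δ / 2)) :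
    ∃ B : ℝ,
      (∀ y : EuclideanSpace ℝ (Fin 3),
        (∫ x : EuclideanSpace ℝ (Fin 3),
          ∫ x₁ : EuclideanSpace ℝ (Fin 3), ∫ x₂ : EuclideanSpace ℝ (Fin 3),
            (|φ x₁| * |φ x₂| / (‖x - x₁‖ * ‖x₂ - y‖ *
                (1 + (‖x - x₁‖ + ‖x₂ - y‖) ^ 2) ^ ((3 : ℝ) / 2))
              + |φ x₁| * |φ x₂| / (‖x - x₁‖ * ‖x₂ - y‖ *
                (1 + (‖x - x₁‖ - ‖x₂ - y‖) ^ 2) ^ ((3 : ℝ) / 2)))) ≤ B) ∧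
      (∀ x : EuclideanSpace ℝ (Fin 3),
        (∫ y : EuclideanSpace ℝ (Fin 3),
          ∫ x₁ : EuclideanSpace ℝ (Fin 3), ∫ x₂ : EuclideanSpace ℝ (Fin 3),
            (|φ x₁| * |φ x₂| / (‖x - x₁‖ * ‖x₂ - y‖ *
                (1 + (‖x - x₁‖ + ‖x₂ - y‖) ^ 2) ^ ((3 : ℝ) / 2))
              + |φ x₁| * |φ x₂| / (‖x - x₁‖ * ‖x₂ - y‖ *
                (1 + (‖x - x₁‖ - ‖x₂ - y‖) ^ 2) ^ ((3 : ℝ) / 2)))) ≤ B) := by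
  classical
  have hvbne : (3 : ℝ≥0∞) * volume (ball (0:E3) 1) ≠ ⊤ :=
    ENNReal.mul_ne_top (by simp) measure_ball_lt_top.ne
  have hC1ne : (∫⁻ x : E3, ENNReal.ofReal |φ x|) ≠ ⊤ := (C1_lt_top hδ hφmeas hφ).ne
  have hC2ne : ((∫⁻ x : E3, ENNReal.ofReal |φ x|) +
      (ENNReal.ofReal C * (3 * volume (ball (0:E3) 1)) +
        ∫⁻ x : E3, ENNReal.ofReal |φ x|)) ≠ ⊤ :=
    ENNReal.add_ne_top.mpr ⟨hC1ne, ENNReal.add_ne_top.mpr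
      ⟨ENNReal.mul_ne_top ENNReal.ofReal_ne_top hvbne, hC1ne⟩⟩
  set Λ : ℝ≥0∞ := ((3 * volume (ball (0:E3) 1)) * ENNReal.ofReal Real.pi *
      ((∫⁻ x : E3, ENNReal.ofReal |φ x|) +
        (ENNReal.ofReal C * (3 * volume (ball (0:E3) 1)) +
          ∫⁻ x : E3, ENNReal.ofReal |φ x|))) * (∫⁻ x : E3, ENNReal.ofReal |φ x|) with hΛ
  have hΛne : (2 : ℝ≥0∞) * Λ ≠ ⊤ := by
    refine ENNReal.mul_ne_top (by simp) ?_
    rw [hΛ]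
    exact ENNReal.mul_ne_top (ENNReal.mul_ne_top
      (ENNReal.mul_ne_top hvbne ENNReal.ofReal_ne_top) hC2ne) hC1ne
  refine ⟨((2 : ℝ≥0∞) * Λ).toReal, ?_, ?_⟩
  · -- first bound : sup over y
    intro y
    have key1 : (∫⁻ x : E3, ∫⁻ x₁ : E3, ∫⁻ x₂ : E3,
        ENNReal.ofReal
          (|φ x₁| * |φ x₂| / (‖x - x₁‖ * ‖x₂ - y‖ *
              (1 + (‖x - x₁‖ + ‖x₂ - y‖) ^ 2) ^ ((3 : ℝ) / 2))
            + |φ x₁| * |φ x₂| / (‖x - x₁‖ * ‖x₂ - y‖ *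
              (1 + (‖x - x₁‖ - ‖x₂ - y‖) ^ 2) ^ ((3 : ℝ) / 2)))) ≤ 2 * Λ := by
      have hA : (∫⁻ x : E3, ∫⁻ x₁ : E3, ∫⁻ x₂ : E3,
          ENNReal.ofReal (|φ x₁| * |φ x₂| / (‖x - x₁‖ * ‖x₂ - y‖ *
            (1 + (‖x - x₁‖ + ‖x₂ - y‖) ^ 2) ^ ((3 : ℝ) / 2)))) ≤ Λ := by
        rw [triple_swap (by fun_prop)]
        have h := core_sign hδ hφmeas hφ (Or.inl rfl) y
        simp only [one_mul] at h
        exact h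
      have hB : (∫⁻ x : E3, ∫⁻ x₁ : E3, ∫⁻ x₂ : E3,
          ENNReal.ofReal (|φ x₁| * |φ x₂| / (‖x - x₁‖ * ‖x₂ - y‖ *
            (1 + (‖x - x₁‖ - ‖x₂ - y‖) ^ 2) ^ ((3 : ℝ) / 2)))) ≤ Λ := by
        rw [triple_swap (by fun_prop)]
        have h := core_sign hδ hφmeas hφ (Or.inr rfl) y
        simp only [neg_one_mul, ← sub_eq_add_neg] at h
        exact h
      calc (∫⁻ x : E3, ∫⁻ x₁ : E3, ∫⁻ x₂ : E3,
          ENNReal.ofReal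
            (|φ x₁| * |φ x₂| / (‖x - x₁‖ * ‖x₂ - y‖ *
                (1 + (‖x - x₁‖ + ‖x₂ - y‖) ^ 2) ^ ((3 : ℝ) / 2))
              + |φ x₁| * |φ x₂| / (‖x - x₁‖ * ‖x₂ - y‖ *
                (1 + (‖x - x₁‖ - ‖x₂ - y‖) ^ 2) ^ ((3 : ℝ) / 2))))
          ≤ ∫⁻ x : E3, ∫⁻ x₁ : E3, ∫⁻ x₂ : E3,
            (ENNReal.ofReal (|φ x₁| * |φ x₂| / (‖x - x₁‖ * ‖x₂ - y‖ *
                (1 + (‖x - x₁‖ + ‖x₂ - y‖) ^ 2) ^ ((3 : ℝ) / 2)))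
              + ENNReal.ofReal (|φ x₁| * |φ x₂| / (‖x - x₁‖ * ‖x₂ - y‖ *
                (1 + (‖x - x₁‖ - ‖x₂ - y‖) ^ 2) ^ ((3 : ℝ) / 2)))) :=
          lintegral_mono fun x => lintegral_mono fun x₁ => lintegral_mono fun x₂ =>
            ENNReal.ofReal_add_le
        _ = (∫⁻ x : E3, ∫⁻ x₁ : E3, ∫⁻ x₂ : E3,
              ENNReal.ofReal (|φ x₁| * |φ x₂| / (‖x - x₁‖ * ‖x₂ - y‖ *
                (1 + (‖x - x₁‖ + ‖x₂ - y‖) ^ 2) ^ ((3 : ℝ) / 2))))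
            + (∫⁻ x : E3, ∫⁻ x₁ : E3, ∫⁻ x₂ : E3,
              ENNReal.ofReal (|φ x₁| * |φ x₂| / (‖x - x₁‖ * ‖x₂ - y‖ *
                (1 + (‖x - x₁‖ - ‖x₂ - y‖) ^ 2) ^ ((3 : ℝ) / 2)))) := by
            rw [show (∫⁻ x : E3, ∫⁻ x₁ : E3, ∫⁻ x₂ : E3, (ENNReal.ofReal _ + ENNReal.ofReal _))
              = _ from rfl]
            have s2 : ∀ x x₁ : E3, (∫⁻ x₂ : E3,
                (ENNReal.ofReal (|φ x₁| * |φ x₂| / (‖x - x₁‖ * ‖x₂ - y‖ *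
                    (1 + (‖x - x₁‖ + ‖x₂ - y‖) ^ 2) ^ ((3 : ℝ) / 2)))
                  + ENNReal.ofReal (|φ x₁| * |φ x₂| / (‖x - x₁‖ * ‖x₂ - y‖ *
                    (1 + (‖x - x₁‖ - ‖x₂ - y‖) ^ 2) ^ ((3 : ℝ) / 2)))))
                = (∫⁻ x₂ : E3,
                  ENNReal.ofReal (|φ x₁| * |φ x₂| / (‖x - x₁‖ * ‖x₂ - y‖ *
                    (1 + (‖x - x₁‖ + ‖x₂ - y‖) ^ 2) ^ ((3 : ℝ) / 2))))
                  + ∫⁻ x₂ : E3,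
                  ENNReal.ofReal (|φ x₁| * |φ x₂| / (‖x - x₁‖ * ‖x₂ - y‖ *
                    (1 + (‖x - x₁‖ - ‖x₂ - y‖) ^ 2) ^ ((3 : ℝ) / 2))) := fun x x₁ =>
              lintegral_add_left (by fun_prop) _
            simp_rw [s2]
            have s1 : ∀ x : E3, (∫⁻ x₁ : E3,
                ((∫⁻ x₂ : E3, ENNReal.ofReal (|φ x₁| * |φ x₂| / (‖x - x₁‖ * ‖x₂ - y‖ *
                    (1 + (‖x - x₁‖ + ‖x₂ - y‖) ^ 2) ^ ((3 : ℝ) / 2))))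
                  + ∫⁻ x₂ : E3, ENNReal.ofReal (|φ x₁| * |φ x₂| / (‖x - x₁‖ * ‖x₂ - y‖ *
                    (1 + (‖x - x₁‖ - ‖x₂ - y‖) ^ 2) ^ ((3 : ℝ) / 2)))))
                = (∫⁻ x₁ : E3, ∫⁻ x₂ : E3,
                    ENNReal.ofReal (|φ x₁| * |φ x₂| / (‖x - x₁‖ * ‖x₂ - y‖ *
                    (1 + (‖x - x₁‖ + ‖x₂ - y‖) ^ 2) ^ ((3 : ℝ) / 2))))
                  + ∫⁻ x₁ : E3, ∫⁻ x₂ : E3,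
                    ENNReal.ofReal (|φ x₁| * |φ x₂| / (‖x - x₁‖ * ‖x₂ - y‖ *
                    (1 + (‖x - x₁‖ - ‖x₂ - y‖) ^ 2) ^ ((3 : ℝ) / 2))) := fun x =>
              lintegral_add_left ((by fun_prop : Measurable (fun p : E3 × E3 =>
                ENNReal.ofReal (|φ p.1| * |φ p.2| / (‖x - p.1‖ * ‖p.2 - y‖ *
                  (1 + (‖x - p.1‖ + ‖p.2 - y‖) ^ 2) ^ ((3 : ℝ) / 2))))).lintegral_prod_right') _
            simp_rw [s1]
            exact lintegral_add_left (((by fun_prop : Measurable (fun p : (E3 × E3) × E3 =>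
              ENNReal.ofReal (|φ p.1.2| * |φ p.2| / (‖p.1.1 - p.1.2‖ * ‖p.2 - y‖ *
                (1 + (‖p.1.1 - p.1.2‖ + ‖p.2 - y‖) ^ 2) ^ ((3 : ℝ) / 2))))).lintegral_prod_right').lintegral_prod_right') _
        _ ≤ Λ + Λ := add_le_add hA hB
        _ = 2 * Λ := (two_mul Λ).symm
    -- now the Bochner part
    have hpos : ∀ x x₁ x₂ : E3, 0 ≤
        (|φ x₁| * |φ x₂| / (‖x - x₁‖ * ‖x₂ - y‖ *
            (1 + (‖x - x₁‖ + ‖x₂ - y‖) ^ 2) ^ ((3 : ℝ) / 2))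
          + |φ x₁| * |φ x₂| / (‖x - x₁‖ * ‖x₂ - y‖ *
            (1 + (‖x - x₁‖ - ‖x₂ - y‖) ^ 2) ^ ((3 : ℝ) / 2))) := fun x x₁ x₂ => by positivity
    have h2 : ∀ x x₁ : E3, 0 ≤ ∫ x₂ : E3,
        (|φ x₁| * |φ x₂| / (‖x - x₁‖ * ‖x₂ - y‖ *
            (1 + (‖x - x₁‖ + ‖x₂ - y‖) ^ 2) ^ ((3 : ℝ) / 2))
          + |φ x₁| * |φ x₂| / (‖x - x₁‖ * ‖x₂ - y‖ *
            (1 + (‖x - x₁‖ - ‖x₂ - y‖) ^ 2) ^ ((3 : ℝ) / 2))) := fun x x₁ =>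
      integral_nonneg (fun x₂ => hpos x x₁ x₂)
    have h1 : ∀ x : E3, 0 ≤ ∫ x₁ : E3, ∫ x₂ : E3,
        (|φ x₁| * |φ x₂| / (‖x - x₁‖ * ‖x₂ - y‖ *
            (1 + (‖x - x₁‖ + ‖x₂ - y‖) ^ 2) ^ ((3 : ℝ) / 2))
          + |φ x₁| * |φ x₂| / (‖x - x₁‖ * ‖x₂ - y‖ *
            (1 + (‖x - x₁‖ - ‖x₂ - y‖) ^ 2) ^ ((3 : ℝ) / 2))) := fun x =>
      integral_nonneg (fun x₁ => h2 x x₁)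
    have hchain : ENNReal.ofReal (∫ x : E3, ∫ x₁ : E3, ∫ x₂ : E3,
        (|φ x₁| * |φ x₂| / (‖x - x₁‖ * ‖x₂ - y‖ *
            (1 + (‖x - x₁‖ + ‖x₂ - y‖) ^ 2) ^ ((3 : ℝ) / 2))
          + |φ x₁| * |φ x₂| / (‖x - x₁‖ * ‖x₂ - y‖ *
            (1 + (‖x - x₁‖ - ‖x₂ - y‖) ^ 2) ^ ((3 : ℝ) / 2)))) ≤ 2 * Λ := by
      refine le_trans ?_ key1
      refine (ofReal_integral_le h1).trans (lintegral_mono fun x => ?_)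
      refine (ofReal_integral_le (h2 x)).trans (lintegral_mono fun x₁ => ?_)
      exact ofReal_integral_le (fun x₂ => hpos x x₁ x₂)
    have := ENNReal.toReal_mono hΛne hchain
    rwa [ENNReal.toReal_ofReal (integral_nonneg h1)] at this
  · -- second bound : sup over x
    intro x
    have key2 : (∫⁻ y : E3, ∫⁻ x₁ : E3, ∫⁻ x₂ : E3,
        ENNReal.ofReal
          (|φ x₁| * |φ x₂| / (‖x - x₁‖ * ‖x₂ - y‖ *
              (1 + (‖x - x₁‖ + ‖x₂ - y‖) ^ 2) ^ ((3 : ℝ) / 2))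
            + |φ x₁| * |φ x₂| / (‖x - x₁‖ * ‖x₂ - y‖ *
              (1 + (‖x - x₁‖ - ‖x₂ - y‖) ^ 2) ^ ((3 : ℝ) / 2)))) ≤ 2 * Λ := by
      have hA : (∫⁻ y : E3, ∫⁻ x₁ : E3, ∫⁻ x₂ : E3,
          ENNReal.ofReal (|φ x₁| * |φ x₂| / (‖x - x₁‖ * ‖x₂ - y‖ *
            (1 + (‖x - x₁‖ + ‖x₂ - y‖) ^ 2) ^ ((3 : ℝ) / 2)))) ≤ Λ := by
        rw [triple_swap (by fun_prop)]
        have h := core_sign2 hδ hφmeas hφ (Or.inl rfl) x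
        simp only [one_mul] at h
        exact h
      have hB : (∫⁻ y : E3, ∫⁻ x₁ : E3, ∫⁻ x₂ : E3,
          ENNReal.ofReal (|φ x₁| * |φ x₂| / (‖x - x₁‖ * ‖x₂ - y‖ *
            (1 + (‖x - x₁‖ - ‖x₂ - y‖) ^ 2) ^ ((3 : ℝ) / 2)))) ≤ Λ := by
        rw [triple_swap (by fun_prop)]
        have h := core_sign2 hδ hφmeas hφ (Or.inr rfl) x
        simp only [neg_one_mul, ← sub_eq_add_neg] at h
        exact h
      calc (∫⁻ y : E3, ∫⁻ x₁ : E3, ∫⁻ x₂ : E3,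
          ENNReal.ofReal
            (|φ x₁| * |φ x₂| / (‖x - x₁‖ * ‖x₂ - y‖ *
                (1 + (‖x - x₁‖ + ‖x₂ - y‖) ^ 2) ^ ((3 : ℝ) / 2))
              + |φ x₁| * |φ x₂| / (‖x - x₁‖ * ‖x₂ - y‖ *
                (1 + (‖x - x₁‖ - ‖x₂ - y‖) ^ 2) ^ ((3 : ℝ) / 2))))
          ≤ ∫⁻ y : E3, ∫⁻ x₁ : E3, ∫⁻ x₂ : E3,
            (ENNReal.ofReal (|φ x₁| * |φ x₂| / (‖x - x₁‖ * ‖x₂ - y‖ *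
                (1 + (‖x - x₁‖ + ‖x₂ - y‖) ^ 2) ^ ((3 : ℝ) / 2)))
              + ENNReal.ofReal (|φ x₁| * |φ x₂| / (‖x - x₁‖ * ‖x₂ - y‖ *
                (1 + (‖x - x₁‖ - ‖x₂ - y‖) ^ 2) ^ ((3 : ℝ) / 2)))) :=
          lintegral_mono fun y => lintegral_mono fun x₁ => lintegral_mono fun x₂ =>
            ENNReal.ofReal_add_le
        _ = (∫⁻ y : E3, ∫⁻ x₁ : E3, ∫⁻ x₂ : E3,
              ENNReal.ofReal (|φ x₁| * |φ x₂| / (‖x - x₁‖ * ‖x₂ - y‖ *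
                (1 + (‖x - x₁‖ + ‖x₂ - y‖) ^ 2) ^ ((3 : ℝ) / 2))))
            + (∫⁻ y : E3, ∫⁻ x₁ : E3, ∫⁻ x₂ : E3,
              ENNReal.ofReal (|φ x₁| * |φ x₂| / (‖x - x₁‖ * ‖x₂ - y‖ *
                (1 + (‖x - x₁‖ - ‖x₂ - y‖) ^ 2) ^ ((3 : ℝ) / 2)))) := by
            have s2 : ∀ y x₁ : E3, (∫⁻ x₂ : E3,
                (ENNReal.ofReal (|φ x₁| * |φ x₂| / (‖x - x₁‖ * ‖x₂ - y‖ *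
                    (1 + (‖x - x₁‖ + ‖x₂ - y‖) ^ 2) ^ ((3 : ℝ) / 2)))
                  + ENNReal.ofReal (|φ x₁| * |φ x₂| / (‖x - x₁‖ * ‖x₂ - y‖ *
                    (1 + (‖x - x₁‖ - ‖x₂ - y‖) ^ 2) ^ ((3 : ℝ) / 2)))))
                = (∫⁻ x₂ : E3,
                  ENNReal.ofReal (|φ x₁| * |φ x₂| / (‖x - x₁‖ * ‖x₂ - y‖ *
                    (1 + (‖x - x₁‖ + ‖x₂ - y‖) ^ 2) ^ ((3 : ℝ) / 2))))
                  + ∫⁻ x₂ : E3,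
                  ENNReal.ofReal (|φ x₁| * |φ x₂| / (‖x - x₁‖ * ‖x₂ - y‖ *
                    (1 + (‖x - x₁‖ - ‖x₂ - y‖) ^ 2) ^ ((3 : ℝ) / 2))) := fun y x₁ =>
              lintegral_add_left (by fun_prop) _
            simp_rw [s2]
            have s1 : ∀ y : E3, (∫⁻ x₁ : E3,
                ((∫⁻ x₂ : E3, ENNReal.ofReal (|φ x₁| * |φ x₂| / (‖x - x₁‖ * ‖x₂ - y‖ *
                    (1 + (‖x - x₁‖ + ‖x₂ - y‖) ^ 2) ^ ((3 : ℝ) / 2))))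
                  + ∫⁻ x₂ : E3, ENNReal.ofReal (|φ x₁| * |φ x₂| / (‖x - x₁‖ * ‖x₂ - y‖ *
                    (1 + (‖x - x₁‖ - ‖x₂ - y‖) ^ 2) ^ ((3 : ℝ) / 2)))))
                = (∫⁻ x₁ : E3, ∫⁻ x₂ : E3,
                    ENNReal.ofReal (|φ x₁| * |φ x₂| / (‖x - x₁‖ * ‖x₂ - y‖ *
                    (1 + (‖x - x₁‖ + ‖x₂ - y‖) ^ 2) ^ ((3 : ℝ) / 2))))
                  + ∫⁻ x₁ : E3, ∫⁻ x₂ : E3,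
                    ENNReal.ofReal (|φ x₁| * |φ x₂| / (‖x - x₁‖ * ‖x₂ - y‖ *
                    (1 + (‖x - x₁‖ - ‖x₂ - y‖) ^ 2) ^ ((3 : ℝ) / 2))) := fun y =>
              lintegral_add_left ((by fun_prop : Measurable (fun p : E3 × E3 =>
                ENNReal.ofReal (|φ p.1| * |φ p.2| / (‖x - p.1‖ * ‖p.2 - y‖ *
                  (1 + (‖x - p.1‖ + ‖p.2 - y‖) ^ 2) ^ ((3 : ℝ) / 2))))).lintegral_prod_right') _
            simp_rw [s1]
            exact lintegral_add_left (((by fun_prop : Measurable (fun p : (E3 × E3) × E3 =>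
              ENNReal.ofReal (|φ p.1.2| * |φ p.2| / (‖x - p.1.2‖ * ‖p.2 - p.1.1‖ *
                (1 + (‖x - p.1.2‖ + ‖p.2 - p.1.1‖) ^ 2) ^ ((3 : ℝ) / 2))))).lintegral_prod_right').lintegral_prod_right') _
        _ ≤ Λ + Λ := add_le_add hA hB
        _ = 2 * Λ := (two_mul Λ).symm
    have hpos : ∀ y x₁ x₂ : E3, 0 ≤
        (|φ x₁| * |φ x₂| / (‖x - x₁‖ * ‖x₂ - y‖ *
            (1 + (‖x - x₁‖ + ‖x₂ - y‖) ^ 2) ^ ((3 : ℝ) / 2))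
          + |φ x₁| * |φ x₂| / (‖x - x₁‖ * ‖x₂ - y‖ *
            (1 + (‖x - x₁‖ - ‖x₂ - y‖) ^ 2) ^ ((3 : ℝ) / 2))) := fun y x₁ x₂ => by positivity
    have h2 : ∀ y x₁ : E3, 0 ≤ ∫ x₂ : E3,
        (|φ x₁| * |φ x₂| / (‖x - x₁‖ * ‖x₂ - y‖ *
            (1 + (‖x - x₁‖ + ‖x₂ - y‖) ^ 2) ^ ((3 : ℝ) / 2))
          + |φ x₁| * |φ x₂| / (‖x - x₁‖ * ‖x₂ - y‖ *
            (1 + (‖x - x₁‖ - ‖x₂ - y‖) ^ 2) ^ ((3 : ℝ) / 2))) := fun y x₁ =>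
      integral_nonneg (fun x₂ => hpos y x₁ x₂)
    have h1 : ∀ y : E3, 0 ≤ ∫ x₁ : E3, ∫ x₂ : E3,
        (|φ x₁| * |φ x₂| / (‖x - x₁‖ * ‖x₂ - y‖ *
            (1 + (‖x - x₁‖ + ‖x₂ - y‖) ^ 2) ^ ((3 : ℝ) / 2))
          + |φ x₁| * |φ x₂| / (‖x - x₁‖ * ‖x₂ - y‖ *
            (1 + (‖x - x₁‖ - ‖x₂ - y‖) ^ 2) ^ ((3 : ℝ) / 2))) := fun y =>
      integral_nonneg (fun x₁ => h2 y x₁)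
    have hchain : ENNReal.ofReal (∫ y : E3, ∫ x₁ : E3, ∫ x₂ : E3,
        (|φ x₁| * |φ x₂| / (‖x - x₁‖ * ‖x₂ - y‖ *
            (1 + (‖x - x₁‖ + ‖x₂ - y‖) ^ 2) ^ ((3 : ℝ) / 2))
          + |φ x₁| * |φ x₂| / (‖x - x₁‖ * ‖x₂ - y‖ *
            (1 + (‖x - x₁‖ - ‖x₂ - y‖) ^ 2) ^ ((3 : ℝ) / 2)))) ≤ 2 * Λ := by
      refine le_trans ?_ key2
      refine (ofReal_integral_le h1).trans (lintegral_mono fun y => ?_)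
      refine (ofReal_integral_le (h2 y)).trans (lintegral_mono fun x₁ => ?_)
      exact ofReal_integral_le (fun x₂ => hpos y x₁ x₂)
    have := ENNReal.toReal_mono hΛne hchain
    rwa [ENNReal.toReal_ofReal (integral_nonneg h1)] at this
end

section
/- For $d\ge 1$ and $N\ge 2$, the kernel $\tilde k(\theta_1,\theta_2)=\frac{1}{\sqrt{\theta_1\theta_2}\langle\theta_1-\theta_2\rangle^2}+\frac{1}{\langle\theta_1\rangle\langle\theta_1+\theta_2\rangle^{2+\epsilon}}$ (with any fixed $\epsilon>0$) satisfies $\sup_{s\ge 0}\int_0^\infty\int_0^\infty \tilde k(\theta_1,\theta_2)\,\langle\theta_1\rangle\,\langle\theta_2-s\rangle^{-N}\,d\theta_1\,d\theta_2<\infty$. -/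
open MeasureTheory Set Real

namespace Stmt14

lemma intA (x : ℝ) : Integrable (fun θ : ℝ => (1 + (θ - x)^2)⁻¹) := by
  simpa using integrable_inv_one_add_sq.comp_sub_right x

lemma intA_total (x : ℝ) : ∫ θ : ℝ, (1 + (θ - x)^2)⁻¹ = π := by
  rw [integral_sub_right_eq_self (fun θ : ℝ => (1 + θ^2)⁻¹) x]
  exact integral_univ_inv_one_add_sq

lemma intA_set_le (x : ℝ) (S : Set ℝ) : ∫ θ in S, (1 + (θ - x)^2)⁻¹ ≤ π := by
  rw [← intA_total x]
  exact setIntegral_le_integral (intA x) (Filter.Eventually.of_forall fun θ => by positivity)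

lemma measA (x : ℝ) : Measurable (fun θ : ℝ => (1 + (θ - x)^2)⁻¹) := by fun_prop

lemma A_le_one (x θ : ℝ) : (1 + (θ - x)^2)⁻¹ ≤ 1 := by
  rw [inv_le_one_iff₀]; right; nlinarith [sq_nonneg (θ - x)]

lemma A_pos (x θ : ℝ) : 0 < (1 + (θ - x)^2)⁻¹ := by positivity

/-- integrability of θ^{-1/2} on (0,c] -/
lemma invsqrt_int (c : ℝ) (hc : 0 ≤ c) :
    IntegrableOn (fun θ : ℝ => (Real.sqrt θ)⁻¹) (Set.Ioc 0 c) := by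
  have h := intervalIntegral.intervalIntegrable_rpow' (a := 0) (b := c)
    (by norm_num : (-1:ℝ) < -(1/2))
  rw [intervalIntegrable_iff, uIoc_of_le hc] at h
  refine h.congr_fun (fun θ hθ => ?_) measurableSet_Ioc
  show θ ^ (-(1/2) : ℝ) = (Real.sqrt θ)⁻¹
  rw [Real.rpow_neg hθ.1.le, Real.sqrt_eq_rpow]

lemma invsqrt_val (c : ℝ) (hc : 0 ≤ c) :
    ∫ θ in Set.Ioc (0:ℝ) c, (Real.sqrt θ)⁻¹ = 2 * Real.sqrt c := by
  rw [← intervalIntegral.integral_of_le hc]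
  rw [intervalIntegral.integral_congr (g := fun θ => θ ^ (-(1/2) : ℝ)) (fun θ hθ => by
    rw [Set.uIcc_of_le hc] at hθ
    show (Real.sqrt θ)⁻¹ = θ ^ (-(1/2) : ℝ)
    rw [Real.rpow_neg hθ.1, Real.sqrt_eq_rpow])]
  rw [integral_rpow (Or.inl (by norm_num))]
  rw [Real.zero_rpow (by norm_num), Real.sqrt_eq_rpow]
  norm_num; ring

lemma integrableOn_comp_sub {f : ℝ → ℝ} {c : ℝ} (s : ℝ) (hf : IntegrableOn f (Set.Ioi c)) :
    IntegrableOn (fun θ => f (θ - s)) (Set.Ioi (c + s)) := by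
  have h1 : Integrable ((Set.Ioi c).indicator f) := by
    rwa [integrable_indicator_iff measurableSet_Ioi]
  have h3 : Integrable ((Set.Ioi (c+s)).indicator (fun θ => f (θ - s))) := by
    convert h1.comp_sub_right s using 2 with θ
    by_cases h : c + s < θ <;>
      simp [Set.indicator, h, show (c < θ - s) ↔ (c + s < θ) by constructor <;> intro <;> linarith]
  rwa [integrable_indicator_iff measurableSet_Ioi] at h3

lemma setIntegral_comp_sub (f : ℝ → ℝ) (c s : ℝ) :
    ∫ θ in Set.Ioi (c + s), f (θ - s) = ∫ u in Set.Ioi c, f u := by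
  rw [← integral_indicator measurableSet_Ioi, ← integral_indicator measurableSet_Ioi]
  rw [← integral_sub_right_eq_self (fun θ : ℝ => (Set.Ioi c).indicator f θ) s]
  congr 1 with θ
  by_cases h : c + s < θ <;>
    simp [Set.indicator, h, show (c < θ - s) ↔ (c + s < θ) by constructor <;> intro <;> linarith]

lemma mono_helper {f g : ℝ → ℝ} {S : Set ℝ} (hS : MeasurableSet S) (hf : Measurable f)
    (hg : IntegrableOn g S) (h : ∀ θ ∈ S, ‖f θ‖ ≤ g θ) : IntegrableOn f S :=
  Integrable.mono' hg (hf.aestronglyMeasurable.restrict) (ae_restrict_of_forall_mem hS h)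

lemma integral_mono_helper {f g : ℝ → ℝ} {S : Set ℝ} (hS : MeasurableSet S)
    (hf : ∀ θ, 0 ≤ f θ) (hg : IntegrableOn g S) (h : ∀ θ ∈ S, f θ ≤ g θ) :
    ∫ θ in S, f θ ≤ ∫ θ in S, g θ :=
  integral_mono_of_nonneg (Filter.Eventually.of_forall hf) hg (ae_restrict_of_forall_mem hS h)

lemma sqrt_add_le (a b : ℝ) (ha : 0 ≤ a) (hb : 0 ≤ b) :
    Real.sqrt (a + b) ≤ Real.sqrt a + Real.sqrt b := by
  have h1 : a + b ≤ (Real.sqrt a + Real.sqrt b)^2 := by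
    nlinarith [Real.sq_sqrt ha, Real.sq_sqrt hb, Real.sqrt_nonneg a, Real.sqrt_nonneg b]
  calc Real.sqrt (a + b) ≤ Real.sqrt ((Real.sqrt a + Real.sqrt b)^2) := Real.sqrt_le_sqrt h1
    _ = Real.sqrt a + Real.sqrt b := Real.sqrt_sq (by positivity)

lemma measL (x : ℝ) : Measurable (fun θ : ℝ => (Real.sqrt θ)⁻¹ * (1 + (θ - x)^2)⁻¹) := by
  fun_prop

lemma L_int_piece1 (x c : ℝ) (hc : 0 ≤ c) :
    IntegrableOn (fun θ : ℝ => (Real.sqrt θ)⁻¹ * (1 + (θ - x)^2)⁻¹) (Set.Ioc 0 c) := by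
  refine mono_helper measurableSet_Ioc (measL x) (invsqrt_int c hc) (fun θ hθ => ?_)
  have h1 : (0:ℝ) ≤ (Real.sqrt θ)⁻¹ := by positivity
  rw [Real.norm_eq_abs, abs_of_nonneg (by positivity)]
  calc (Real.sqrt θ)⁻¹ * (1 + (θ - x)^2)⁻¹ ≤ (Real.sqrt θ)⁻¹ * 1 :=
        mul_le_mul_of_nonneg_left (A_le_one x θ) h1
    _ = (Real.sqrt θ)⁻¹ := mul_one _

lemma L_int_piece2 (x c : ℝ) (hc : 1 ≤ c) :
    IntegrableOn (fun θ : ℝ => (Real.sqrt θ)⁻¹ * (1 + (θ - x)^2)⁻¹) (Set.Ioi c) := by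
  refine mono_helper measurableSet_Ioi (measL x) ((intA x).integrableOn) (fun θ hθ => ?_)
  have hθ1 : (1:ℝ) ≤ θ := le_trans hc (le_of_lt hθ)
  have h2 : (Real.sqrt θ)⁻¹ ≤ 1 := by
    rw [inv_le_one_iff₀]; right
    rw [show (1:ℝ) = Real.sqrt 1 by simp]
    exact Real.sqrt_le_sqrt hθ1
  rw [Real.norm_eq_abs, abs_of_nonneg (by positivity)]
  calc (Real.sqrt θ)⁻¹ * (1 + (θ - x)^2)⁻¹ ≤ 1 * (1 + (θ - x)^2)⁻¹ :=
        mul_le_mul_of_nonneg_right h2 (A_pos x θ).le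
    _ = (1 + (θ - x)^2)⁻¹ := one_mul _

lemma L_int (x : ℝ) :
    IntegrableOn (fun θ : ℝ => (Real.sqrt θ)⁻¹ * (1 + (θ - x)^2)⁻¹) (Set.Ioi 0) := by
  rw [← Set.Ioc_union_Ioi_eq_Ioi (zero_le_one : (0:ℝ) ≤ 1)]
  exact (L_int_piece1 x 1 zero_le_one).union (L_int_piece2 x 1 le_rfl)

lemma L_le (x : ℝ) : ∫ θ in Set.Ioi (0:ℝ), (Real.sqrt θ)⁻¹ * (1 + (θ - x)^2)⁻¹ ≤ 2 + π := by
  rw [← Set.Ioc_union_Ioi_eq_Ioi (zero_le_one : (0:ℝ) ≤ 1),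
    setIntegral_union (Set.Ioc_disjoint_Ioi le_rfl) measurableSet_Ioi
      (L_int_piece1 x 1 zero_le_one) (L_int_piece2 x 1 le_rfl)]
  have h1 : ∫ θ in Set.Ioc (0:ℝ) 1, (Real.sqrt θ)⁻¹ * (1 + (θ - x)^2)⁻¹ ≤ 2 := by
    calc ∫ θ in Set.Ioc (0:ℝ) 1, (Real.sqrt θ)⁻¹ * (1 + (θ - x)^2)⁻¹
        ≤ ∫ θ in Set.Ioc (0:ℝ) 1, (Real.sqrt θ)⁻¹ := by
          refine integral_mono_helper measurableSet_Ioc (fun θ => by positivity)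
            (invsqrt_int 1 zero_le_one) (fun θ _ => ?_)
          calc (Real.sqrt θ)⁻¹ * (1 + (θ - x)^2)⁻¹ ≤ (Real.sqrt θ)⁻¹ * 1 :=
              mul_le_mul_of_nonneg_left (A_le_one x θ) (by positivity)
            _ = (Real.sqrt θ)⁻¹ := mul_one _
      _ = 2 * Real.sqrt 1 := invsqrt_val 1 zero_le_one
      _ = 2 := by simp
  have h2 : ∫ θ in Set.Ioi (1:ℝ), (Real.sqrt θ)⁻¹ * (1 + (θ - x)^2)⁻¹ ≤ π := by
    calc ∫ θ in Set.Ioi (1:ℝ), (Real.sqrt θ)⁻¹ * (1 + (θ - x)^2)⁻¹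
        ≤ ∫ θ in Set.Ioi (1:ℝ), (1 + (θ - x)^2)⁻¹ := by
          refine integral_mono_helper measurableSet_Ioi (fun θ => by positivity)
            ((intA x).integrableOn) (fun θ hθ => ?_)
          have h2 : (Real.sqrt θ)⁻¹ ≤ 1 := by
            rw [inv_le_one_iff₀]; right
            rw [show (1:ℝ) = Real.sqrt 1 by simp]
            exact Real.sqrt_le_sqrt (le_of_lt hθ)
          calc (Real.sqrt θ)⁻¹ * (1 + (θ - x)^2)⁻¹ ≤ 1 * (1 + (θ - x)^2)⁻¹ :=
              mul_le_mul_of_nonneg_right h2 (A_pos x θ).le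
            _ = (1 + (θ - x)^2)⁻¹ := one_mul _
      _ ≤ π := intA_set_le x _
  linarith

lemma L_int_piece2' (x c : ℝ) (hc : 0 < c) :
    IntegrableOn (fun θ : ℝ => (Real.sqrt θ)⁻¹ * (1 + (θ - x)^2)⁻¹) (Set.Ioi c) := by
  refine mono_helper measurableSet_Ioi (measL x)
    (((intA x).integrableOn).const_mul ((Real.sqrt c)⁻¹)) (fun θ hθ => ?_)
  have hθc : c ≤ θ := (le_of_lt hθ)
  have h2 : (Real.sqrt θ)⁻¹ ≤ (Real.sqrt c)⁻¹ := by
    apply inv_anti₀ (Real.sqrt_pos.mpr hc) (Real.sqrt_le_sqrt hθc)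
  rw [Real.norm_eq_abs, abs_of_nonneg (by positivity)]
  exact mul_le_mul_of_nonneg_right h2 (A_pos x θ).le

lemma L_decay (x : ℝ) (hx : 1 ≤ x) :
    ∫ θ in Set.Ioi (0:ℝ), (Real.sqrt θ)⁻¹ * (1 + (θ - x)^2)⁻¹ ≤ (8 + 2*π)/Real.sqrt x := by
  have hx0 : (0:ℝ) < x := by linarith
  have hx2 : (0:ℝ) ≤ x/2 := by linarith
  have hsx : 0 < Real.sqrt x := Real.sqrt_pos.mpr hx0
  have hsx1 : 1 ≤ Real.sqrt x := by
    rw [show (1:ℝ) = Real.sqrt 1 by simp]; exact Real.sqrt_le_sqrt hx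
  rw [← Set.Ioc_union_Ioi_eq_Ioi hx2,
    setIntegral_union (Set.Ioc_disjoint_Ioi le_rfl) measurableSet_Ioi
      (L_int_piece1 x _ hx2) (L_int_piece2' x _ (by linarith))]
  have h1 : ∫ θ in Set.Ioc (0:ℝ) (x/2), (Real.sqrt θ)⁻¹ * (1 + (θ - x)^2)⁻¹ ≤ 8/Real.sqrt x := by
    calc ∫ θ in Set.Ioc (0:ℝ) (x/2), (Real.sqrt θ)⁻¹ * (1 + (θ - x)^2)⁻¹
        ≤ ∫ θ in Set.Ioc (0:ℝ) (x/2), (4/x^2) * (Real.sqrt θ)⁻¹ := by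
          refine integral_mono_helper measurableSet_Ioc (fun θ => by positivity)
            ((invsqrt_int _ hx2).const_mul _) (fun θ hθ => ?_)
          have hA : (1 + (θ - x)^2)⁻¹ ≤ 4/x^2 := by
            rw [show (4:ℝ)/x^2 = ((x^2/4))⁻¹ by field_simp]
            apply inv_anti₀ (by positivity)
            nlinarith [hθ.2, hθ.1]
          calc (Real.sqrt θ)⁻¹ * (1 + (θ - x)^2)⁻¹ ≤ (Real.sqrt θ)⁻¹ * (4/x^2) :=
              mul_le_mul_of_nonneg_left hA (by positivity)
            _ = (4/x^2) * (Real.sqrt θ)⁻¹ := by ring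
      _ = (4/x^2) * (2 * Real.sqrt (x/2)) := by
          rw [integral_const_mul, invsqrt_val _ hx2]
      _ ≤ (4/x^2) * (2 * Real.sqrt x) := by
          apply mul_le_mul_of_nonneg_left (by
            apply mul_le_mul_of_nonneg_left (Real.sqrt_le_sqrt (by linarith)) (by norm_num))
            (by positivity)
      _ = 8 * Real.sqrt x / x^2 := by ring
      _ ≤ 8/Real.sqrt x := by
          rw [div_le_div_iff₀ (by positivity) hsx]
          nlinarith [Real.mul_self_sqrt hx0.le, hsx1, hx]
  have h2 : ∫ θ in Set.Ioi (x/2), (Real.sqrt θ)⁻¹ * (1 + (θ - x)^2)⁻¹ ≤ 2*π/Real.sqrt x := by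
    calc ∫ θ in Set.Ioi (x/2), (Real.sqrt θ)⁻¹ * (1 + (θ - x)^2)⁻¹
        ≤ ∫ θ in Set.Ioi (x/2), (2/Real.sqrt x) * (1 + (θ - x)^2)⁻¹ := by
          refine integral_mono_helper measurableSet_Ioi (fun θ => by positivity)
            (((intA x).integrableOn).const_mul _) (fun θ hθ => ?_)
          have hs2 : Real.sqrt x / 2 ≤ Real.sqrt θ := by
            rw [show Real.sqrt x / 2 = Real.sqrt ((Real.sqrt x / 2)^2) from
              (Real.sqrt_sq (by positivity)).symm]
            apply Real.sqrt_le_sqrt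
            have := Real.sq_sqrt hx0.le
            have hθ' := hθ.out
            nlinarith
          have h3 : (Real.sqrt θ)⁻¹ ≤ 2/Real.sqrt x := by
            rw [show (2:ℝ)/Real.sqrt x = ((Real.sqrt x)/2)⁻¹ by field_simp]
            exact inv_anti₀ (by positivity) hs2
          exact mul_le_mul_of_nonneg_right h3 (A_pos x θ).le
      _ = (2/Real.sqrt x) * ∫ θ in Set.Ioi (x/2), (1 + (θ - x)^2)⁻¹ := integral_const_mul ..
      _ ≤ (2/Real.sqrt x) * π := by
          apply mul_le_mul_of_nonneg_left (intA_set_le x _) (by positivity)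
      _ = 2*π/Real.sqrt x := by ring
  calc _ ≤ 8/Real.sqrt x + 2*π/Real.sqrt x := add_le_add h1 h2
    _ = (8 + 2*π)/Real.sqrt x := by ring

lemma L_uniform (x : ℝ) (hx : 0 ≤ x) :
    ∫ θ in Set.Ioi (0:ℝ), (Real.sqrt θ)⁻¹ * (1 + (θ - x)^2)⁻¹
      ≤ (16 + 4*π)/(1 + Real.sqrt x) := by
  have hs0 : 0 ≤ Real.sqrt x := Real.sqrt_nonneg x
  have hpi := Real.pi_pos
  rcases le_or_gt x 1 with h | h
  · have hsl : Real.sqrt x ≤ 1 := by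
      rw [show (1:ℝ) = Real.sqrt 1 by simp]; exact Real.sqrt_le_sqrt h
    calc _ ≤ 2 + π := L_le x
      _ ≤ (16 + 4*π)/(1 + Real.sqrt x) := by
          rw [le_div_iff₀ (by linarith)]
          nlinarith
  · have hsx1 : 1 ≤ Real.sqrt x := by
      rw [show (1:ℝ) = Real.sqrt 1 by simp]; exact Real.sqrt_le_sqrt h.le
    calc _ ≤ (8 + 2*π)/Real.sqrt x := L_decay x h.le
      _ ≤ (16 + 4*π)/(1 + Real.sqrt x) := by
          rw [div_le_div_iff₀ (by linarith) (by linarith)]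
          nlinarith

lemma rpow_neg_two (u : ℝ) (hu : 0 < u) : u ^ (-2 : ℝ) = (u^2)⁻¹ := by
  rw [show (-2:ℝ) = ((-2 : ℤ):ℝ) by norm_num, Real.rpow_intCast]
  simp [zpow_neg]

lemma rpow_neg_threehalf (u : ℝ) (hu : 0 < u) :
    u ^ (-(3/2) : ℝ) = Real.sqrt u * (u^2)⁻¹ := by
  rw [show (-(3/2) : ℝ) = 1/2 + (-2:ℝ) by norm_num, Real.rpow_add hu, rpow_neg_two u hu,
    ← Real.sqrt_eq_rpow]

lemma measM (x : ℝ) : Measurable (fun θ : ℝ => Real.sqrt θ * (1 + (θ - x)^2)⁻¹) := by fun_prop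

lemma M_int_piece1 (s : ℝ) (hs : 0 ≤ s) :
    IntegrableOn (fun θ : ℝ => Real.sqrt θ * (1 + (θ - s)^2)⁻¹) (Set.Ioc 0 (s+1)) := by
  refine mono_helper measurableSet_Ioc (measM s)
    (((intA s).integrableOn).const_mul (Real.sqrt (s+1))) (fun θ hθ => ?_)
  rw [Real.norm_eq_abs, abs_of_nonneg (by positivity)]
  exact mul_le_mul_of_nonneg_right (Real.sqrt_le_sqrt hθ.2) (A_pos s θ).le

lemma M_tail_int (s : ℝ) :
    IntegrableOn (fun θ : ℝ => (θ - s) ^ (-(3/2) : ℝ) + Real.sqrt s * (θ - s) ^ (-2 : ℝ))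
      (Set.Ioi (1 + s)) := by
  have h2 : IntegrableOn (fun u : ℝ => u ^ (-(3/2) : ℝ)) (Set.Ioi (1:ℝ)) :=
    integrableOn_Ioi_rpow_of_lt (by norm_num) one_pos
  have h3 : IntegrableOn (fun u : ℝ => u ^ (-2 : ℝ)) (Set.Ioi (1:ℝ)) :=
    integrableOn_Ioi_rpow_of_lt (by norm_num) one_pos
  have h1 : IntegrableOn (fun u : ℝ => u ^ (-(3/2) : ℝ) + Real.sqrt s * u ^ (-2 : ℝ))
      (Set.Ioi (1:ℝ)) := h2.add (h3.const_mul _)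
  exact integrableOn_comp_sub (f := fun u : ℝ => u ^ (-(3/2) : ℝ) + Real.sqrt s * u ^ (-2 : ℝ)) s h1

lemma M_tail_val (s : ℝ) (hs : 0 ≤ s) :
    ∫ θ in Set.Ioi (1 + s), ((θ - s) ^ (-(3/2) : ℝ) + Real.sqrt s * (θ - s) ^ (-2 : ℝ))
      = 2 + Real.sqrt s := by
  rw [setIntegral_comp_sub (fun u : ℝ => u ^ (-(3/2) : ℝ) + Real.sqrt s * u ^ (-2 : ℝ)) 1 s]
  have h2 : IntegrableOn (fun u : ℝ => u ^ (-(3/2) : ℝ)) (Set.Ioi (1:ℝ)) :=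
    integrableOn_Ioi_rpow_of_lt (by norm_num) one_pos
  have h3 : IntegrableOn (fun u : ℝ => u ^ (-2 : ℝ)) (Set.Ioi (1:ℝ)) :=
    integrableOn_Ioi_rpow_of_lt (by norm_num) one_pos
  rw [integral_add h2 (h3.const_mul _)]
  rw [integral_const_mul, integral_Ioi_rpow_of_lt (by norm_num) one_pos,
    integral_Ioi_rpow_of_lt (by norm_num) one_pos]
  norm_num

lemma M_int_piece2 (s : ℝ) (hs : 0 ≤ s) :
    IntegrableOn (fun θ : ℝ => Real.sqrt θ * (1 + (θ - s)^2)⁻¹) (Set.Ioi (s+1)) := by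
  rw [add_comm]
  refine mono_helper measurableSet_Ioi (measM s) (M_tail_int s) (fun θ hθ => ?_)
  have hu : (1:ℝ) < θ - s := by have := hθ.out; linarith
  have hu0 : (0:ℝ) < θ - s := by linarith
  rw [Real.norm_eq_abs, abs_of_nonneg (by positivity)]
  have hsq : Real.sqrt θ ≤ Real.sqrt (θ - s) + Real.sqrt s := by
    have h := sqrt_add_le (θ - s) s hu0.le hs
    rwa [sub_add_cancel] at h
  have hA : (1 + (θ - s)^2)⁻¹ ≤ ((θ - s)^2)⁻¹ :=
    inv_anti₀ (by positivity) (by nlinarith)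
  calc Real.sqrt θ * (1 + (θ - s)^2)⁻¹
      ≤ (Real.sqrt (θ - s) + Real.sqrt s) * ((θ - s)^2)⁻¹ :=
        mul_le_mul hsq hA (by positivity) (by positivity)
    _ = (θ - s) ^ (-(3/2) : ℝ) + Real.sqrt s * (θ - s) ^ (-2 : ℝ) := by
        rw [rpow_neg_threehalf _ hu0, rpow_neg_two _ hu0]; ring

lemma M_int (s : ℝ) (hs : 0 ≤ s) :
    IntegrableOn (fun θ : ℝ => Real.sqrt θ * (1 + (θ - s)^2)⁻¹) (Set.Ioi 0) := by
  rw [← Set.Ioc_union_Ioi_eq_Ioi (by linarith : (0:ℝ) ≤ s+1)]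
  exact (M_int_piece1 s hs).union (M_int_piece2 s hs)

lemma M_le (s : ℝ) (hs : 0 ≤ s) :
    ∫ θ in Set.Ioi (0:ℝ), Real.sqrt θ * (1 + (θ - s)^2)⁻¹
      ≤ (π+1) * Real.sqrt s + (π+2) := by
  have hpi := Real.pi_pos
  have hss : 0 ≤ Real.sqrt s := Real.sqrt_nonneg s
  rw [← Set.Ioc_union_Ioi_eq_Ioi (by linarith : (0:ℝ) ≤ s+1),
    setIntegral_union (Set.Ioc_disjoint_Ioi le_rfl) measurableSet_Ioi
      (M_int_piece1 s hs) (M_int_piece2 s hs)]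
  have h1 : ∫ θ in Set.Ioc (0:ℝ) (s+1), Real.sqrt θ * (1 + (θ - s)^2)⁻¹
      ≤ (Real.sqrt s + 1) * π := by
    calc ∫ θ in Set.Ioc (0:ℝ) (s+1), Real.sqrt θ * (1 + (θ - s)^2)⁻¹
        ≤ ∫ θ in Set.Ioc (0:ℝ) (s+1), (Real.sqrt s + 1) * (1 + (θ - s)^2)⁻¹ := by
          refine integral_mono_helper measurableSet_Ioc (fun θ => by positivity)
            (((intA s).integrableOn).const_mul _) (fun θ hθ => ?_)
          have : Real.sqrt θ ≤ Real.sqrt s + 1 := by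
            calc Real.sqrt θ ≤ Real.sqrt (s+1) := Real.sqrt_le_sqrt hθ.2
              _ ≤ Real.sqrt s + Real.sqrt 1 := sqrt_add_le s 1 hs zero_le_one
              _ = Real.sqrt s + 1 := by simp
          exact mul_le_mul_of_nonneg_right this (A_pos s θ).le
      _ = (Real.sqrt s + 1) * ∫ θ in Set.Ioc (0:ℝ) (s+1), (1 + (θ - s)^2)⁻¹ :=
          integral_const_mul ..
      _ ≤ (Real.sqrt s + 1) * π := by
          apply mul_le_mul_of_nonneg_left (intA_set_le s _) (by positivity)
  have h2 : ∫ θ in Set.Ioi (s+1), Real.sqrt θ * (1 + (θ - s)^2)⁻¹ ≤ 2 + Real.sqrt s := by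
    calc ∫ θ in Set.Ioi (s+1), Real.sqrt θ * (1 + (θ - s)^2)⁻¹
        ≤ ∫ θ in Set.Ioi (s+1), ((θ - s) ^ (-(3/2) : ℝ) + Real.sqrt s * (θ - s) ^ (-2 : ℝ)) := by
          rw [show s + 1 = 1 + s by ring]
          refine integral_mono_helper measurableSet_Ioi (fun θ => by positivity)
            (M_tail_int s) (fun θ hθ => ?_)
          have hu : (1:ℝ) < θ - s := by have := hθ.out; linarith
          have hu0 : (0:ℝ) < θ - s := by linarith
          have hsq : Real.sqrt θ ≤ Real.sqrt (θ - s) + Real.sqrt s := by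
            have h := sqrt_add_le (θ - s) s hu0.le hs
            rwa [sub_add_cancel] at h
          have hA : (1 + (θ - s)^2)⁻¹ ≤ ((θ - s)^2)⁻¹ :=
            inv_anti₀ (by positivity) (by nlinarith)
          calc Real.sqrt θ * (1 + (θ - s)^2)⁻¹
              ≤ (Real.sqrt (θ - s) + Real.sqrt s) * ((θ - s)^2)⁻¹ :=
                mul_le_mul hsq hA (by positivity) (by positivity)
            _ = (θ - s) ^ (-(3/2) : ℝ) + Real.sqrt s * (θ - s) ^ (-2 : ℝ) := by
                rw [rpow_neg_threehalf _ hu0, rpow_neg_two _ hu0]; ring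
      _ = 2 + Real.sqrt s := by rw [show s + 1 = 1 + s by ring]; exact M_tail_val s hs
  linarith

lemma prod_inv_bound (u v : ℝ) :
    (1+u^2)⁻¹ * (1+v^2)⁻¹ ≤ 2 * ((1+(u+v)^2)⁻¹ * ((1+u^2)⁻¹ + (1+v^2)⁻¹)) := by
  have ha : (0:ℝ) < 1+u^2 := by positivity
  have hb : (0:ℝ) < 1+v^2 := by positivity
  have hc : (0:ℝ) < 1+(u+v)^2 := by positivity
  have key : (1+(u+v)^2) ≤ 2*((1+v^2)+(1+u^2)) := by nlinarith [sq_nonneg (u-v)]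
  calc (1+u^2)⁻¹ * (1+v^2)⁻¹
      = ((1+(u+v)^2)⁻¹*((1+u^2)⁻¹*(1+v^2)⁻¹)) * (1+(u+v)^2) := by field_simp
    _ ≤ ((1+(u+v)^2)⁻¹*((1+u^2)⁻¹*(1+v^2)⁻¹)) * (2*((1+v^2)+(1+u^2))) :=
        mul_le_mul_of_nonneg_left key (by positivity)
    _ = 2 * ((1+(u+v)^2)⁻¹ * ((1+u^2)⁻¹ + (1+v^2)⁻¹)) := by field_simp

lemma pointwise (θ₁ θ₂ s N ϵ : ℝ) (h1 : 0 < θ₁) (h2 : 0 < θ₂) (hN : 2 ≤ N) (hϵ : 0 < ϵ) :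
    (1 / (Real.sqrt (θ₁ * θ₂) * (1 + (θ₁ - θ₂) ^ 2))
        + 1 / (Real.sqrt (1 + θ₁ ^ 2) * (1 + (θ₁ + θ₂) ^ 2) ^ ((2 + ϵ) / 2)))
      * Real.sqrt (1 + θ₁ ^ 2) * (1 + (θ₂ - s) ^ 2) ^ (-N / 2)
    ≤ 2 * ((Real.sqrt θ₁)⁻¹ + Real.sqrt θ₁) * (1 + (θ₁ - s)^2)⁻¹ *
        ((Real.sqrt θ₂)⁻¹ * (1 + (θ₂ - θ₁)^2)⁻¹)
      + 2 * ((Real.sqrt θ₁)⁻¹ + Real.sqrt θ₁) * (1 + (θ₁ - s)^2)⁻¹ *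
        ((Real.sqrt θ₂)⁻¹ * (1 + (θ₂ - s)^2)⁻¹)
      + (1 + θ₁^2)⁻¹ * (1 + (θ₂ - s)^2)⁻¹ := by
  have hW : (0:ℝ) < Real.sqrt (1 + θ₁^2) := Real.sqrt_pos.mpr (by positivity)
  have hs1 : (0:ℝ) < Real.sqrt θ₁ := Real.sqrt_pos.mpr h1
  have hs2 : (0:ℝ) < Real.sqrt θ₂ := Real.sqrt_pos.mpr h2
  have hsq1 : Real.sqrt θ₁ * Real.sqrt θ₁ = θ₁ := Real.mul_self_sqrt h1.le
  have ha : (0:ℝ) < 1 + (θ₁ - θ₂)^2 := by positivity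
  have hb : (0:ℝ) < 1 + (θ₂ - s)^2 := by positivity
  have hb1 : (1:ℝ) ≤ 1 + (θ₂ - s)^2 := by nlinarith [sq_nonneg (θ₂ - s)]
  have hP_le : (1 + (θ₂ - s)^2) ^ (-N/2) ≤ (1 + (θ₂ - s)^2)⁻¹ := by
    calc (1 + (θ₂ - s)^2) ^ (-N/2) ≤ (1 + (θ₂ - s)^2) ^ (-1:ℝ) :=
          Real.rpow_le_rpow_of_exponent_le hb1 (by linarith)
      _ = (1 + (θ₂ - s)^2)⁻¹ := Real.rpow_neg_one _
  have hP0 : 0 ≤ (1 + (θ₂ - s)^2) ^ (-N/2) := Real.rpow_nonneg (by positivity) _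
  -- term 2 work
  have hRpos : (0:ℝ) < (1 + (θ₁ + θ₂)^2) ^ ((2 + ϵ)/2) :=
    Real.rpow_pos_of_pos (by positivity) _
  have hT2W : 1 / (Real.sqrt (1 + θ₁^2) * (1 + (θ₁ + θ₂)^2) ^ ((2 + ϵ)/2))
      * Real.sqrt (1 + θ₁^2) = ((1 + (θ₁ + θ₂)^2) ^ ((2 + ϵ)/2))⁻¹ := by
    field_simp
  have hRge : 1 + θ₁^2 ≤ (1 + (θ₁ + θ₂)^2) ^ ((2 + ϵ)/2) := by
    calc 1 + θ₁^2 ≤ 1 + (θ₁ + θ₂)^2 := by nlinarith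
      _ = (1 + (θ₁ + θ₂)^2) ^ (1:ℝ) := (Real.rpow_one _).symm
      _ ≤ (1 + (θ₁ + θ₂)^2) ^ ((2 + ϵ)/2) :=
          Real.rpow_le_rpow_of_exponent_le (by nlinarith) (by linarith)
  have hT2inv : ((1 + (θ₁ + θ₂)^2) ^ ((2 + ϵ)/2))⁻¹ ≤ (1 + θ₁^2)⁻¹ :=
    inv_anti₀ (by positivity) hRge
  -- term 1 work
  have hWle : Real.sqrt (1 + θ₁^2) ≤ 1 + θ₁ := by
    rw [show (1:ℝ) + θ₁ = Real.sqrt ((1+θ₁)^2) from (Real.sqrt_sq (by positivity)).symm]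
    exact Real.sqrt_le_sqrt (by nlinarith)
  have hand : ((Real.sqrt θ₁)⁻¹ + Real.sqrt θ₁) * Real.sqrt θ₁ = 1 + θ₁ := by
    rw [add_mul, inv_mul_cancel₀ hs1.ne', hsq1]
  have hbb : (Real.sqrt θ₂)⁻¹ * Real.sqrt θ₂ = 1 := inv_mul_cancel₀ hs2.ne'
  have haa : (1 + (θ₁ - θ₂)^2)⁻¹ * (1 + (θ₁ - θ₂)^2) = 1 := inv_mul_cancel₀ ha.ne'
  have hT1W : 1 / (Real.sqrt (θ₁ * θ₂) * (1 + (θ₁ - θ₂)^2)) * Real.sqrt (1 + θ₁^2)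
      ≤ ((Real.sqrt θ₁)⁻¹ + Real.sqrt θ₁) * ((Real.sqrt θ₂)⁻¹ * (1 + (θ₁ - θ₂)^2)⁻¹) := by
    rw [Real.sqrt_mul h1.le]
    rw [div_mul_eq_mul_div, one_mul, div_le_iff₀ (by positivity)]
    calc Real.sqrt (1 + θ₁^2) ≤ 1 + θ₁ := hWle
      _ = (((Real.sqrt θ₁)⁻¹ + Real.sqrt θ₁) * Real.sqrt θ₁)
          * (((Real.sqrt θ₂)⁻¹ * Real.sqrt θ₂) * ((1 + (θ₁ - θ₂)^2)⁻¹ * (1 + (θ₁ - θ₂)^2))) := by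
        rw [hand, hbb, haa]; ring
      _ = ((Real.sqrt θ₁)⁻¹ + Real.sqrt θ₁) * ((Real.sqrt θ₂)⁻¹ * (1 + (θ₁ - θ₂)^2)⁻¹)
          * (Real.sqrt θ₁ * Real.sqrt θ₂ * (1 + (θ₁ - θ₂)^2)) := by ring
  -- combine
  have key : (1 + (θ₁ - θ₂)^2)⁻¹ * (1 + (θ₂ - s)^2)⁻¹
      ≤ 2 * ((1 + (θ₁ - s)^2)⁻¹ * ((1 + (θ₁ - θ₂)^2)⁻¹ + (1 + (θ₂ - s)^2)⁻¹)) := by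
    have h := prod_inv_bound (θ₁ - θ₂) (θ₂ - s)
    rw [show θ₁ - θ₂ + (θ₂ - s) = θ₁ - s by ring] at h
    exact h
  have e1 : (1 / (Real.sqrt (θ₁ * θ₂) * (1 + (θ₁ - θ₂) ^ 2))
        + 1 / (Real.sqrt (1 + θ₁ ^ 2) * (1 + (θ₁ + θ₂) ^ 2) ^ ((2 + ϵ) / 2)))
      * Real.sqrt (1 + θ₁ ^ 2) * (1 + (θ₂ - s) ^ 2) ^ (-N / 2)
      = (1 / (Real.sqrt (θ₁ * θ₂) * (1 + (θ₁ - θ₂) ^ 2)) * Real.sqrt (1 + θ₁^2))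
          * (1 + (θ₂ - s) ^ 2) ^ (-N / 2)
        + (1 / (Real.sqrt (1 + θ₁ ^ 2) * (1 + (θ₁ + θ₂) ^ 2) ^ ((2 + ϵ) / 2))
          * Real.sqrt (1 + θ₁^2)) * (1 + (θ₂ - s) ^ 2) ^ (-N / 2) := by ring
  rw [e1]
  have hterm2 : (1 / (Real.sqrt (1 + θ₁ ^ 2) * (1 + (θ₁ + θ₂) ^ 2) ^ ((2 + ϵ) / 2))
      * Real.sqrt (1 + θ₁^2)) * (1 + (θ₂ - s) ^ 2) ^ (-N / 2)
      ≤ (1 + θ₁^2)⁻¹ * (1 + (θ₂ - s)^2)⁻¹ := by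
    rw [hT2W]
    exact mul_le_mul hT2inv hP_le hP0 (by positivity)
  have hterm1 : (1 / (Real.sqrt (θ₁ * θ₂) * (1 + (θ₁ - θ₂) ^ 2)) * Real.sqrt (1 + θ₁^2))
      * (1 + (θ₂ - s) ^ 2) ^ (-N / 2)
      ≤ 2 * ((Real.sqrt θ₁)⁻¹ + Real.sqrt θ₁) * (1 + (θ₁ - s)^2)⁻¹ *
          ((Real.sqrt θ₂)⁻¹ * (1 + (θ₂ - θ₁)^2)⁻¹)
        + 2 * ((Real.sqrt θ₁)⁻¹ + Real.sqrt θ₁) * (1 + (θ₁ - s)^2)⁻¹ *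
          ((Real.sqrt θ₂)⁻¹ * (1 + (θ₂ - s)^2)⁻¹) := by
    have step1 : (1 / (Real.sqrt (θ₁ * θ₂) * (1 + (θ₁ - θ₂) ^ 2)) * Real.sqrt (1 + θ₁^2))
        * (1 + (θ₂ - s) ^ 2) ^ (-N / 2)
        ≤ (((Real.sqrt θ₁)⁻¹ + Real.sqrt θ₁) * ((Real.sqrt θ₂)⁻¹ * (1 + (θ₁ - θ₂)^2)⁻¹))
          * (1 + (θ₂ - s)^2)⁻¹ := by
      apply mul_le_mul hT1W hP_le hP0 (by positivity)
    refine step1.trans ?_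
    have step2 : (((Real.sqrt θ₁)⁻¹ + Real.sqrt θ₁) * ((Real.sqrt θ₂)⁻¹ * (1 + (θ₁ - θ₂)^2)⁻¹))
          * (1 + (θ₂ - s)^2)⁻¹
        = (((Real.sqrt θ₁)⁻¹ + Real.sqrt θ₁) * (Real.sqrt θ₂)⁻¹)
          * ((1 + (θ₁ - θ₂)^2)⁻¹ * (1 + (θ₂ - s)^2)⁻¹) := by ring
    rw [step2]
    have step3 := mul_le_mul_of_nonneg_left key
      (by positivity : (0:ℝ) ≤ ((Real.sqrt θ₁)⁻¹ + Real.sqrt θ₁) * (Real.sqrt θ₂)⁻¹)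
    refine step3.trans ?_
    rw [show (θ₂ - θ₁)^2 = (θ₁ - θ₂)^2 by ring]
    ring_nf
    exact le_refl _
  linarith

end Stmt14

open Stmt14

/-- the kernel
`k̃(θ₁,θ₂) = (√(θ₁θ₂) ⟨θ₁-θ₂⟩²)⁻¹ + (⟨θ₁⟩ ⟨θ₁+θ₂⟩^{2+ϵ})⁻¹` satisfies
`sup_{s ≥ 0} ∫∫ k̃(θ₁,θ₂) ⟨θ₁⟩ ⟨θ₂ - s⟩^{-N} dθ₁ dθ₂ < ∞` for `N ≥ 2`. -/
theorem stmt_14 (d : ℕ) (hd : 1 ≤ d) (N : ℝ) (hN : 2 ≤ N) (ϵ : ℝ) (hϵ : 0 < ϵ) :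
    ∃ B : ℝ, ∀ s : ℝ, 0 ≤ s →
      (∫ θ₁ in Set.Ioi (0 : ℝ), ∫ θ₂ in Set.Ioi (0 : ℝ),
          (1 / (Real.sqrt (θ₁ * θ₂) * (1 + (θ₁ - θ₂) ^ 2))
              + 1 / (Real.sqrt (1 + θ₁ ^ 2) * (1 + (θ₁ + θ₂) ^ 2) ^ ((2 + ϵ) / 2)))
            * Real.sqrt (1 + θ₁ ^ 2) * (1 + (θ₂ - s) ^ 2) ^ (-N / 2))
        ≤ B := by
  have hpi := Real.pi_pos
  refine ⟨2*(16+4*π)*(2+π) + 2*(16+4*π)*π + 2*(16+4*π)*(3*π+5) + π*π, fun s hs => ?_⟩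
  have hss : 0 ≤ Real.sqrt s := Real.sqrt_nonneg s
  have hsden : (0:ℝ) < 1 + Real.sqrt s := by linarith
  -- the majorant of the inner integral
  set G : ℝ → ℝ := fun θ =>
      2*(16+4*π) * ((Real.sqrt θ)⁻¹ * (1+(θ-s)^2)⁻¹)
      + 2*(16+4*π) * (1+(θ-s)^2)⁻¹
      + (2*(16+4*π)/(1+Real.sqrt s)) * ((Real.sqrt θ)⁻¹ * (1+(θ-s)^2)⁻¹)
      + (2*(16+4*π)/(1+Real.sqrt s)) * (Real.sqrt θ * (1+(θ-s)^2)⁻¹)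
      + π * (1+θ^2)⁻¹ with hG
  have hi1 : IntegrableOn
      (fun θ : ℝ => 2*(16+4*π) * ((Real.sqrt θ)⁻¹ * (1+(θ-s)^2)⁻¹)) (Set.Ioi 0) :=
    (L_int s).const_mul _
  have hi2 : IntegrableOn (fun θ : ℝ => 2*(16+4*π) * (1+(θ-s)^2)⁻¹) (Set.Ioi 0) :=
    ((intA s).integrableOn).const_mul _
  have hi3 : IntegrableOn (fun θ : ℝ =>
      (2*(16+4*π)/(1+Real.sqrt s)) * ((Real.sqrt θ)⁻¹ * (1+(θ-s)^2)⁻¹)) (Set.Ioi 0) :=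
    (L_int s).const_mul _
  have hi4 : IntegrableOn (fun θ : ℝ =>
      (2*(16+4*π)/(1+Real.sqrt s)) * (Real.sqrt θ * (1+(θ-s)^2)⁻¹)) (Set.Ioi 0) :=
    (M_int s hs).const_mul _
  have hi5 : IntegrableOn (fun θ : ℝ => π * (1+θ^2)⁻¹) (Set.Ioi 0) :=
    (integrable_inv_one_add_sq.integrableOn).const_mul _
  have hi12 : IntegrableOn (fun θ : ℝ =>
      2*(16+4*π) * ((Real.sqrt θ)⁻¹ * (1+(θ-s)^2)⁻¹)
      + 2*(16+4*π) * (1+(θ-s)^2)⁻¹) (Set.Ioi 0) := hi1.add hi2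
  have hi123 : IntegrableOn (fun θ : ℝ =>
      2*(16+4*π) * ((Real.sqrt θ)⁻¹ * (1+(θ-s)^2)⁻¹)
      + 2*(16+4*π) * (1+(θ-s)^2)⁻¹
      + (2*(16+4*π)/(1+Real.sqrt s)) * ((Real.sqrt θ)⁻¹ * (1+(θ-s)^2)⁻¹)) (Set.Ioi 0) :=
    hi12.add hi3
  have hi1234 : IntegrableOn (fun θ : ℝ =>
      2*(16+4*π) * ((Real.sqrt θ)⁻¹ * (1+(θ-s)^2)⁻¹)
      + 2*(16+4*π) * (1+(θ-s)^2)⁻¹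
      + (2*(16+4*π)/(1+Real.sqrt s)) * ((Real.sqrt θ)⁻¹ * (1+(θ-s)^2)⁻¹)
      + (2*(16+4*π)/(1+Real.sqrt s)) * (Real.sqrt θ * (1+(θ-s)^2)⁻¹)) (Set.Ioi 0) :=
    hi123.add hi4
  have hGint : IntegrableOn G (Set.Ioi 0) := hi1234.add hi5
  -- value bound for ∫ G
  have hGval : ∫ θ in Set.Ioi (0:ℝ), G θ
      ≤ 2*(16+4*π)*(2+π) + 2*(16+4*π)*π + 2*(16+4*π)*(3*π+5) + π*π := by
    have e : ∫ θ in Set.Ioi (0:ℝ), G θ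
        = 2*(16+4*π) * (∫ θ in Set.Ioi (0:ℝ), (Real.sqrt θ)⁻¹ * (1+(θ-s)^2)⁻¹)
        + 2*(16+4*π) * (∫ θ in Set.Ioi (0:ℝ), (1+(θ-s)^2)⁻¹)
        + (2*(16+4*π)/(1+Real.sqrt s)) *
            (∫ θ in Set.Ioi (0:ℝ), (Real.sqrt θ)⁻¹ * (1+(θ-s)^2)⁻¹)
        + (2*(16+4*π)/(1+Real.sqrt s)) *
            (∫ θ in Set.Ioi (0:ℝ), Real.sqrt θ * (1+(θ-s)^2)⁻¹)
        + π * (∫ θ in Set.Ioi (0:ℝ), (1+θ^2)⁻¹) := by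
      rw [hG]
      rw [integral_add hi1234 hi5, integral_add hi123 hi4,
        integral_add hi12 hi3, integral_add hi1 hi2,
        integral_const_mul, integral_const_mul, integral_const_mul, integral_const_mul,
        integral_const_mul]
    rw [e]
    have b1 := L_le s
    have b2 := intA_set_le s (Set.Ioi 0)
    have b4 := M_le s hs
    have b5 : ∫ θ in Set.Ioi (0:ℝ), (1+θ^2)⁻¹ ≤ π := by
      have := intA_set_le 0 (Set.Ioi 0)
      simpa using this
    have n1 : 0 ≤ ∫ θ in Set.Ioi (0:ℝ), (Real.sqrt θ)⁻¹ * (1+(θ-s)^2)⁻¹ :=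
      integral_nonneg (fun θ => by positivity)
    have n4 : 0 ≤ ∫ θ in Set.Ioi (0:ℝ), Real.sqrt θ * (1+(θ-s)^2)⁻¹ :=
      integral_nonneg (fun θ => by positivity)
    have hc1 : (0:ℝ) ≤ 2*(16+4*π) := by linarith
    have hc3 : (0:ℝ) ≤ 2*(16+4*π)/(1+Real.sqrt s) := by positivity
    have mid : (2*(16+4*π)/(1+Real.sqrt s)) *
            (∫ θ in Set.Ioi (0:ℝ), (Real.sqrt θ)⁻¹ * (1+(θ-s)^2)⁻¹)
        + (2*(16+4*π)/(1+Real.sqrt s)) *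
            (∫ θ in Set.Ioi (0:ℝ), Real.sqrt θ * (1+(θ-s)^2)⁻¹)
        ≤ 2*(16+4*π)*(3*π+5) := by
      have hsum : (∫ θ in Set.Ioi (0:ℝ), (Real.sqrt θ)⁻¹ * (1+(θ-s)^2)⁻¹)
          + (∫ θ in Set.Ioi (0:ℝ), Real.sqrt θ * (1+(θ-s)^2)⁻¹)
          ≤ (3*π+5)*(1+Real.sqrt s) := by nlinarith
      calc (2*(16+4*π)/(1+Real.sqrt s)) *
            (∫ θ in Set.Ioi (0:ℝ), (Real.sqrt θ)⁻¹ * (1+(θ-s)^2)⁻¹)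
          + (2*(16+4*π)/(1+Real.sqrt s)) *
            (∫ θ in Set.Ioi (0:ℝ), Real.sqrt θ * (1+(θ-s)^2)⁻¹)
          = (2*(16+4*π)/(1+Real.sqrt s)) *
            ((∫ θ in Set.Ioi (0:ℝ), (Real.sqrt θ)⁻¹ * (1+(θ-s)^2)⁻¹)
              + (∫ θ in Set.Ioi (0:ℝ), Real.sqrt θ * (1+(θ-s)^2)⁻¹)) := by ring
        _ ≤ (2*(16+4*π)/(1+Real.sqrt s)) * ((3*π+5)*(1+Real.sqrt s)) :=
            mul_le_mul_of_nonneg_left hsum hc3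
        _ = 2*(16+4*π)*(3*π+5) := by field_simp
    have t1 : 2*(16+4*π) * (∫ θ in Set.Ioi (0:ℝ), (Real.sqrt θ)⁻¹ * (1+(θ-s)^2)⁻¹)
        ≤ 2*(16+4*π)*(2+π) := mul_le_mul_of_nonneg_left b1 hc1
    have t2 : 2*(16+4*π) * (∫ θ in Set.Ioi (0:ℝ), (1+(θ-s)^2)⁻¹)
        ≤ 2*(16+4*π)*π := mul_le_mul_of_nonneg_left b2 hc1
    have t5 : π * (∫ θ in Set.Ioi (0:ℝ), (1+θ^2)⁻¹) ≤ π*π :=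
      mul_le_mul_of_nonneg_left b5 (by linarith)
    linarith
  -- now the outer comparison
  refine le_trans ?_ hGval
  refine integral_mono_helper measurableSet_Ioi
    (fun θ₁ => integral_nonneg (fun θ₂ => by positivity)) hGint (fun θ₁ hθ₁ => ?_)
  have h1 : (0:ℝ) < θ₁ := hθ₁
  have hs1 : (0:ℝ) < Real.sqrt θ₁ := Real.sqrt_pos.mpr h1
  -- inner majorant
  set C1 : ℝ := 2 * ((Real.sqrt θ₁)⁻¹ + Real.sqrt θ₁) * (1 + (θ₁ - s)^2)⁻¹ with hC1
  have hC1pos : 0 < C1 := by rw [hC1]; positivity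
  have hg1 : IntegrableOn
      (fun θ₂ : ℝ => C1 * ((Real.sqrt θ₂)⁻¹ * (1+(θ₂-θ₁)^2)⁻¹)) (Set.Ioi 0) :=
    (L_int θ₁).const_mul _
  have hg2 : IntegrableOn
      (fun θ₂ : ℝ => C1 * ((Real.sqrt θ₂)⁻¹ * (1+(θ₂-s)^2)⁻¹)) (Set.Ioi 0) :=
    (L_int s).const_mul _
  have hg3 : IntegrableOn
      (fun θ₂ : ℝ => (1+θ₁^2)⁻¹ * (1+(θ₂-s)^2)⁻¹) (Set.Ioi 0) :=
    ((intA s).integrableOn).const_mul _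
  have hg12 : IntegrableOn
      (fun θ₂ : ℝ => C1 * ((Real.sqrt θ₂)⁻¹ * (1+(θ₂-θ₁)^2)⁻¹)
        + C1 * ((Real.sqrt θ₂)⁻¹ * (1+(θ₂-s)^2)⁻¹)) (Set.Ioi 0) := hg1.add hg2
  have step1 : (∫ θ₂ in Set.Ioi (0 : ℝ),
          (1 / (Real.sqrt (θ₁ * θ₂) * (1 + (θ₁ - θ₂) ^ 2))
              + 1 / (Real.sqrt (1 + θ₁ ^ 2) * (1 + (θ₁ + θ₂) ^ 2) ^ ((2 + ϵ) / 2)))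
            * Real.sqrt (1 + θ₁ ^ 2) * (1 + (θ₂ - s) ^ 2) ^ (-N / 2))
      ≤ ∫ θ₂ in Set.Ioi (0:ℝ),
          (C1 * ((Real.sqrt θ₂)⁻¹ * (1+(θ₂-θ₁)^2)⁻¹)
          + C1 * ((Real.sqrt θ₂)⁻¹ * (1+(θ₂-s)^2)⁻¹)
          + (1+θ₁^2)⁻¹ * (1+(θ₂-s)^2)⁻¹) := by
    refine integral_mono_helper measurableSet_Ioi (fun θ₂ => by positivity)
      (hg12.add hg3) (fun θ₂ hθ₂ => ?_)
    have h2 : (0:ℝ) < θ₂ := hθ₂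
    have := pointwise θ₁ θ₂ s N ϵ h1 h2 hN hϵ
    rw [hC1]
    linarith
  refine step1.trans ?_
  have e2 : ∫ θ₂ in Set.Ioi (0:ℝ),
          (C1 * ((Real.sqrt θ₂)⁻¹ * (1+(θ₂-θ₁)^2)⁻¹)
          + C1 * ((Real.sqrt θ₂)⁻¹ * (1+(θ₂-s)^2)⁻¹)
          + (1+θ₁^2)⁻¹ * (1+(θ₂-s)^2)⁻¹)
      = C1 * (∫ θ₂ in Set.Ioi (0:ℝ), (Real.sqrt θ₂)⁻¹ * (1+(θ₂-θ₁)^2)⁻¹)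
      + C1 * (∫ θ₂ in Set.Ioi (0:ℝ), (Real.sqrt θ₂)⁻¹ * (1+(θ₂-s)^2)⁻¹)
      + (1+θ₁^2)⁻¹ * (∫ θ₂ in Set.Ioi (0:ℝ), (1+(θ₂-s)^2)⁻¹) := by
    rw [integral_add hg12 hg3, integral_add hg1 hg2,
      integral_const_mul, integral_const_mul, integral_const_mul]
  rw [e2]
  -- bound the three pieces pointwise in θ₁
  have hL1 := L_uniform θ₁ h1.le
  have hL2 := L_uniform s hs
  have hP2 := intA_set_le s (Set.Ioi 0)
  have hden1 : (0:ℝ) < 1 + Real.sqrt θ₁ := by linarith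
  have hA1 : (0:ℝ) < (1 + (θ₁ - s)^2)⁻¹ := by positivity
  have piece1 : C1 * (∫ θ₂ in Set.Ioi (0:ℝ), (Real.sqrt θ₂)⁻¹ * (1+(θ₂-θ₁)^2)⁻¹)
      ≤ 2*(16+4*π) * ((Real.sqrt θ₁)⁻¹ * (1+(θ₁-s)^2)⁻¹)
        + 2*(16+4*π) * (1+(θ₁-s)^2)⁻¹ := by
    calc C1 * (∫ θ₂ in Set.Ioi (0:ℝ), (Real.sqrt θ₂)⁻¹ * (1+(θ₂-θ₁)^2)⁻¹)
        ≤ C1 * ((16+4*π)/(1+Real.sqrt θ₁)) := mul_le_mul_of_nonneg_left hL1 hC1pos.le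
      _ ≤ 2*(16+4*π) * ((Real.sqrt θ₁)⁻¹ * (1+(θ₁-s)^2)⁻¹)
          + 2*(16+4*π) * (1+(θ₁-s)^2)⁻¹ := by
        rw [hC1]
        rw [show 2 * ((Real.sqrt θ₁)⁻¹ + Real.sqrt θ₁) * (1 + (θ₁ - s)^2)⁻¹ *
              ((16+4*π)/(1+Real.sqrt θ₁))
            = (2*(16+4*π) * (1 + (θ₁ - s)^2)⁻¹) *
              (((Real.sqrt θ₁)⁻¹ + Real.sqrt θ₁)/(1+Real.sqrt θ₁)) by ring]
        rw [show 2*(16+4*π) * ((Real.sqrt θ₁)⁻¹ * (1+(θ₁-s)^2)⁻¹)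
              + 2*(16+4*π) * (1+(θ₁-s)^2)⁻¹
            = (2*(16+4*π) * (1 + (θ₁ - s)^2)⁻¹) * ((Real.sqrt θ₁)⁻¹ + 1) by ring]
        apply mul_le_mul_of_nonneg_left _ (by positivity)
        rw [div_le_iff₀ hden1]
        have : (Real.sqrt θ₁)⁻¹ * Real.sqrt θ₁ = 1 := inv_mul_cancel₀ hs1.ne'
        nlinarith [inv_pos.mpr hs1]
  have piece2 : C1 * (∫ θ₂ in Set.Ioi (0:ℝ), (Real.sqrt θ₂)⁻¹ * (1+(θ₂-s)^2)⁻¹)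
      ≤ (2*(16+4*π)/(1+Real.sqrt s)) * ((Real.sqrt θ₁)⁻¹ * (1+(θ₁-s)^2)⁻¹)
        + (2*(16+4*π)/(1+Real.sqrt s)) * (Real.sqrt θ₁ * (1+(θ₁-s)^2)⁻¹) := by
    calc C1 * (∫ θ₂ in Set.Ioi (0:ℝ), (Real.sqrt θ₂)⁻¹ * (1+(θ₂-s)^2)⁻¹)
        ≤ C1 * ((16+4*π)/(1+Real.sqrt s)) := mul_le_mul_of_nonneg_left hL2 hC1pos.le
      _ = (2*(16+4*π)/(1+Real.sqrt s)) * ((Real.sqrt θ₁)⁻¹ * (1+(θ₁-s)^2)⁻¹)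
          + (2*(16+4*π)/(1+Real.sqrt s)) * (Real.sqrt θ₁ * (1+(θ₁-s)^2)⁻¹) := by
        rw [hC1]; ring
  have piece3 : (1+θ₁^2)⁻¹ * (∫ θ₂ in Set.Ioi (0:ℝ), (1+(θ₂-s)^2)⁻¹)
      ≤ π * (1+θ₁^2)⁻¹ := by
    calc (1+θ₁^2)⁻¹ * (∫ θ₂ in Set.Ioi (0:ℝ), (1+(θ₂-s)^2)⁻¹)
        ≤ (1+θ₁^2)⁻¹ * π := mul_le_mul_of_nonneg_left hP2 (by positivity)
      _ = π * (1+θ₁^2)⁻¹ := by ring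
  rw [hG]
  dsimp only
  linarith
end
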